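/- arXiv:1706.02420 — 6 statements merged into one kernel-verified Lean document; each statement's English description precedes it below -/
import Mathlib

section
/- Let ρ: ℤ → [0,∞) be symmetric. Then for every n ≥ 1, ∑_{i,j,k=1}^{n} ρ(i−k)ρ(i−j)ρ(j−k) ≤ n·(∑_{|k|<n} ρ(k)^{3/2})^2. -/
open Finset

private lemma amgm3 {a b c : ℝ} (ha : 0 ≤ a) (hb : 0 ≤ b) (hc : 0 ≤ c) :
    a * b * c ≤ (a ^ ((3:ℝ)/2) * b ^ ((3:ℝ)/2) + a ^ ((3:ℝ)/2) * c ^ ((3:ℝ)/2)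
      + b ^ ((3:ℝ)/2) * c ^ ((3:ℝ)/2)) / 3 := by
  have hx : (0:ℝ) ≤ a ^ ((1:ℝ)/2) := Real.rpow_nonneg ha _
  have hy : (0:ℝ) ≤ b ^ ((1:ℝ)/2) := Real.rpow_nonneg hb _
  have hz : (0:ℝ) ≤ c ^ ((1:ℝ)/2) := Real.rpow_nonneg hc _
  have hx2 : (a ^ ((1:ℝ)/2)) ^ 2 = a := by
    rw [← Real.rpow_natCast (a ^ ((1:ℝ)/2)) 2, ← Real.rpow_mul ha]; norm_num
  have hy2 : (b ^ ((1:ℝ)/2)) ^ 2 = b := by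
    rw [← Real.rpow_natCast (b ^ ((1:ℝ)/2)) 2, ← Real.rpow_mul hb]; norm_num
  have hz2 : (c ^ ((1:ℝ)/2)) ^ 2 = c := by
    rw [← Real.rpow_natCast (c ^ ((1:ℝ)/2)) 2, ← Real.rpow_mul hc]; norm_num
  have hx3 : (a ^ ((1:ℝ)/2)) ^ 3 = a ^ ((3:ℝ)/2) := by
    rw [← Real.rpow_natCast (a ^ ((1:ℝ)/2)) 3, ← Real.rpow_mul ha]; norm_num
  have hy3 : (b ^ ((1:ℝ)/2)) ^ 3 = b ^ ((3:ℝ)/2) := by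
    rw [← Real.rpow_natCast (b ^ ((1:ℝ)/2)) 3, ← Real.rpow_mul hb]; norm_num
  have hz3 : (c ^ ((1:ℝ)/2)) ^ 3 = c ^ ((3:ℝ)/2) := by
    rw [← Real.rpow_natCast (c ^ ((1:ℝ)/2)) 3, ← Real.rpow_mul hc]; norm_num
  set x := a ^ ((1:ℝ)/2)
  set y := b ^ ((1:ℝ)/2)
  set z := c ^ ((1:ℝ)/2)
  rw [← hx3, ← hy3, ← hz3, ← hx2, ← hy2, ← hz2]
  nlinarith [sq_nonneg (x*y - y*z), sq_nonneg (x*y - x*z), sq_nonneg (x*z - y*z),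
    mul_nonneg hx hy, mul_nonneg hy hz, mul_nonneg hx hz,
    mul_nonneg (mul_nonneg hx hy) hz,
    mul_nonneg (mul_nonneg (mul_nonneg hx hy) hz) (mul_nonneg hx hy),
    mul_nonneg (mul_nonneg (mul_nonneg hx hy) hz) (mul_nonneg hy hz),
    mul_nonneg (mul_nonneg (mul_nonneg hx hy) hz) (mul_nonneg hx hz)]

private lemma row_le (ρ : ℤ → ℝ) (hnonneg : ∀ k, 0 ≤ ρ k) (n : ℕ) {t : ℤ}
    (ht : t ∈ Finset.Icc (1:ℤ) n) :
    ∑ s ∈ Finset.Icc (1:ℤ) n, ρ (s - t) ^ ((3:ℝ)/2)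
      ≤ ∑ k ∈ Finset.Icc (-(n:ℤ) + 1) ((n:ℤ) - 1), ρ k ^ ((3:ℝ)/2) := by
  have hinj : Set.InjOn (fun s : ℤ => s - t) (Finset.Icc (1:ℤ) n) := fun a _ b _ h => by
    simpa using h
  rw [← Finset.sum_image (f := fun m => ρ m ^ ((3:ℝ)/2)) hinj]
  refine Finset.sum_le_sum_of_subset_of_nonneg ?_ (fun k _ _ => Real.rpow_nonneg (hnonneg k) _)
  intro m hm
  simp only [Finset.mem_image, Finset.mem_Icc] at hm ⊢
  simp only [Finset.mem_Icc] at ht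
  obtain ⟨s, hs, rfl⟩ := hm
  omega

/-- Third-cumulant combinatorial inequality (cf. BBNP Prop. 6.3):
`∑_{i,j,k=1}^n ρ(i−k)ρ(i−j)ρ(j−k) ≤ n (∑_{|k|<n} ρ(k)^{3/2})²` for nonnegative symmetric `ρ`. -/
theorem triple_sum_le (ρ : ℤ → ℝ) (hnonneg : ∀ k, 0 ≤ ρ k) (hsymm : ∀ k, ρ (-k) = ρ k) :
    ∀ n : ℕ, 1 ≤ n →
      ∑ i ∈ Finset.Icc (1 : ℤ) n, ∑ j ∈ Finset.Icc (1 : ℤ) n, ∑ k ∈ Finset.Icc (1 : ℤ) n,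
          ρ (i - k) * ρ (i - j) * ρ (j - k)
        ≤ n * (∑ k ∈ Finset.Icc (-(n : ℤ) + 1) ((n : ℤ) - 1), ρ k ^ ((3 : ℝ)/2)) ^ 2 := by
  intro n hn
  set f : ℤ → ℝ := fun m => ρ m ^ ((3:ℝ)/2) with hf
  set S := ∑ k ∈ Finset.Icc (-(n:ℤ) + 1) ((n:ℤ) - 1), f k with hS
  have hfnn : ∀ m, 0 ≤ f m := fun m => Real.rpow_nonneg (hnonneg m) _
  have hSnn : 0 ≤ S := Finset.sum_nonneg fun k _ => hfnn k
  have hrow : ∀ t ∈ Finset.Icc (1:ℤ) n, ∑ s ∈ Finset.Icc (1:ℤ) n, f (s - t) ≤ S :=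
    fun t ht => row_le ρ hnonneg n ht
  have hrow' : ∀ t ∈ Finset.Icc (1:ℤ) n, ∑ s ∈ Finset.Icc (1:ℤ) n, f (t - s) ≤ S := by
    intro t ht
    have : ∀ s : ℤ, f (t - s) = f (s - t) := by
      intro s
      simp only [hf]
      rw [show t - s = -(s - t) by ring, hsymm]
    simp_rw [this]
    exact hrow t ht
  have hrownn : ∀ t : ℤ, 0 ≤ ∑ s ∈ Finset.Icc (1:ℤ) n, f (s - t) :=
    fun t => Finset.sum_nonneg fun s _ => hfnn _
  have hrownn' : ∀ t : ℤ, 0 ≤ ∑ s ∈ Finset.Icc (1:ℤ) n, f (t - s) :=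
    fun t => Finset.sum_nonneg fun s _ => hfnn _
  have hcard : ((Finset.Icc (1:ℤ) n).card : ℝ) = n := by
    rw [Int.card_Icc]
    simp
  -- Step 1: pointwise AM-GM bound
  have step1 : ∑ i ∈ Finset.Icc (1 : ℤ) n, ∑ j ∈ Finset.Icc (1 : ℤ) n, ∑ k ∈ Finset.Icc (1 : ℤ) n,
        ρ (i - k) * ρ (i - j) * ρ (j - k)
      ≤ ∑ i ∈ Finset.Icc (1 : ℤ) n, ∑ j ∈ Finset.Icc (1 : ℤ) n, ∑ k ∈ Finset.Icc (1 : ℤ) n,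
        (f (i - k) * f (i - j) + f (i - k) * f (j - k) + f (i - j) * f (j - k)) / 3 := by
    refine Finset.sum_le_sum fun i _ => Finset.sum_le_sum fun j _ => Finset.sum_le_sum fun k _ => ?_
    exact amgm3 (hnonneg _) (hnonneg _) (hnonneg _)
  -- Three triple sums
  have hT1 : ∑ i ∈ Finset.Icc (1 : ℤ) n, ∑ j ∈ Finset.Icc (1 : ℤ) n, ∑ k ∈ Finset.Icc (1 : ℤ) n,
        f (i - k) * f (i - j) ≤ n * S ^ 2 := by
    calc ∑ i ∈ Finset.Icc (1 : ℤ) n, ∑ j ∈ Finset.Icc (1 : ℤ) n, ∑ k ∈ Finset.Icc (1 : ℤ) n,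
          f (i - k) * f (i - j)
        = ∑ i ∈ Finset.Icc (1 : ℤ) n,
            (∑ k ∈ Finset.Icc (1 : ℤ) n, f (i - k)) * (∑ j ∈ Finset.Icc (1 : ℤ) n, f (i - j)) := by
          refine Finset.sum_congr rfl fun i _ => ?_
          rw [Finset.mul_sum]
          exact Finset.sum_congr rfl fun j _ => (Finset.sum_mul _ _ _).symm
      _ ≤ ∑ _i ∈ Finset.Icc (1 : ℤ) n, S * S :=
          Finset.sum_le_sum fun i hi =>
            mul_le_mul (hrow' i hi) (hrow' i hi) (hrownn' i) hSnn
      _ = n * S ^ 2 := by rw [Finset.sum_const, nsmul_eq_mul]; rw [show ((Finset.Icc (1:ℤ) n).card : ℝ) = n from hcard]; ring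
  have hT2 : ∑ i ∈ Finset.Icc (1 : ℤ) n, ∑ j ∈ Finset.Icc (1 : ℤ) n, ∑ k ∈ Finset.Icc (1 : ℤ) n,
        f (i - k) * f (j - k) ≤ n * S ^ 2 := by
    have h1 : ∀ i : ℤ, (∑ j ∈ Finset.Icc (1 : ℤ) n, ∑ k ∈ Finset.Icc (1 : ℤ) n,
        f (i - k) * f (j - k))
        = ∑ k ∈ Finset.Icc (1 : ℤ) n, ∑ j ∈ Finset.Icc (1 : ℤ) n, f (i - k) * f (j - k) :=
      fun i => Finset.sum_comm
    simp_rw [h1]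
    rw [Finset.sum_comm]
    calc ∑ k ∈ Finset.Icc (1 : ℤ) n, ∑ i ∈ Finset.Icc (1 : ℤ) n, ∑ j ∈ Finset.Icc (1 : ℤ) n,
          f (i - k) * f (j - k)
        = ∑ k ∈ Finset.Icc (1 : ℤ) n,
            (∑ i ∈ Finset.Icc (1 : ℤ) n, f (i - k)) * (∑ j ∈ Finset.Icc (1 : ℤ) n, f (j - k)) := by
          refine Finset.sum_congr rfl fun k _ => ?_
          rw [Finset.sum_mul]
          exact Finset.sum_congr rfl fun i _ => (Finset.mul_sum _ _ _).symm
      _ ≤ ∑ _k ∈ Finset.Icc (1 : ℤ) n, S * S :=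
          Finset.sum_le_sum fun k hk =>
            mul_le_mul (hrow k hk) (hrow k hk) (hrownn k) hSnn
      _ = n * S ^ 2 := by rw [Finset.sum_const, nsmul_eq_mul]; rw [show ((Finset.Icc (1:ℤ) n).card : ℝ) = n from hcard]; ring
  have hT3 : ∑ i ∈ Finset.Icc (1 : ℤ) n, ∑ j ∈ Finset.Icc (1 : ℤ) n, ∑ k ∈ Finset.Icc (1 : ℤ) n,
        f (i - j) * f (j - k) ≤ n * S ^ 2 := by
    rw [Finset.sum_comm]
    calc ∑ j ∈ Finset.Icc (1 : ℤ) n, ∑ i ∈ Finset.Icc (1 : ℤ) n, ∑ k ∈ Finset.Icc (1 : ℤ) n,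
          f (i - j) * f (j - k)
        = ∑ j ∈ Finset.Icc (1 : ℤ) n,
            (∑ i ∈ Finset.Icc (1 : ℤ) n, f (i - j)) * (∑ k ∈ Finset.Icc (1 : ℤ) n, f (j - k)) := by
          refine Finset.sum_congr rfl fun j _ => ?_
          rw [Finset.sum_mul]
          exact Finset.sum_congr rfl fun i _ => (Finset.mul_sum _ _ _).symm
      _ ≤ ∑ _j ∈ Finset.Icc (1 : ℤ) n, S * S :=
          Finset.sum_le_sum fun j hj =>
            mul_le_mul (hrow j hj) (hrow' j hj) (hrownn' j) hSnn
      _ = n * S ^ 2 := by rw [Finset.sum_const, nsmul_eq_mul]; rw [show ((Finset.Icc (1:ℤ) n).card : ℝ) = n from hcard]; ring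
  have hsplit : ∑ i ∈ Finset.Icc (1 : ℤ) n, ∑ j ∈ Finset.Icc (1 : ℤ) n, ∑ k ∈ Finset.Icc (1 : ℤ) n,
        (f (i - k) * f (i - j) + f (i - k) * f (j - k) + f (i - j) * f (j - k)) / 3
      = ((∑ i ∈ Finset.Icc (1 : ℤ) n, ∑ j ∈ Finset.Icc (1 : ℤ) n, ∑ k ∈ Finset.Icc (1 : ℤ) n,
            f (i - k) * f (i - j))
        + (∑ i ∈ Finset.Icc (1 : ℤ) n, ∑ j ∈ Finset.Icc (1 : ℤ) n, ∑ k ∈ Finset.Icc (1 : ℤ) n,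
            f (i - k) * f (j - k))
        + (∑ i ∈ Finset.Icc (1 : ℤ) n, ∑ j ∈ Finset.Icc (1 : ℤ) n, ∑ k ∈ Finset.Icc (1 : ℤ) n,
            f (i - j) * f (j - k))) / 3 := by
    simp only [← Finset.sum_div, ← Finset.sum_add_distrib]
  calc ∑ i ∈ Finset.Icc (1 : ℤ) n, ∑ j ∈ Finset.Icc (1 : ℤ) n, ∑ k ∈ Finset.Icc (1 : ℤ) n,
        ρ (i - k) * ρ (i - j) * ρ (j - k)
      ≤ ∑ i ∈ Finset.Icc (1 : ℤ) n, ∑ j ∈ Finset.Icc (1 : ℤ) n, ∑ k ∈ Finset.Icc (1 : ℤ) n,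
        (f (i - k) * f (i - j) + f (i - k) * f (j - k) + f (i - j) * f (j - k)) / 3 := step1
    _ ≤ n * S ^ 2 := by rw [hsplit]; linarith
end

section
/- Let ρ: ℤ → [0,∞) be symmetric. Then for every n ≥ 1, ∑_{k_1,k_2,k_3,k_4=1}^{n} ρ(k_1−k_2)ρ(k_2−k_3)ρ(k_3−k_4)ρ(k_4−k_1) ≤ n·(∑_{|k|<n} ρ(k)^{4/3})^3. -/
open Finset

private lemma amgm_pow4 (P Q R S : ℝ) (hP : 0 ≤ P) (hQ : 0 ≤ Q) (hR : 0 ≤ R) (hS : 0 ≤ S) :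
    P * Q * R * S ≤ (P ^ 4 + Q ^ 4 + R ^ 4 + S ^ 4) / 4 := by
  nlinarith [sq_nonneg (P ^ 2 - Q ^ 2), sq_nonneg (R ^ 2 - S ^ 2), sq_nonneg (P * Q - R * S),
    mul_nonneg (mul_nonneg hP hQ) (mul_nonneg hR hS), sq_nonneg (P * Q + R * S)]

private lemma amgm4 (a b c d : ℝ) (ha : 0 ≤ a) (hb : 0 ≤ b) (hc : 0 ≤ c) (hd : 0 ≤ d) :
    a * b * c * d ≤ (a ^ ((4:ℝ)/3) * b ^ ((4:ℝ)/3) * c ^ ((4:ℝ)/3)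
      + b ^ ((4:ℝ)/3) * c ^ ((4:ℝ)/3) * d ^ ((4:ℝ)/3)
      + c ^ ((4:ℝ)/3) * d ^ ((4:ℝ)/3) * a ^ ((4:ℝ)/3)
      + d ^ ((4:ℝ)/3) * a ^ ((4:ℝ)/3) * b ^ ((4:ℝ)/3)) / 4 := by
  have key : ∀ x : ℝ, 0 ≤ x →
      x = (x ^ ((1:ℝ)/3)) ^ (3:ℕ) ∧ x ^ ((4:ℝ)/3) = (x ^ ((1:ℝ)/3)) ^ (4:ℕ) := by
    intro x hx
    constructor
    · rw [← Real.rpow_natCast (x ^ ((1:ℝ)/3)) 3, ← Real.rpow_mul hx]; norm_num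
    · rw [← Real.rpow_natCast (x ^ ((1:ℝ)/3)) 4, ← Real.rpow_mul hx]; norm_num
  obtain ⟨ha1, ha2⟩ := key a ha
  obtain ⟨hb1, hb2⟩ := key b hb
  obtain ⟨hc1, hc2⟩ := key c hc
  obtain ⟨hd1, hd2⟩ := key d hd
  have hu : 0 ≤ a ^ ((1:ℝ)/3) := Real.rpow_nonneg ha _
  have hv : 0 ≤ b ^ ((1:ℝ)/3) := Real.rpow_nonneg hb _
  have hw : 0 ≤ c ^ ((1:ℝ)/3) := Real.rpow_nonneg hc _
  have hz : 0 ≤ d ^ ((1:ℝ)/3) := Real.rpow_nonneg hd _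
  set u := a ^ ((1:ℝ)/3)
  set v := b ^ ((1:ℝ)/3)
  set w := c ^ ((1:ℝ)/3)
  set z := d ^ ((1:ℝ)/3)
  calc a * b * c * d = (u*v*w) * (v*w*z) * (w*z*u) * (z*u*v) := by
        rw [ha1, hb1, hc1, hd1]; ring
    _ ≤ ((u*v*w)^4 + (v*w*z)^4 + (w*z*u)^4 + (z*u*v)^4) / 4 :=
        amgm_pow4 _ _ _ _ (by positivity) (by positivity) (by positivity) (by positivity)
    _ = (a ^ ((4:ℝ)/3) * b ^ ((4:ℝ)/3) * c ^ ((4:ℝ)/3)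
      + b ^ ((4:ℝ)/3) * c ^ ((4:ℝ)/3) * d ^ ((4:ℝ)/3)
      + c ^ ((4:ℝ)/3) * d ^ ((4:ℝ)/3) * a ^ ((4:ℝ)/3)
      + d ^ ((4:ℝ)/3) * a ^ ((4:ℝ)/3) * b ^ ((4:ℝ)/3)) / 4 := by
        rw [ha2, hb2, hc2, hd2]; ring

private lemma window_le (g : ℤ → ℝ) (hg : ∀ k, 0 ≤ g k) (n : ℕ) {a : ℤ}
    (ha : a ∈ Finset.Icc (1:ℤ) n) :
    ∑ b ∈ Finset.Icc (1:ℤ) n, g (a - b)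
      ≤ ∑ k ∈ Finset.Icc (-(n : ℤ) + 1) ((n : ℤ) - 1), g k := by
  have himg : ∑ k ∈ (Finset.Icc (1:ℤ) n).image (fun b => a - b), g k
      = ∑ b ∈ Finset.Icc (1:ℤ) n, g (a - b) :=
    Finset.sum_image (by intro x _ y _ h; simp only at h; omega)
  rw [← himg]
  apply Finset.sum_le_sum_of_subset_of_nonneg
  · intro k hk
    simp only [Finset.mem_image, Finset.mem_Icc] at *
    obtain ⟨b, hb, rfl⟩ := hk
    omega
  · intro k _ _
    exact hg k

private lemma chain_le (g : ℤ → ℝ) (hg : ∀ k, 0 ≤ g k) (n : ℕ) :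
    ∑ a ∈ Finset.Icc (1:ℤ) n, ∑ b ∈ Finset.Icc (1:ℤ) n, ∑ c ∈ Finset.Icc (1:ℤ) n,
      ∑ d ∈ Finset.Icc (1:ℤ) n, g (a-b) * g (b-c) * g (c-d)
      ≤ (n : ℝ) * (∑ k ∈ Finset.Icc (-(n : ℤ) + 1) ((n : ℤ) - 1), g k) ^ 3 := by
  set S : ℝ := ∑ k ∈ Finset.Icc (-(n : ℤ) + 1) ((n : ℤ) - 1), g k with hS
  have hS0 : 0 ≤ S := Finset.sum_nonneg fun k _ => hg k
  calc ∑ a ∈ Finset.Icc (1:ℤ) n, ∑ b ∈ Finset.Icc (1:ℤ) n, ∑ c ∈ Finset.Icc (1:ℤ) n,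
        ∑ d ∈ Finset.Icc (1:ℤ) n, g (a-b) * g (b-c) * g (c-d)
      ≤ ∑ a ∈ Finset.Icc (1:ℤ) n, ∑ b ∈ Finset.Icc (1:ℤ) n, ∑ c ∈ Finset.Icc (1:ℤ) n,
        g (a-b) * g (b-c) * S := by
        refine Finset.sum_le_sum fun a _ => Finset.sum_le_sum fun b _ =>
          Finset.sum_le_sum fun c hc => ?_
        rw [← Finset.mul_sum]
        exact mul_le_mul_of_nonneg_left (window_le g hg n hc)
          (mul_nonneg (hg _) (hg _))
    _ ≤ ∑ a ∈ Finset.Icc (1:ℤ) n, ∑ b ∈ Finset.Icc (1:ℤ) n, g (a-b) * S * S := by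
        refine Finset.sum_le_sum fun a _ => Finset.sum_le_sum fun b hb => ?_
        have : ∑ c ∈ Finset.Icc (1:ℤ) n, g (a-b) * g (b-c) * S
            = (g (a-b) * S) * ∑ c ∈ Finset.Icc (1:ℤ) n, g (b-c) := by
          rw [Finset.mul_sum]; exact Finset.sum_congr rfl fun c _ => by ring
        rw [this]
        calc (g (a-b) * S) * ∑ c ∈ Finset.Icc (1:ℤ) n, g (b-c)
            ≤ (g (a-b) * S) * S :=
              mul_le_mul_of_nonneg_left (window_le g hg n hb) (mul_nonneg (hg _) hS0)
          _ = g (a-b) * S * S := rfl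
    _ ≤ ∑ a ∈ Finset.Icc (1:ℤ) n, S * S * S := by
        refine Finset.sum_le_sum fun a ha => ?_
        rw [← Finset.sum_mul, ← Finset.sum_mul]
        have h := window_le g hg n ha
        gcongr
    _ = (n : ℝ) * S ^ 3 := by
        rw [Finset.sum_const, nsmul_eq_mul]
        have : (Finset.Icc (1:ℤ) n).card = n := by
          rw [Int.card_Icc]; omega
        rw [this]; ring

private lemma cyc4 (s : Finset ℤ) (F : ℤ → ℤ → ℤ → ℤ → ℝ) :
    (∑ a ∈ s, ∑ b ∈ s, ∑ c ∈ s, ∑ d ∈ s, F a b c d)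
      = ∑ a ∈ s, ∑ b ∈ s, ∑ c ∈ s, ∑ d ∈ s, F d a b c := by
  calc (∑ a ∈ s, ∑ b ∈ s, ∑ c ∈ s, ∑ d ∈ s, F a b c d)
      = ∑ b ∈ s, ∑ a ∈ s, ∑ c ∈ s, ∑ d ∈ s, F a b c d := Finset.sum_comm
    _ = ∑ b ∈ s, ∑ c ∈ s, ∑ a ∈ s, ∑ d ∈ s, F a b c d :=
        Finset.sum_congr rfl fun b _ => Finset.sum_comm
    _ = ∑ b ∈ s, ∑ c ∈ s, ∑ d ∈ s, ∑ a ∈ s, F a b c d :=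
        Finset.sum_congr rfl fun b _ => Finset.sum_congr rfl fun c _ => Finset.sum_comm

/-- Fourth-cumulant combinatorial inequality (cf. BBNP Prop. 6.4):
`∑_{k₁,k₂,k₃,k₄=1}^n ρ(k₁−k₂)ρ(k₂−k₃)ρ(k₃−k₄)ρ(k₄−k₁) ≤ n (∑_{|k|<n} ρ(k)^{4/3})³`. -/
theorem quadruple_sum_le (ρ : ℤ → ℝ) (hnonneg : ∀ k, 0 ≤ ρ k) (hsymm : ∀ k, ρ (-k) = ρ k) :
    ∀ n : ℕ, 1 ≤ n →
      ∑ k₁ ∈ Finset.Icc (1 : ℤ) n, ∑ k₂ ∈ Finset.Icc (1 : ℤ) n,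
        ∑ k₃ ∈ Finset.Icc (1 : ℤ) n, ∑ k₄ ∈ Finset.Icc (1 : ℤ) n,
          ρ (k₁ - k₂) * ρ (k₂ - k₃) * ρ (k₃ - k₄) * ρ (k₄ - k₁)
        ≤ n * (∑ k ∈ Finset.Icc (-(n : ℤ) + 1) ((n : ℤ) - 1), ρ k ^ ((4 : ℝ)/3)) ^ 3 := by
  intro n hn
  set g : ℤ → ℝ := fun k => ρ k ^ ((4:ℝ)/3) with hgdef
  have hg : ∀ k, 0 ≤ g k := fun k => Real.rpow_nonneg (hnonneg k) _
  set I := Finset.Icc (1:ℤ) n with hI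
  set S : ℝ := ∑ k ∈ Finset.Icc (-(n : ℤ) + 1) ((n : ℤ) - 1), g k with hS
  have hmain : ∑ k₁ ∈ I, ∑ k₂ ∈ I, ∑ k₃ ∈ I, ∑ k₄ ∈ I, g (k₁-k₂) * g (k₂-k₃) * g (k₃-k₄)
      ≤ (n : ℝ) * S ^ 3 := chain_le g hg n
  have e2 : (∑ k₁ ∈ I, ∑ k₂ ∈ I, ∑ k₃ ∈ I, ∑ k₄ ∈ I, g (k₂-k₃) * g (k₃-k₄) * g (k₄-k₁))
      = ∑ k₁ ∈ I, ∑ k₂ ∈ I, ∑ k₃ ∈ I, ∑ k₄ ∈ I, g (k₁-k₂) * g (k₂-k₃) * g (k₃-k₄) :=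
    cyc4 I (fun a b c d => g (b-c) * g (c-d) * g (d-a))
  have e3 : (∑ k₁ ∈ I, ∑ k₂ ∈ I, ∑ k₃ ∈ I, ∑ k₄ ∈ I, g (k₃-k₄) * g (k₄-k₁) * g (k₁-k₂))
      = ∑ k₁ ∈ I, ∑ k₂ ∈ I, ∑ k₃ ∈ I, ∑ k₄ ∈ I, g (k₁-k₂) * g (k₂-k₃) * g (k₃-k₄) :=
    (cyc4 I (fun a b c d => g (c-d) * g (d-a) * g (a-b))).trans e2
  have e4 : (∑ k₁ ∈ I, ∑ k₂ ∈ I, ∑ k₃ ∈ I, ∑ k₄ ∈ I, g (k₄-k₁) * g (k₁-k₂) * g (k₂-k₃))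
      = ∑ k₁ ∈ I, ∑ k₂ ∈ I, ∑ k₃ ∈ I, ∑ k₄ ∈ I, g (k₁-k₂) * g (k₂-k₃) * g (k₃-k₄) :=
    (cyc4 I (fun a b c d => g (d-a) * g (a-b) * g (b-c))).trans e3
  calc ∑ k₁ ∈ I, ∑ k₂ ∈ I, ∑ k₃ ∈ I, ∑ k₄ ∈ I,
        ρ (k₁ - k₂) * ρ (k₂ - k₃) * ρ (k₃ - k₄) * ρ (k₄ - k₁)
      ≤ ∑ k₁ ∈ I, ∑ k₂ ∈ I, ∑ k₃ ∈ I, ∑ k₄ ∈ I,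
        (g (k₁-k₂) * g (k₂-k₃) * g (k₃-k₄) + g (k₂-k₃) * g (k₃-k₄) * g (k₄-k₁)
          + g (k₃-k₄) * g (k₄-k₁) * g (k₁-k₂) + g (k₄-k₁) * g (k₁-k₂) * g (k₂-k₃)) / 4 := by
        refine Finset.sum_le_sum fun k₁ _ => Finset.sum_le_sum fun k₂ _ =>
          Finset.sum_le_sum fun k₃ _ => Finset.sum_le_sum fun k₄ _ => ?_
        exact amgm4 _ _ _ _ (hnonneg _) (hnonneg _) (hnonneg _) (hnonneg _)
    _ = ((∑ k₁ ∈ I, ∑ k₂ ∈ I, ∑ k₃ ∈ I, ∑ k₄ ∈ I, g (k₁-k₂) * g (k₂-k₃) * g (k₃-k₄))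
        + (∑ k₁ ∈ I, ∑ k₂ ∈ I, ∑ k₃ ∈ I, ∑ k₄ ∈ I, g (k₂-k₃) * g (k₃-k₄) * g (k₄-k₁))
        + (∑ k₁ ∈ I, ∑ k₂ ∈ I, ∑ k₃ ∈ I, ∑ k₄ ∈ I, g (k₃-k₄) * g (k₄-k₁) * g (k₁-k₂))
        + (∑ k₁ ∈ I, ∑ k₂ ∈ I, ∑ k₃ ∈ I, ∑ k₄ ∈ I, g (k₄-k₁) * g (k₁-k₂) * g (k₂-k₃))) / 4 := by
        simp only [← Finset.sum_div, Finset.sum_add_distrib]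
    _ ≤ ((n : ℝ) * S ^ 3 + (n : ℝ) * S ^ 3 + (n : ℝ) * S ^ 3 + (n : ℝ) * S ^ 3) / 4 := by
        rw [e2, e3, e4]
        linarith [hmain]
    _ = (n : ℝ) * S ^ 3 := by ring
end

section
/- Let θ > 0 and H ∈ (0,1). For t > 0 define b_H(t) = e^{-2θt} ∫_0^t e^{θs} (∫_0^s e^{θr} (s+r)^{2H-2} dr) ds. Then there exists C > 0 such that b_H(t) ≤ C t^{2H-2} for all t ≥ 1. -/
open MeasureTheory Real

private lemma exp_setInt {c : ℝ} (hc : 0 < c) {a b : ℝ} (hab : a ≤ b) :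
    ∫ r in Set.Ioc a b, Real.exp (c * r) = (Real.exp (c * b) - Real.exp (c * a)) / c := by
  rw [← intervalIntegral.integral_of_le hab]
  have h : ∀ x ∈ Set.uIcc a b, HasDerivAt (fun y => Real.exp (c * y) / c) (Real.exp (c * x)) x := by
    intro x _
    have h1 : HasDerivAt (fun y : ℝ => c * y) c x := by
      simpa using (hasDerivAt_id x).const_mul c
    have h2 : HasDerivAt (fun y : ℝ => Real.exp (c * y)) (Real.exp (c * x) * c) x :=
      (Real.hasDerivAt_exp (c * x)).comp x h1
    have h3 := h2.div_const c
    simpa [mul_div_assoc, mul_div_cancel_right₀, hc.ne'] using h3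
  rw [intervalIntegral.integral_eq_sub_of_hasDerivAt h
    ((Real.continuous_exp.comp (continuous_const.mul continuous_id)).intervalIntegrable a b)]
  ring

private lemma rpow_setInt {c : ℝ} (hc : -1 < c) {a : ℝ} (ha : 0 ≤ a) :
    ∫ r in Set.Ioc (0:ℝ) a, r ^ c = a ^ (c + 1) / (c + 1) := by
  rw [← intervalIntegral.integral_of_le ha, integral_rpow (Or.inl hc),
    Real.zero_rpow (by linarith), sub_zero]

private lemma rpow_intOn {c : ℝ} (hc : -1 < c) {a : ℝ} (ha : 0 ≤ a) :
    IntegrableOn (fun r : ℝ => r ^ c) (Set.Ioc 0 a) :=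
  (intervalIntegrable_iff_integrableOn_Ioc_of_le ha).mp
    (intervalIntegral.intervalIntegrable_rpow' hc)

set_option maxHeartbeats 1000000 in
/-- `b_H(t) = e^{-2θt} ∫_0^t e^{θs} (∫_0^s e^{θr}(s+r)^{2H-2} dr) ds ≤ C t^{2H-2}` for `t ≥ 1`. -/
theorem bH_bound (θ H : ℝ) (hθ : 0 < θ) (hH0 : 0 < H) (hH1 : H < 1) :
    ∃ C : ℝ, 0 < C ∧ ∀ t : ℝ, 1 ≤ t →
      Real.exp (-2 * θ * t) *
        (∫ s in Set.Ioc (0 : ℝ) t, Real.exp (θ * s) *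
          ∫ r in Set.Ioc (0 : ℝ) s, Real.exp (θ * r) * (s + r) ^ (2 * H - 2))
        ≤ C * t ^ (2 * H - 2) := by
  refine ⟨27 / (2 * H ^ 2 * θ ^ 3) + 2 / θ ^ 2, by positivity, ?_⟩
  intro t ht
  have ht0 : (0:ℝ) < t := lt_of_lt_of_le one_pos ht
  have ht2 : (0:ℝ) < t / 2 := by linarith
  set F : ℝ → ℝ := fun s => Real.exp (θ * s) *
      ∫ r in Set.Ioc (0 : ℝ) s, Real.exp (θ * r) * (s + r) ^ (2 * H - 2) with hF
  -- F is nonnegative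
  have hF0 : ∀ s : ℝ, 0 ≤ F s := by
    intro s
    refine mul_nonneg (Real.exp_nonneg _) (setIntegral_nonneg measurableSet_Ioc fun r hr => ?_)
    exact mul_nonneg (Real.exp_nonneg _) (Real.rpow_nonneg (by linarith [hr.1, hr.2]) _)
  -- Case 1 bound : for 0 < s, F s ≤ (1/H) * exp (2θs) * s^(2H-1)
  have hcase1 : ∀ s : ℝ, 0 < s → F s ≤ 1 / H * Real.exp (2 * θ * s) * s ^ (2 * H - 1) := by
    intro s hs
    have hinner : (∫ r in Set.Ioc (0:ℝ) s, Real.exp (θ * r) * (s + r) ^ (2 * H - 2))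
        ≤ Real.exp (θ * s) * s ^ (H - 1) * (s ^ H / H) := by
      have hgint : IntegrableOn
          (fun r : ℝ => Real.exp (θ * s) * s ^ (H - 1) * r ^ (H - 1)) (Set.Ioc 0 s) :=
        (rpow_intOn (by linarith) hs.le).const_mul _
      have hmono := integral_mono_of_nonneg (f := fun r : ℝ =>
          Real.exp (θ * r) * (s + r) ^ (2 * H - 2))
          (g := fun r : ℝ => Real.exp (θ * s) * s ^ (H - 1) * r ^ (H - 1))
          (μ := volume.restrict (Set.Ioc (0:ℝ) s))
          ((ae_restrict_iff' measurableSet_Ioc).2 (Filter.Eventually.of_forall fun r hr =>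
            mul_nonneg (Real.exp_nonneg _) (Real.rpow_nonneg (by linarith [hr.1, hr.2]) _)))
          hgint
          ?_
      · calc (∫ r in Set.Ioc (0:ℝ) s, Real.exp (θ * r) * (s + r) ^ (2 * H - 2))
            ≤ ∫ r in Set.Ioc (0:ℝ) s, Real.exp (θ * s) * s ^ (H - 1) * r ^ (H - 1) := hmono
          _ = Real.exp (θ * s) * s ^ (H - 1) * ∫ r in Set.Ioc (0:ℝ) s, r ^ (H - 1) :=
              integral_const_mul _ _
          _ = Real.exp (θ * s) * s ^ (H - 1) * (s ^ H / H) := by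
              rw [rpow_setInt (by linarith) hs.le]; norm_num
      · refine (ae_restrict_iff' measurableSet_Ioc).2 (Filter.Eventually.of_forall fun r hr => ?_)
        obtain ⟨hr0, hrs⟩ := hr
        have hsr : Real.sqrt (s * r) ≤ s + r := by
          have h1 : Real.sqrt (s * r) ≤ Real.sqrt ((s + r) ^ 2) :=
            Real.sqrt_le_sqrt (by nlinarith)
          rwa [Real.sqrt_sq (by linarith)] at h1
        have h2 : (s + r) ^ (2 * H - 2) ≤ Real.sqrt (s * r) ^ (2 * H - 2) :=
          Real.rpow_le_rpow_of_nonpos (Real.sqrt_pos.2 (by positivity)) hsr (by linarith)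
        have h3 : Real.sqrt (s * r) ^ (2 * H - 2) = s ^ (H - 1) * r ^ (H - 1) := by
          rw [Real.sqrt_eq_rpow, ← Real.rpow_mul (by positivity),
            show (1/2 : ℝ) * (2 * H - 2) = H - 1 by ring,
            Real.mul_rpow hs.le hr0.le]
        have h4 : Real.exp (θ * r) ≤ Real.exp (θ * s) :=
          Real.exp_le_exp.2 (mul_le_mul_of_nonneg_left hrs hθ.le)
        calc Real.exp (θ * r) * (s + r) ^ (2 * H - 2)
            ≤ Real.exp (θ * s) * (s ^ (H - 1) * r ^ (H - 1)) := by
              refine mul_le_mul h4 (h3 ▸ h2) (Real.rpow_nonneg (by linarith) _)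
                (Real.exp_nonneg _)
          _ = Real.exp (θ * s) * s ^ (H - 1) * r ^ (H - 1) := by ring
    calc F s ≤ Real.exp (θ * s) * (Real.exp (θ * s) * s ^ (H - 1) * (s ^ H / H)) :=
          mul_le_mul_of_nonneg_left hinner (Real.exp_nonneg _)
      _ = 1 / H * Real.exp (2 * θ * s) * s ^ (2 * H - 1) := by
          rw [show 2 * H - 1 = (H - 1) + H by ring, Real.rpow_add hs,
            show 2 * θ * s = θ * s + (θ * s) by ring, Real.exp_add]
          ring
  -- Case 2 bound : for t/2 < s, F s ≤ (1/θ) * (t/2)^(2H-2) * exp (2θs)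
  have hcase2 : ∀ s : ℝ, t / 2 < s →
      F s ≤ 1 / θ * (t / 2) ^ (2 * H - 2) * Real.exp (2 * θ * s) := by
    intro s hs
    have hs0 : 0 < s := lt_trans ht2 hs
    have hinner : (∫ r in Set.Ioc (0:ℝ) s, Real.exp (θ * r) * (s + r) ^ (2 * H - 2))
        ≤ (t / 2) ^ (2 * H - 2) * ((Real.exp (θ * s) - Real.exp (θ * 0)) / θ) := by
      have hgint : IntegrableOn
          (fun r : ℝ => (t / 2) ^ (2 * H - 2) * Real.exp (θ * r)) (Set.Ioc 0 s) := by
        refine (Continuous.integrableOn_Ioc ?_)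
        exact continuous_const.mul (Real.continuous_exp.comp (continuous_const.mul continuous_id))
      have hmono := integral_mono_of_nonneg (f := fun r : ℝ =>
          Real.exp (θ * r) * (s + r) ^ (2 * H - 2))
          (g := fun r : ℝ => (t / 2) ^ (2 * H - 2) * Real.exp (θ * r))
          (μ := volume.restrict (Set.Ioc (0:ℝ) s))
          ((ae_restrict_iff' measurableSet_Ioc).2 (Filter.Eventually.of_forall fun r hr =>
            mul_nonneg (Real.exp_nonneg _) (Real.rpow_nonneg (by linarith [hr.1, hr.2]) _)))
          hgint
          ?_
      · calc (∫ r in Set.Ioc (0:ℝ) s, Real.exp (θ * r) * (s + r) ^ (2 * H - 2))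
            ≤ ∫ r in Set.Ioc (0:ℝ) s, (t / 2) ^ (2 * H - 2) * Real.exp (θ * r) := hmono
          _ = (t / 2) ^ (2 * H - 2) * ∫ r in Set.Ioc (0:ℝ) s, Real.exp (θ * r) :=
              integral_const_mul _ _
          _ = (t / 2) ^ (2 * H - 2) * ((Real.exp (θ * s) - Real.exp (θ * 0)) / θ) := by
              rw [exp_setInt hθ hs0.le]
      · refine (ae_restrict_iff' measurableSet_Ioc).2 (Filter.Eventually.of_forall fun r hr => ?_)
        obtain ⟨hr0, hrs⟩ := hr
        have h2 : (s + r) ^ (2 * H - 2) ≤ (t / 2) ^ (2 * H - 2) :=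
          Real.rpow_le_rpow_of_nonpos ht2 (by linarith) (by linarith)
        calc Real.exp (θ * r) * (s + r) ^ (2 * H - 2)
            ≤ Real.exp (θ * r) * (t / 2) ^ (2 * H - 2) :=
              mul_le_mul_of_nonneg_left h2 (Real.exp_nonneg _)
          _ = (t / 2) ^ (2 * H - 2) * Real.exp (θ * r) := by ring
    calc F s ≤ Real.exp (θ * s) *
          ((t / 2) ^ (2 * H - 2) * ((Real.exp (θ * s) - Real.exp (θ * 0)) / θ)) :=
          mul_le_mul_of_nonneg_left hinner (Real.exp_nonneg _)
      _ ≤ Real.exp (θ * s) * ((t / 2) ^ (2 * H - 2) * (Real.exp (θ * s) / θ)) := by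
          have hpos : 0 ≤ (t / 2) ^ (2 * H - 2) := Real.rpow_nonneg ht2.le _
          have h1 : (Real.exp (θ * s) - Real.exp (θ * 0)) / θ ≤ Real.exp (θ * s) / θ := by
            apply div_le_div_of_nonneg_right (by linarith [Real.exp_pos (θ * 0)]) hθ.le
          gcongr
      _ = 1 / θ * (t / 2) ^ (2 * H - 2) * Real.exp (2 * θ * s) := by
          rw [show 2 * θ * s = θ * s + θ * s by ring, Real.exp_add]; ring
  -- the dominating function
  set g : ℝ → ℝ := fun s => if s ≤ t / 2 then 1 / H * Real.exp (2 * θ * s) * s ^ (2 * H - 1)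
      else 1 / θ * (t / 2) ^ (2 * H - 2) * Real.exp (2 * θ * s) with hg
  -- integrability of the two branches
  have hg1dom : IntegrableOn
      (fun s : ℝ => 1 / H * Real.exp (θ * t) * s ^ (2 * H - 1)) (Set.Ioc 0 (t / 2)) :=
    (rpow_intOn (by linarith) ht2.le).const_mul _
  have hg1int : IntegrableOn
      (fun s : ℝ => 1 / H * Real.exp (2 * θ * s) * s ^ (2 * H - 1)) (Set.Ioc 0 (t / 2)) := by
    refine Integrable.mono' hg1dom ?_ ?_
    · refine ContinuousOn.aestronglyMeasurable ?_ measurableSet_Ioc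
      exact ((continuous_const.mul (Real.continuous_exp.comp
          (continuous_const.mul continuous_id))).continuousOn).mul
        (continuousOn_id.rpow_const fun x hx => Or.inl (ne_of_gt hx.1))
    · refine (ae_restrict_iff' measurableSet_Ioc).2 (Filter.Eventually.of_forall fun s hs => ?_)
      obtain ⟨hs0, hst⟩ := hs
      have h1 : Real.exp (2 * θ * s) ≤ Real.exp (θ * t) :=
        Real.exp_le_exp.2 (by nlinarith)
      rw [Real.norm_eq_abs, abs_of_nonneg (mul_nonneg (mul_nonneg (by positivity)
        (Real.exp_nonneg _)) (Real.rpow_nonneg hs0.le _))]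
      exact mul_le_mul_of_nonneg_right (mul_le_mul_of_nonneg_left h1 (by positivity))
        (Real.rpow_nonneg hs0.le _)
  have hg2int : IntegrableOn
      (fun s : ℝ => 1 / θ * (t / 2) ^ (2 * H - 2) * Real.exp (2 * θ * s))
      (Set.Ioc (t / 2) t) := by
    refine Continuous.integrableOn_Ioc ?_
    exact continuous_const.mul (Real.continuous_exp.comp (continuous_const.mul continuous_id))
  have hgeq1 : Set.EqOn g (fun s : ℝ => 1 / H * Real.exp (2 * θ * s) * s ^ (2 * H - 1))
      (Set.Ioc 0 (t / 2)) := fun s hs => by simp [hg, hs.2]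
  have hgeq2 : Set.EqOn g (fun s : ℝ => 1 / θ * (t / 2) ^ (2 * H - 2) * Real.exp (2 * θ * s))
      (Set.Ioc (t / 2) t) := fun s hs => by simp [hg, not_le.2 hs.1]
  have hgint1 : IntegrableOn g (Set.Ioc 0 (t / 2)) :=
    hg1int.congr_fun (fun s hs => (hgeq1 hs).symm) measurableSet_Ioc
  have hgint2 : IntegrableOn g (Set.Ioc (t / 2) t) :=
    hg2int.congr_fun (fun s hs => (hgeq2 hs).symm) measurableSet_Ioc
  have hsplit : Set.Ioc (0:ℝ) (t / 2) ∪ Set.Ioc (t / 2) t = Set.Ioc (0:ℝ) t :=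
    Set.Ioc_union_Ioc_eq_Ioc ht2.le (by linarith)
  have hgint : IntegrableOn g (Set.Ioc 0 t) := by
    rw [← hsplit]; exact hgint1.union hgint2
  -- main comparison
  have hFg : (∫ s in Set.Ioc (0:ℝ) t, F s) ≤ ∫ s in Set.Ioc (0:ℝ) t, g s := by
    refine integral_mono_of_nonneg
      ((ae_restrict_iff' measurableSet_Ioc).2 (Filter.Eventually.of_forall fun s _ => hF0 s))
      hgint
      ((ae_restrict_iff' measurableSet_Ioc).2 (Filter.Eventually.of_forall fun s hs => ?_))
    by_cases h : s ≤ t / 2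
    · simpa [hg, h] using hcase1 s hs.1
    · simpa [hg, h] using hcase2 s (not_le.1 h)
  -- split and evaluate the integral of g
  have hsplitInt : (∫ s in Set.Ioc (0:ℝ) t, g s)
      = (∫ s in Set.Ioc (0:ℝ) (t / 2), g s) + ∫ s in Set.Ioc (t / 2) t, g s := by
    rw [← hsplit, setIntegral_union (Set.Ioc_disjoint_Ioc_of_le le_rfl) measurableSet_Ioc hgint1 hgint2]
  have hJ1 : (∫ s in Set.Ioc (0:ℝ) (t / 2), g s)
      ≤ 1 / H * Real.exp (θ * t) * ((t / 2) ^ (2 * H) / (2 * H)) := by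
    rw [setIntegral_congr_fun measurableSet_Ioc hgeq1]
    have hmono := integral_mono_of_nonneg (μ := volume.restrict (Set.Ioc (0:ℝ) (t / 2)))
      (f := fun s : ℝ => 1 / H * Real.exp (2 * θ * s) * s ^ (2 * H - 1))
      (g := fun s : ℝ => 1 / H * Real.exp (θ * t) * s ^ (2 * H - 1))
      ((ae_restrict_iff' measurableSet_Ioc).2 (Filter.Eventually.of_forall fun s hs =>
        mul_nonneg (mul_nonneg (by positivity) (Real.exp_nonneg _))
          (Real.rpow_nonneg hs.1.le _)))
      hg1dom
      ((ae_restrict_iff' measurableSet_Ioc).2 (Filter.Eventually.of_forall fun s hs => by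
        have h1 : Real.exp (2 * θ * s) ≤ Real.exp (θ * t) :=
          Real.exp_le_exp.2 (by nlinarith [hs.1, hs.2])
        exact mul_le_mul_of_nonneg_right (mul_le_mul_of_nonneg_left h1 (by positivity))
          (Real.rpow_nonneg hs.1.le _)))
    calc (∫ s in Set.Ioc (0:ℝ) (t / 2), 1 / H * Real.exp (2 * θ * s) * s ^ (2 * H - 1))
        ≤ ∫ s in Set.Ioc (0:ℝ) (t / 2), 1 / H * Real.exp (θ * t) * s ^ (2 * H - 1) := hmono
      _ = 1 / H * Real.exp (θ * t) * ∫ s in Set.Ioc (0:ℝ) (t / 2), s ^ (2 * H - 1) :=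
          integral_const_mul _ _
      _ = 1 / H * Real.exp (θ * t) * ((t / 2) ^ (2 * H) / (2 * H)) := by
          rw [rpow_setInt (by linarith) ht2.le]; norm_num
  have hJ2 : (∫ s in Set.Ioc (t / 2) t, g s)
      ≤ 1 / θ * (t / 2) ^ (2 * H - 2) * (Real.exp (2 * θ * t) / (2 * θ)) := by
    rw [setIntegral_congr_fun measurableSet_Ioc hgeq2, integral_const_mul,
      exp_setInt (by positivity) (by linarith : t / 2 ≤ t)]
    have hpos : 0 ≤ 1 / θ * (t / 2) ^ (2 * H - 2) := by
      have := Real.rpow_nonneg ht2.le (2 * H - 2); positivity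
    have h1 : (Real.exp (2 * θ * t) - Real.exp (2 * θ * (t / 2))) / (2 * θ)
        ≤ Real.exp (2 * θ * t) / (2 * θ) := by
      exact div_le_div_of_nonneg_right (by linarith [Real.exp_pos (2 * θ * (t / 2))]) (by positivity)
    exact mul_le_mul_of_nonneg_left h1 hpos
  -- numeric estimates
  have hB1 : Real.exp (-(θ * t)) * (t / 2) ^ (2 * H) ≤ 27 / θ ^ 3 * t ^ (2 * H - 2) := by
    have hx : 0 < θ * t := by positivity
    have h1 : θ * t / 3 ≤ Real.exp (θ * t / 3) := by linarith [Real.add_one_le_exp (θ * t / 3)]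
    have h2 : (θ * t / 3) ^ 3 ≤ Real.exp (θ * t / 3) ^ 3 :=
      pow_le_pow_left₀ (by positivity) h1 3
    have h3 : Real.exp (θ * t / 3) ^ 3 = Real.exp (θ * t) := by
      rw [pow_succ, pow_succ, pow_one, ← Real.exp_add, ← Real.exp_add]; ring_nf
    have h4 : (θ * t) ^ 3 / 27 ≤ Real.exp (θ * t) := by nlinarith
    have h5 : Real.exp (-(θ * t)) ≤ 27 / (θ * t) ^ 3 := by
      rw [Real.exp_neg]
      calc (Real.exp (θ * t))⁻¹ ≤ ((θ * t) ^ 3 / 27)⁻¹ :=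
            inv_anti₀ (by positivity) h4
        _ = 27 / (θ * t) ^ 3 := by rw [inv_div]
    have h6 : (t / 2) ^ (2 * H) ≤ t ^ (2 * H) :=
      Real.rpow_le_rpow (by positivity) (by linarith) (by positivity)
    have h7 : Real.exp (-(θ * t)) * (t / 2) ^ (2 * H) ≤ 27 / (θ * t) ^ 3 * t ^ (2 * H) := by
      have := Real.exp_pos (-(θ * t))
      have := Real.rpow_nonneg (by positivity : (0:ℝ) ≤ t / 2) (2 * H)
      have := Real.rpow_nonneg ht0.le (2 * H)
      nlinarith [Real.exp_nonneg (-(θ * t))]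
    have h8 : 27 / (θ * t) ^ 3 * t ^ (2 * H) = 27 / θ ^ 3 * t ^ (2 * H - 3) := by
      have e1 : (t:ℝ) ^ (3:ℕ) = t ^ ((3:ℕ):ℝ) := (Real.rpow_natCast t 3).symm
      have e2 : t ^ (2 * H - 3) = t ^ (2 * H) / t ^ (3:ℕ) := by
        rw [e1, ← Real.rpow_sub ht0]; norm_num
      rw [e2, mul_pow]
      field_simp
    have h9 : t ^ (2 * H - 3) ≤ t ^ (2 * H - 2) :=
      Real.rpow_le_rpow_of_exponent_le ht (by linarith)
    have h10 : (0:ℝ) ≤ 27 / θ ^ 3 := by positivity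
    calc Real.exp (-(θ * t)) * (t / 2) ^ (2 * H) ≤ 27 / (θ * t) ^ 3 * t ^ (2 * H) := h7
      _ = 27 / θ ^ 3 * t ^ (2 * H - 3) := h8
      _ ≤ 27 / θ ^ 3 * t ^ (2 * H - 2) := mul_le_mul_of_nonneg_left h9 h10
  have hB2 : (t / 2) ^ (2 * H - 2) ≤ 4 * t ^ (2 * H - 2) := by
    have e1 : (t / 2) ^ (2 * H - 2) = t ^ (2 * H - 2) / 2 ^ (2 * H - 2) :=
      Real.div_rpow ht0.le (by norm_num : (0:ℝ) ≤ 2) (2 * H - 2)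
    have h2 : (1:ℝ) / 4 ≤ 2 ^ (2 * H - 2) := by
      have h3 : (2:ℝ) ^ (-2:ℝ) ≤ 2 ^ (2 * H - 2) :=
        Real.rpow_le_rpow_of_exponent_le one_le_two (by linarith)
      have h4 : (2:ℝ) ^ (-2:ℝ) = 1 / 4 := by
        rw [show (-2:ℝ) = ((-2:ℤ):ℝ) by norm_num, Real.rpow_intCast]; norm_num
      exact h4 ▸ h3
    have h5 : 0 ≤ t ^ (2 * H - 2) := Real.rpow_nonneg ht0.le _
    rw [e1]
    calc t ^ (2 * H - 2) / 2 ^ (2 * H - 2) ≤ t ^ (2 * H - 2) / (1 / 4) := by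
          gcongr
      _ = 4 * t ^ (2 * H - 2) := by ring
  -- assemble
  have hchain : Real.exp (-2 * θ * t) * (∫ s in Set.Ioc (0:ℝ) t, F s)
      ≤ Real.exp (-2 * θ * t) *
        (1 / H * Real.exp (θ * t) * ((t / 2) ^ (2 * H) / (2 * H)) +
          1 / θ * (t / 2) ^ (2 * H - 2) * (Real.exp (2 * θ * t) / (2 * θ))) := by
    apply mul_le_mul_of_nonneg_left _ (Real.exp_nonneg _)
    calc (∫ s in Set.Ioc (0:ℝ) t, F s) ≤ ∫ s in Set.Ioc (0:ℝ) t, g s := hFg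
      _ = (∫ s in Set.Ioc (0:ℝ) (t / 2), g s) + ∫ s in Set.Ioc (t / 2) t, g s := hsplitInt
      _ ≤ _ := add_le_add hJ1 hJ2
  refine hchain.trans ?_
  have hE : Real.exp (-2 * θ * t) = (Real.exp (θ * t) * Real.exp (θ * t))⁻¹ := by
    rw [show (-2) * θ * t = -(θ * t + θ * t) by ring, Real.exp_neg, Real.exp_add]
  have hE2 : Real.exp (2 * θ * t) = Real.exp (θ * t) * Real.exp (θ * t) := by
    rw [show 2 * θ * t = θ * t + θ * t by ring, Real.exp_add]
  have hEneg : Real.exp (-(θ * t)) = (Real.exp (θ * t))⁻¹ := by rw [← Real.exp_neg]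
  have expand : Real.exp (-2 * θ * t) *
      (1 / H * Real.exp (θ * t) * ((t / 2) ^ (2 * H) / (2 * H)) +
        1 / θ * (t / 2) ^ (2 * H - 2) * (Real.exp (2 * θ * t) / (2 * θ)))
      = Real.exp (-(θ * t)) * (t / 2) ^ (2 * H) * (1 / (2 * H ^ 2)) +
        (t / 2) ^ (2 * H - 2) * (1 / (2 * θ ^ 2)) := by
    have hne : Real.exp (θ * t) ≠ 0 := (Real.exp_pos _).ne'
    rw [hE, hE2, hEneg]
    field_simp
  rw [expand]
  have hpH : (0:ℝ) < 1 / (2 * H ^ 2) := by positivity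
  have hpθ : (0:ℝ) < 1 / (2 * θ ^ 2) := by positivity
  have hfin1 : Real.exp (-(θ * t)) * (t / 2) ^ (2 * H) * (1 / (2 * H ^ 2))
      ≤ 27 / (2 * H ^ 2 * θ ^ 3) * t ^ (2 * H - 2) := by
    calc Real.exp (-(θ * t)) * (t / 2) ^ (2 * H) * (1 / (2 * H ^ 2))
        ≤ 27 / θ ^ 3 * t ^ (2 * H - 2) * (1 / (2 * H ^ 2)) :=
          mul_le_mul_of_nonneg_right hB1 hpH.le
      _ = 27 / (2 * H ^ 2 * θ ^ 3) * t ^ (2 * H - 2) := by ring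
  have hfin2 : (t / 2) ^ (2 * H - 2) * (1 / (2 * θ ^ 2)) ≤ 2 / θ ^ 2 * t ^ (2 * H - 2) := by
    calc (t / 2) ^ (2 * H - 2) * (1 / (2 * θ ^ 2))
        ≤ 4 * t ^ (2 * H - 2) * (1 / (2 * θ ^ 2)) := mul_le_mul_of_nonneg_right hB2 hpθ.le
      _ = 2 / θ ^ 2 * t ^ (2 * H - 2) := by ring
  linarith
end

section
/- Let θ > 0 and α > 0. Define J_α(t) = e^{-2θt} ∫_0^t ∫_0^t e^{θs} e^{θr} |s−r|^{α} dr ds. Then there exists C > 0 such that |J_α(t) − Γ(α+1)/θ^{α+2}| ≤ C e^{-θt/2} for all t ≥ 0. -/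
open MeasureTheory Real Set

lemma inner_eq (θ α : ℝ) (hα : 0 < α) (t s : ℝ) (hs : 0 ≤ s) (hst : s ≤ t) :
    ∫ r in Ioc (0:ℝ) t, Real.exp (θ * s) * Real.exp (θ * r) * |s - r| ^ α
      = Real.exp (2*θ*s) * ((∫ u in (0:ℝ)..s, u ^ α * Real.exp (-θ*u))
          + ∫ u in (0:ℝ)..(t-s), u ^ α * Real.exp (θ*u)) := by
  have hc : Continuous fun x : ℝ => x ^ α :=
    continuous_iff_continuousAt.2 fun x => Real.continuousAt_rpow_const x α (Or.inr hα.le)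
  have hcont : Continuous fun r : ℝ => Real.exp (θ*s) * Real.exp (θ*r) * |s - r| ^ α := by
    refine (continuous_const.mul (Real.continuous_exp.comp (continuous_const.mul continuous_id))).mul ?_
    exact hc.comp ((continuous_const.sub continuous_id).abs)
  rw [← intervalIntegral.integral_of_le (hs.trans hst),
    ← intervalIntegral.integral_add_adjacent_intervals (a := (0:ℝ)) (b := s) (c := t)
      (hcont.intervalIntegrable 0 s) (hcont.intervalIntegrable s t), mul_add]
  congr 1
  · -- first piece
    have h1 : EqOn (fun r : ℝ => Real.exp (θ*s) * Real.exp (θ*r) * |s - r| ^ α)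
        (fun r : ℝ => (fun u : ℝ => Real.exp (θ*s) * Real.exp (θ*(s-u)) * u ^ α) (s - r))
        (uIcc 0 s) := by
      intro r hr
      rw [uIcc_of_le hs] at hr
      simp only [sub_sub_cancel]
      rw [abs_of_nonneg (by linarith [hr.2])]
    rw [intervalIntegral.integral_congr h1,
      intervalIntegral.integral_comp_sub_left
        (fun u : ℝ => Real.exp (θ*s) * Real.exp (θ*(s-u)) * u ^ α) s,
      sub_self, sub_zero]
    have h2 : EqOn (fun u : ℝ => Real.exp (θ*s) * Real.exp (θ*(s-u)) * u ^ α)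
        (fun u : ℝ => Real.exp (2*θ*s) * (u ^ α * Real.exp (-θ*u))) (uIcc 0 s) := by
      intro u _
      simp only []
      rw [← Real.exp_add, show θ*s + θ*(s-u) = 2*θ*s + (-θ*u) by ring, Real.exp_add]
      ring
    rw [intervalIntegral.integral_congr h2, intervalIntegral.integral_const_mul]
  · -- second piece
    have h1 : EqOn (fun r : ℝ => Real.exp (θ*s) * Real.exp (θ*r) * |s - r| ^ α)
        (fun r : ℝ => (fun u : ℝ => Real.exp (θ*s) * Real.exp (θ*(u+s)) * u ^ α) (r - s))
        (uIcc s t) := by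
      intro r hr
      rw [uIcc_of_le hst] at hr
      simp only [sub_add_cancel]
      rw [abs_of_nonpos (by linarith [hr.1]), neg_sub]
    rw [intervalIntegral.integral_congr h1,
      intervalIntegral.integral_comp_sub_right
        (fun u : ℝ => Real.exp (θ*s) * Real.exp (θ*(u+s)) * u ^ α) s,
      sub_self]
    have h2 : EqOn (fun u : ℝ => Real.exp (θ*s) * Real.exp (θ*(u+s)) * u ^ α)
        (fun u : ℝ => Real.exp (2*θ*s) * (u ^ α * Real.exp (θ*u))) (uIcc 0 (t-s)) := by
      intro u _
      simp only []
      rw [← Real.exp_add, show θ*s + θ*(u+s) = 2*θ*s + θ*u by ring, Real.exp_add]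
      ring
    rw [intervalIntegral.integral_congr h2, intervalIntegral.integral_const_mul]

lemma key (θ α : ℝ) (hθ : 0 < θ) (hα : 0 < α) (t : ℝ) (ht : 0 ≤ t)
    (inner_eq : ∀ s, 0 ≤ s → s ≤ t →
      (∫ r in Ioc (0:ℝ) t, Real.exp (θ * s) * Real.exp (θ * r) * |s - r| ^ α)
      = Real.exp (2*θ*s) * ((∫ u in (0:ℝ)..s, u ^ α * Real.exp (-θ*u))
          + ∫ u in (0:ℝ)..(t-s), u ^ α * Real.exp (θ*u))) :
    ∫ s in Ioc (0:ℝ) t, ∫ r in Ioc (0:ℝ) t, Real.exp (θ * s) * Real.exp (θ * r) * |s - r| ^ α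
      = (Real.exp (2*θ*t) * (∫ u in (0:ℝ)..t, u ^ α * Real.exp (-θ*u))
          - ∫ u in (0:ℝ)..t, u ^ α * Real.exp (θ*u)) / θ := by
  have hc : Continuous fun x : ℝ => x ^ α :=
    continuous_iff_continuousAt.2 fun x => Real.continuousAt_rpow_const x α (Or.inr hα.le)
  set f : ℝ → ℝ := fun u => u ^ α * Real.exp (-θ*u) with hf_def
  set g : ℝ → ℝ := fun u => u ^ α * Real.exp (θ*u) with hg_def
  have hfc : Continuous f := hc.mul (Real.continuous_exp.comp (continuous_const.mul continuous_id))
  have hgc : Continuous g := hc.mul (Real.continuous_exp.comp (continuous_const.mul continuous_id))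
  set G : ℝ → ℝ := fun s => ∫ u in (0:ℝ)..s, f u with hG_def
  set K : ℝ → ℝ := fun s => ∫ u in (0:ℝ)..s, g u with hK_def
  have hG : ∀ s, HasDerivAt G (f s) s := fun s => (hfc.integral_hasStrictDerivAt 0 s).hasDerivAt
  have hK : ∀ s, HasDerivAt K (g s) s := fun s => (hgc.integral_hasStrictDerivAt 0 s).hasDerivAt
  have hGc : Continuous G := continuous_iff_continuousAt.2 fun s => (hG s).continuousAt
  have hKc : Continuous K := continuous_iff_continuousAt.2 fun s => (hK s).continuousAt
  have hEc : Continuous fun s : ℝ => Real.exp (2*θ*s) :=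
    Real.continuous_exp.comp (continuous_const.mul continuous_id)
  -- rewrite the double integral
  have step1 : (∫ s in Ioc (0:ℝ) t, ∫ r in Ioc (0:ℝ) t,
        Real.exp (θ * s) * Real.exp (θ * r) * |s - r| ^ α)
      = ∫ s in (0:ℝ)..t, (Real.exp (2*θ*s) * G s + Real.exp (2*θ*s) * K (t-s)) := by
    rw [intervalIntegral.integral_of_le ht]
    refine setIntegral_congr_fun measurableSet_Ioc fun s hs => ?_
    rw [inner_eq s hs.1.le hs.2, mul_add]
  rw [step1]
  have hint1 : IntervalIntegrable (fun s => Real.exp (2*θ*s) * G s) volume 0 t :=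
    (hEc.mul hGc).intervalIntegrable 0 t
  have hint2 : IntervalIntegrable (fun s => Real.exp (2*θ*s) * K (t-s)) volume 0 t :=
    (hEc.mul (hKc.comp (continuous_const.sub continuous_id))).intervalIntegrable 0 t
  rw [intervalIntegral.integral_add hint1 hint2]
  -- first summand via FTC
  have exp_deriv : ∀ c s : ℝ, HasDerivAt (fun x : ℝ => Real.exp (c*x)) (Real.exp (c*s)*c) s := by
    intro c s
    simpa using (HasDerivAt.exp (by simpa using (hasDerivAt_id s).const_mul c))
  have hfg : ∀ s : ℝ, Real.exp (2*θ*s) * f s = g s := by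
    intro s
    simp only [hf_def, hg_def]
    rw [mul_comm (s ^ α), ← mul_assoc, ← Real.exp_add,
      show 2*θ*s + -θ*s = θ*s by ring, mul_comm]
  have part1 : (∫ s in (0:ℝ)..t, Real.exp (2*θ*s) * G s)
      = (Real.exp (2*θ*t) * G t - K t) / (2*θ) := by
    have hderiv : ∀ s ∈ uIcc (0:ℝ) t,
        HasDerivAt (fun x => (Real.exp (2*θ*x) * G x - K x) / (2*θ))
          (Real.exp (2*θ*s) * G s) s := by
      intro s _
      have h2 := (((exp_deriv (2*θ) s).mul (hG s)).sub (hK s)).div_const (2*θ)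
      refine h2.congr_deriv ?_
      rw [← hfg s]
      field_simp
      ring
    rw [intervalIntegral.integral_eq_sub_of_hasDerivAt hderiv hint1]
    simp [hG_def, hK_def, intervalIntegral.integral_same]
  -- second summand
  have part2 : (∫ s in (0:ℝ)..t, Real.exp (2*θ*s) * K (t-s))
      = (Real.exp (2*θ*t) * G t - K t) / (2*θ) := by
    have e2 : (∫ s in (0:ℝ)..t, Real.exp (2*θ*s) * K (t-s))
        = ∫ s in (0:ℝ)..t, Real.exp (2*θ*t) * (Real.exp (-2*θ*s) * K s) := by
      have h := intervalIntegral.integral_comp_sub_left (a := (0:ℝ)) (b := t)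
        (fun u => Real.exp (2*θ*t) * (Real.exp (-2*θ*u) * K u)) t
      simp only [sub_self, sub_zero] at h
      rw [← h]
      refine intervalIntegral.integral_congr fun s hs => ?_
      rw [← mul_assoc, ← Real.exp_add, show 2*θ*t + -2*θ*(t-s) = 2*θ*s by ring]
    rw [e2]
    have hfg' : ∀ s : ℝ, Real.exp (-2*θ*s) * g s = f s := by
      intro s
      simp only [hf_def, hg_def]
      rw [mul_comm (s ^ α), ← mul_assoc, ← Real.exp_add,
        show -2*θ*s + θ*s = -θ*s by ring, mul_comm]
    have hderiv : ∀ s ∈ uIcc (0:ℝ) t,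
        HasDerivAt (fun x => Real.exp (2*θ*t) * ((G x - Real.exp (-2*θ*x) * K x) / (2*θ)))
          (Real.exp (2*θ*t) * (Real.exp (-2*θ*s) * K s)) s := by
      intro s _
      have h2 := ((((hG s).sub ((exp_deriv (-2*θ) s).mul (hK s))).div_const (2*θ)).const_mul
        (Real.exp (2*θ*t)))
      refine h2.congr_deriv ?_
      rw [← hfg' s]
      field_simp
      ring
    have hint3 : IntervalIntegrable
        (fun s => Real.exp (2*θ*t) * (Real.exp (-2*θ*s) * K s)) volume 0 t :=
      (continuous_const.mul ((Real.continuous_exp.comp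
        (continuous_const.mul continuous_id)).mul hKc)).intervalIntegrable 0 t
    rw [intervalIntegral.integral_eq_sub_of_hasDerivAt hderiv hint3]
    have h0 : G (0:ℝ) = 0 := intervalIntegral.integral_same
    have k0 : K (0:ℝ) = 0 := intervalIntegral.integral_same
    have hE1 : Real.exp (2*θ*t) * Real.exp (-2*θ*t) = 1 := by
      rw [← Real.exp_add, show 2*θ*t + -2*θ*t = 0 by ring, Real.exp_zero]
    simp only [h0, k0, mul_zero, sub_zero, zero_sub, zero_div, mul_neg, neg_zero, neg_neg]
    rw [← mul_div_assoc, mul_sub, ← mul_assoc, hE1, one_mul]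
  rw [part1, part2]
  have hGt : (∫ u in (0:ℝ)..t, u ^ α * Real.exp (-θ*u)) = G t := rfl
  have hKt : (∫ u in (0:ℝ)..t, u ^ α * Real.exp (θ*u)) = K t := rfl
  rw [hGt, hKt]
  field_simp
  ring

/-- `J_α(t) = e^{-2θt} ∫_0^t ∫_0^t e^{θs}e^{θr}|s-r|^α dr ds` satisfies
`|J_α(t) − Γ(α+1)/θ^{α+2}| ≤ C e^{-θt/2}` for all `t ≥ 0`. -/
theorem Jalpha_bound (θ α : ℝ) (hθ : 0 < θ) (hα : 0 < α) :
    ∃ C : ℝ, 0 < C ∧ ∀ t : ℝ, 0 ≤ t →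
      |Real.exp (-2 * θ * t) *
          (∫ s in Set.Ioc (0 : ℝ) t, ∫ r in Set.Ioc (0 : ℝ) t,
            Real.exp (θ * s) * Real.exp (θ * r) * |s - r| ^ α)
        - Real.Gamma (α + 1) / θ ^ (α + 2)| ≤ C * Real.exp (-θ * t / 2) := by
  have hc : Continuous fun x : ℝ => x ^ α :=
    continuous_iff_continuousAt.2 fun x => Real.continuousAt_rpow_const x α (Or.inr hα.le)
  have hfc : Continuous fun u : ℝ => u ^ α * Real.exp (-θ*u) :=
    hc.mul (Real.continuous_exp.comp (continuous_const.mul continuous_id))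
  have hgc : Continuous fun u : ℝ => u ^ α * Real.exp (θ*u) :=
    hc.mul (Real.continuous_exp.comp (continuous_const.mul continuous_id))
  have hf2c : Continuous fun u : ℝ => u ^ α * Real.exp (-(θ/2*u)) :=
    hc.mul (Real.continuous_exp.comp (continuous_const.mul continuous_id).neg)
  -- integrability on Ioi 0
  have hIf : IntegrableOn (fun u : ℝ => u ^ α * Real.exp (-θ*u)) (Ioi 0) := by
    have h := integrableOn_rpow_mul_exp_neg_mul_rpow (s := α) (p := 1) (b := θ)
      (by linarith) zero_lt_one hθ
    refine h.congr_fun (fun x hx => ?_) measurableSet_Ioi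
    simp [Real.rpow_one, neg_mul]
  have hIf2 : IntegrableOn (fun u : ℝ => u ^ α * Real.exp (-(θ/2*u))) (Ioi 0) := by
    have h := integrableOn_rpow_mul_exp_neg_mul_rpow (s := α) (p := 1) (b := θ/2)
      (by linarith) zero_lt_one (by positivity)
    refine h.congr_fun (fun x hx => ?_) measurableSet_Ioi
    simp [Real.rpow_one, neg_mul]
  have hfnn : ∀ u : ℝ, 0 ≤ u → 0 ≤ u ^ α * Real.exp (-θ*u) :=
    fun u hu => mul_nonneg (Real.rpow_nonneg hu α) (Real.exp_pos _).le
  have hgnn : ∀ u : ℝ, 0 ≤ u → 0 ≤ u ^ α * Real.exp (θ*u) :=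
    fun u hu => mul_nonneg (Real.rpow_nonneg hu α) (Real.exp_pos _).le
  have hf2nn : ∀ u : ℝ, 0 ≤ u → 0 ≤ u ^ α * Real.exp (-(θ/2*u)) :=
    fun u hu => mul_nonneg (Real.rpow_nonneg hu α) (Real.exp_pos _).le
  have hf2nn_ae : 0 ≤ᵐ[volume.restrict (Ioi (0:ℝ))] fun u : ℝ => u ^ α * Real.exp (-(θ/2*u)) := by
    refine (ae_restrict_iff' measurableSet_Ioi).2 (Filter.Eventually.of_forall fun u hu => ?_)
    exact hf2nn u (le_of_lt hu)
  set G2 : ℝ := ∫ u in Ioi (0:ℝ), u ^ α * Real.exp (-(θ/2*u)) with hG2_def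
  have hG2eq : G2 = (1/(θ/2)) ^ (α+1) * Real.Gamma (α+1) := by
    rw [hG2_def, ← Real.integral_rpow_mul_exp_neg_mul_Ioi
      (by linarith : (0:ℝ) < α+1) (by positivity : (0:ℝ) < θ/2)]
    refine setIntegral_congr_fun measurableSet_Ioi fun u hu => ?_
    simp [add_sub_cancel_right]
  have hG2pos : 0 < G2 := by
    rw [hG2eq]
    have := Real.Gamma_pos_of_pos (by linarith : (0:ℝ) < α+1)
    positivity
  have hGinf : (∫ u in Ioi (0:ℝ), u ^ α * Real.exp (-θ*u)) = (1/θ) ^ (α+1) * Real.Gamma (α+1) := by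
    rw [← Real.integral_rpow_mul_exp_neg_mul_Ioi (by linarith : (0:ℝ) < α+1) hθ]
    refine setIntegral_congr_fun measurableSet_Ioi fun u hu => ?_
    simp [add_sub_cancel_right, neg_mul]
  have hL : Real.Gamma (α+1) / θ ^ (α+2)
      = (∫ u in Ioi (0:ℝ), u ^ α * Real.exp (-θ*u)) / θ := by
    rw [hGinf, show α+2 = (α+1)+1 by ring, Real.rpow_add hθ, Real.rpow_one, one_div,
      Real.inv_rpow hθ.le]
    have hpos : (0:ℝ) < θ ^ (α+1) := Real.rpow_pos_of_pos hθ _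
    field_simp
  refine ⟨2*G2/θ, by positivity, fun t ht => ?_⟩
  rw [key θ α hθ hα t ht (fun s hs hst => inner_eq θ α hα t s hs hst)]
  have hE1 : Real.exp (-2*θ*t) * Real.exp (2*θ*t) = 1 := by
    rw [← Real.exp_add, show -2*θ*t + 2*θ*t = 0 by ring, Real.exp_zero]
  have hE1' : Real.exp (-2 * θ * t) = Real.exp (-2*θ*t) := by norm_num
  rw [hE1', ← mul_div_assoc, mul_sub, ← mul_assoc, hE1, one_mul]
  rw [intervalIntegral.integral_of_le ht, intervalIntegral.integral_of_le ht]
  have hsplit : (∫ u in Ioi (0:ℝ), u ^ α * Real.exp (-θ*u))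
      = (∫ u in Ioc (0:ℝ) t, u ^ α * Real.exp (-θ*u))
        + ∫ u in Ioi t, u ^ α * Real.exp (-θ*u) := by
    rw [← setIntegral_union (Set.Ioc_disjoint_Ioi le_rfl) measurableSet_Ioi
      (hIf.mono_set Ioc_subset_Ioi_self) (hIf.mono_set (Ioi_subset_Ioi ht)),
      Ioc_union_Ioi_eq_Ioi ht]
  rw [hL, hsplit]
  set A := ∫ u in Ioc (0:ℝ) t, u ^ α * Real.exp (-θ*u) with hA_def
  set T := ∫ u in Ioi t, u ^ α * Real.exp (-θ*u) with hT_def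
  set Kt := ∫ u in Ioc (0:ℝ) t, u ^ α * Real.exp (θ*u) with hKt_def
  rw [div_sub_div_same, show A - Real.exp (-2*θ*t) * Kt - (A + T)
      = -(T + Real.exp (-2*θ*t) * Kt) by ring, abs_div, abs_neg, abs_of_pos hθ]
  have hT_nn : 0 ≤ T :=
    setIntegral_nonneg measurableSet_Ioi fun u hu => hfnn u (le_trans ht (le_of_lt hu))
  have hK_nn : 0 ≤ Kt :=
    setIntegral_nonneg measurableSet_Ioc fun u hu => hgnn u hu.1.le
  have hT_le : T ≤ Real.exp (-θ*t/2) * G2 := by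
    calc T ≤ ∫ u in Ioi t, Real.exp (-θ*t/2) * (u ^ α * Real.exp (-(θ/2*u))) := by
          refine setIntegral_mono_on (hIf.mono_set (Ioi_subset_Ioi ht))
            ((hIf2.mono_set (Ioi_subset_Ioi ht)).const_mul _) measurableSet_Ioi fun u hu => ?_
          have hu0 : 0 ≤ u := le_trans ht (le_of_lt hu)
          have e1 : u ^ α * Real.exp (-θ*u)
              = (u ^ α * Real.exp (-(θ/2*u))) * Real.exp (-(θ/2*u)) := by
            rw [mul_assoc, ← Real.exp_add, show -(θ/2*u) + -(θ/2*u) = -θ*u by ring]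
          rw [e1, mul_comm (Real.exp (-θ*t/2))]
          refine mul_le_mul_of_nonneg_left (Real.exp_le_exp.2 ?_) (hf2nn u hu0)
          nlinarith [mul_le_mul_of_nonneg_left (le_of_lt hu) (le_of_lt (half_pos hθ))]
      _ = Real.exp (-θ*t/2) * ∫ u in Ioi t, u ^ α * Real.exp (-(θ/2*u)) :=
          integral_const_mul _ _
      _ ≤ Real.exp (-θ*t/2) * G2 := by
          refine mul_le_mul_of_nonneg_left ?_ (Real.exp_pos _).le
          exact setIntegral_mono_set hIf2 hf2nn_ae
            (HasSubset.Subset.eventuallyLE (Ioi_subset_Ioi ht))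
  have hK_le : Real.exp (-2*θ*t) * Kt ≤ Real.exp (-θ*t/2) * G2 := by
    have h1 : Kt ≤ Real.exp (3*θ*t/2) * G2 := by
      calc Kt ≤ ∫ u in Ioc (0:ℝ) t, Real.exp (3*θ*t/2) * (u ^ α * Real.exp (-(θ/2*u))) := by
            refine setIntegral_mono_on (hgc.integrableOn_Ioc)
              ((hf2c.integrableOn_Ioc).const_mul _) measurableSet_Ioc fun u hu => ?_
            have e1 : u ^ α * Real.exp (θ*u)
                = (u ^ α * Real.exp (-(θ/2*u))) * Real.exp (3*θ*u/2) := by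
              rw [mul_assoc, ← Real.exp_add, show -(θ/2*u) + 3*θ*u/2 = θ*u by ring]
            rw [e1, mul_comm (Real.exp (3*θ*t/2))]
            refine mul_le_mul_of_nonneg_left (Real.exp_le_exp.2 ?_) (hf2nn u hu.1.le)
            nlinarith [mul_le_mul_of_nonneg_left hu.2 (by positivity : (0:ℝ) ≤ 3*θ/2)]
        _ = Real.exp (3*θ*t/2) * ∫ u in Ioc (0:ℝ) t, u ^ α * Real.exp (-(θ/2*u)) :=
            integral_const_mul _ _
        _ ≤ Real.exp (3*θ*t/2) * G2 := by
            refine mul_le_mul_of_nonneg_left ?_ (Real.exp_pos _).le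
            exact setIntegral_mono_set hIf2 hf2nn_ae
              (HasSubset.Subset.eventuallyLE Ioc_subset_Ioi_self)
    calc Real.exp (-2*θ*t) * Kt ≤ Real.exp (-2*θ*t) * (Real.exp (3*θ*t/2) * G2) :=
          mul_le_mul_of_nonneg_left h1 (Real.exp_pos _).le
      _ = Real.exp (-θ*t/2) * G2 := by
          rw [← mul_assoc, ← Real.exp_add, show -2*θ*t + 3*θ*t/2 = -θ*t/2 by ring]
  have habs : |T + Real.exp (-2*θ*t) * Kt| = T + Real.exp (-2*θ*t) * Kt :=
    abs_of_nonneg (add_nonneg hT_nn (mul_nonneg (Real.exp_pos _).le hK_nn))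
  rw [habs]
  have hfinal : T + Real.exp (-2*θ*t) * Kt ≤ 2 * (Real.exp (-θ*t/2) * G2) := by linarith
  calc (T + Real.exp (-2*θ*t) * Kt) / θ ≤ 2 * (Real.exp (-θ*t/2) * G2) / θ := by
        gcongr
    _ = 2*G2/θ * Real.exp (-θ*t/2) := by ring
end

section
/- Let θ > 0, H ∈ (0,1), K ∈ (0,1]. For t > 0 define b_{H,K}(t) = e^{-2θt} ∫_0^t ∫_0^s (sr)^{2H-1}(s^{2H}+r^{2H})^{K-2} e^{θr} e^{θs} dr ds. Then there exists C > 0 such that b_{H,K}(t) ≤ C t^{2HK-2} for all t ≥ 1. -/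
open MeasureTheory Real Set

lemma aux_integrable (b θ t : ℝ) (hθ : 0 < θ) (hb : -1 < b) :
    IntegrableOn (fun r : ℝ => r ^ b * Real.exp (θ * r)) (Set.Ioc 0 t) := by
  rcases le_or_gt t 0 with ht | ht
  · simp [Set.Ioc_eq_empty_of_le ht, IntegrableOn]
  · have h1 : IntegrableOn (fun r : ℝ => r ^ b) (Set.Ioc 0 t) := by
      have := intervalIntegral.intervalIntegrable_rpow' (a := 0) (b := t) hb
      rwa [intervalIntegrable_iff, uIoc_of_le ht.le] at this
    refine Integrable.mono' (h1.const_mul (Real.exp (θ * t))) ?_ ?_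
    · apply Measurable.aestronglyMeasurable
      fun_prop
    · filter_upwards [ae_restrict_mem measurableSet_Ioc] with r hr
      have hr0 : 0 < r := hr.1
      rw [norm_mul, norm_of_nonneg (le_of_lt (Real.rpow_pos_of_pos hr0 b)),
        norm_of_nonneg (Real.exp_pos _).le]
      have : Real.exp (θ * r) ≤ Real.exp (θ * t) := by
        apply Real.exp_le_exp.mpr
        nlinarith [hr.2]
      nlinarith [Real.rpow_pos_of_pos hr0 b]

lemma exp_integral_Ioc (θ m t : ℝ) (hθ : 0 < θ) (hmt : m ≤ t) :
    ∫ r in Set.Ioc m t, Real.exp (θ * r) ≤ Real.exp (θ * t) / θ := by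
  have hderiv : ∀ x ∈ Set.uIcc m t, HasDerivAt (fun y => Real.exp (θ * y) / θ)
      (Real.exp (θ * x)) x := by
    intro x _
    have h1 : HasDerivAt (fun y : ℝ => θ * y) θ x := by simpa using (hasDerivAt_id x).const_mul θ
    have h2 := (h1.exp).div_const θ
    simpa [mul_comm, mul_div_assoc, mul_div_cancel_left₀ _ hθ.ne'] using h2
  have hcont : IntervalIntegrable (fun y => Real.exp (θ * y)) volume m t :=
    (Real.continuous_exp.comp (continuous_const.mul continuous_id)).intervalIntegrable m t
  have heq := intervalIntegral.integral_eq_sub_of_hasDerivAt hderiv hcont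
  rw [intervalIntegral.integral_of_le hmt] at heq
  rw [heq]
  have : 0 < Real.exp (θ * m) / θ := by positivity
  linarith

lemma rpow_integral_Ioc (b c : ℝ) (hb : -1 < b) (hc : 0 ≤ c) :
    ∫ r in Set.Ioc (0:ℝ) c, r ^ b = c ^ (b+1) / (b+1) := by
  have := integral_rpow (a := 0) (b := c) (Or.inl hb)
  rw [intervalIntegral.integral_of_le hc] at this
  rw [this, Real.zero_rpow (by linarith : b + 1 ≠ 0)]
  ring

lemma J_bound (θ a t : ℝ) (hθ : 0 < θ) (ha0 : 0 < a) (ha1 : a ≤ 1) (ht : 0 < t) :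
    (∫ r in Set.Ioc (0:ℝ) t, r ^ (a - 1) * Real.exp (θ * r))
      ≤ (2 / (a * θ) + 2 / θ) * (t ^ (a - 1) * Real.exp (θ * t)) := by
  have hint : IntegrableOn (fun r : ℝ => r ^ (a-1) * Real.exp (θ * r)) (Set.Ioc 0 t) :=
    aux_integrable (a-1) θ t hθ (by linarith)
  have hsplit : Set.Ioc (0:ℝ) t = Set.Ioc 0 (t/2) ∪ Set.Ioc (t/2) t := by
    rw [Set.Ioc_union_Ioc_eq_Ioc (by linarith) (by linarith)]
  have hdisj : Disjoint (Set.Ioc (0:ℝ) (t/2)) (Set.Ioc (t/2) t) := Set.Ioc_disjoint_Ioc_of_le le_rfl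
  have h1 : IntegrableOn (fun r : ℝ => r ^ (a-1) * Real.exp (θ * r)) (Set.Ioc 0 (t/2)) :=
    hint.mono_set (by rw [hsplit]; exact Set.subset_union_left)
  have h2 : IntegrableOn (fun r : ℝ => r ^ (a-1) * Real.exp (θ * r)) (Set.Ioc (t/2) t) :=
    hint.mono_set (by rw [hsplit]; exact Set.subset_union_right)
  have heq : (∫ r in Set.Ioc (0:ℝ) t, r ^ (a - 1) * Real.exp (θ * r))
      = (∫ r in Set.Ioc (0:ℝ) (t/2), r ^ (a - 1) * Real.exp (θ * r))
        + ∫ r in Set.Ioc (t/2) t, r ^ (a - 1) * Real.exp (θ * r) := by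
    rw [hsplit]; exact setIntegral_union hdisj measurableSet_Ioc h1 h2
  -- low part
  have hlow : (∫ r in Set.Ioc (0:ℝ) (t/2), r ^ (a - 1) * Real.exp (θ * r))
      ≤ (2 / (a * θ)) * (t ^ (a - 1) * Real.exp (θ * t)) := by
    have hb1 : IntegrableOn (fun r : ℝ => Real.exp (θ * (t/2)) * r ^ (a-1)) (Set.Ioc 0 (t/2)) := by
      have : IntegrableOn (fun r : ℝ => r ^ (a-1)) (Set.Ioc (0:ℝ) (t/2)) := by
        have := intervalIntegral.intervalIntegrable_rpow' (a := 0) (b := t/2)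
          (show -1 < a - 1 by linarith)
        rwa [intervalIntegrable_iff, uIoc_of_le (by linarith : (0:ℝ) ≤ t/2)] at this
      exact this.const_mul _
    have step1 : (∫ r in Set.Ioc (0:ℝ) (t/2), r ^ (a - 1) * Real.exp (θ * r))
        ≤ ∫ r in Set.Ioc (0:ℝ) (t/2), Real.exp (θ * (t/2)) * r ^ (a-1) := by
      apply setIntegral_mono_on h1 hb1 measurableSet_Ioc
      intro x hx
      have hx0 : 0 < x := hx.1
      have : Real.exp (θ * x) ≤ Real.exp (θ * (t/2)) := by
        apply Real.exp_le_exp.mpr; nlinarith [hx.2]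
      nlinarith [Real.rpow_pos_of_pos hx0 (a-1)]
    have step2 : (∫ r in Set.Ioc (0:ℝ) (t/2), Real.exp (θ * (t/2)) * r ^ (a-1))
        = Real.exp (θ * (t/2)) * ((t/2) ^ a / a) := by
      rw [integral_const_mul, rpow_integral_Ioc (a-1) (t/2) (by linarith) (by linarith)]
      norm_num
    -- numeric: e^{θt/2} (t/2)^a / a ≤ (2/(aθ)) t^{a-1} e^{θt}
    have step3 : Real.exp (θ * (t/2)) * ((t/2) ^ a / a)
        ≤ (2 / (a * θ)) * (t ^ (a - 1) * Real.exp (θ * t)) := by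
      have hpow : (t/2) ^ a ≤ t ^ a :=
        Real.rpow_le_rpow (by linarith) (by linarith) ha0.le
      have hta : t ^ a = t ^ (a-1) * t := by
        rw [← Real.rpow_add_one ht.ne']; ring_nf
      have hexp : t * Real.exp (θ * (t/2)) ≤ (2/θ) * Real.exp (θ * t) := by
        have hx : θ * (t/2) + 1 ≤ Real.exp (θ * (t/2)) := Real.add_one_le_exp _
        have he : Real.exp (θ * t) = Real.exp (θ * (t/2)) * Real.exp (θ * (t/2)) := by
          rw [← Real.exp_add]; ring_nf
        have hep : 0 < Real.exp (θ * (t/2)) := Real.exp_pos _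
        rw [he, div_mul_eq_mul_div, le_div_iff₀ hθ]
        nlinarith [mul_le_mul_of_nonneg_right hx hep.le]
      have hEt : 0 < Real.exp (θ * t) := Real.exp_pos _
      have hE2 : 0 < Real.exp (θ * (t/2)) := Real.exp_pos _
      have hta1 : 0 < t ^ (a-1) := Real.rpow_pos_of_pos ht _
      calc Real.exp (θ * (t/2)) * ((t/2) ^ a / a)
          ≤ Real.exp (θ * (t/2)) * (t ^ a / a) := by
            gcongr
        _ = (t ^ (a-1) * (t * Real.exp (θ * (t/2)))) / a := by rw [hta]; ring
        _ ≤ (t ^ (a-1) * ((2/θ) * Real.exp (θ * t))) / a := by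
            gcongr
        _ = (2 / (a * θ)) * (t ^ (a - 1) * Real.exp (θ * t)) := by
            field_simp
    linarith [step1, step2.le, step3]
  -- high part
  have hhigh : (∫ r in Set.Ioc (t/2) t, r ^ (a - 1) * Real.exp (θ * r))
      ≤ (2 / θ) * (t ^ (a - 1) * Real.exp (θ * t)) := by
    have hm : (0:ℝ) < t/2 := by linarith
    have hb2 : IntegrableOn (fun r : ℝ => (t/2) ^ (a-1) * Real.exp (θ * r)) (Set.Ioc (t/2) t) := by
      apply Integrable.const_mul
      exact ((Real.continuous_exp.comp (continuous_const.mul continuous_id)).integrableOn_Ioc)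
    have step1 : (∫ r in Set.Ioc (t/2) t, r ^ (a - 1) * Real.exp (θ * r))
        ≤ ∫ r in Set.Ioc (t/2) t, (t/2) ^ (a-1) * Real.exp (θ * r) := by
      apply setIntegral_mono_on h2 hb2 measurableSet_Ioc
      intro x hx
      have hx0 : 0 < x := lt_trans hm hx.1
      have hrp : x ^ (a-1) ≤ (t/2) ^ (a-1) :=
        Real.rpow_le_rpow_of_nonpos hm hx.1.le (by linarith)
      exact mul_le_mul_of_nonneg_right hrp (Real.exp_pos _).le
    have step2 : (∫ r in Set.Ioc (t/2) t, (t/2) ^ (a-1) * Real.exp (θ * r))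
        ≤ (t/2) ^ (a-1) * (Real.exp (θ * t) / θ) := by
      rw [integral_const_mul]
      exact mul_le_mul_of_nonneg_left (exp_integral_Ioc θ (t/2) t hθ (by linarith))
        (Real.rpow_pos_of_pos hm _).le
    have step3 : (t/2) ^ (a-1) * (Real.exp (θ * t) / θ)
        ≤ (2 / θ) * (t ^ (a - 1) * Real.exp (θ * t)) := by
      have h2a : (t/2) ^ (a-1) ≤ 2 * t ^ (a-1) := by
        have e1 : (t/2) ^ (a-1) = t ^ (a-1) * (2:ℝ) ^ (1-a) := by
          rw [div_eq_mul_inv, Real.mul_rpow ht.le (by positivity),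
            Real.inv_rpow (by norm_num : (0:ℝ) ≤ 2), ← Real.rpow_neg (by norm_num : (0:ℝ) ≤ 2)]
          norm_num
        rw [e1]
        have h21 : (2:ℝ) ^ (1-a) ≤ (2:ℝ) ^ (1:ℝ) :=
          Real.rpow_le_rpow_of_exponent_le (by norm_num) (by linarith)
        rw [Real.rpow_one] at h21
        have := Real.rpow_pos_of_pos ht (a-1)
        nlinarith
      have hEt : 0 < Real.exp (θ * t) := Real.exp_pos _
      calc (t/2) ^ (a-1) * (Real.exp (θ * t) / θ)
          ≤ (2 * t ^ (a-1)) * (Real.exp (θ * t) / θ) := by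
            apply mul_le_mul_of_nonneg_right h2a; positivity
        _ = (2 / θ) * (t ^ (a - 1) * Real.exp (θ * t)) := by field_simp
    linarith
  rw [heq]
  have : (2 / (a * θ) + 2 / θ) * (t ^ (a - 1) * Real.exp (θ * t))
      = (2 / (a * θ)) * (t ^ (a - 1) * Real.exp (θ * t))
        + (2 / θ) * (t ^ (a - 1) * Real.exp (θ * t)) := by ring
  linarith

lemma pointwise_bound (θ H K : ℝ) (hH0 : 0 < H) (hK1 : K ≤ 1) (s r : ℝ)
    (hr : 0 < r) (hrs : r ≤ s) :
    (s * r) ^ (2 * H - 1) * (s ^ (2 * H) + r ^ (2 * H)) ^ (K - 2) *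
      Real.exp (θ * r) * Real.exp (θ * s)
      ≤ (2:ℝ) ^ (K - 2) * (s ^ (H * K - 1) * Real.exp (θ * s))
          * (r ^ (H * K - 1) * Real.exp (θ * r)) := by
  have hs : 0 < s := lt_of_lt_of_le hr hrs
  have hsH : 0 < s ^ H := Real.rpow_pos_of_pos hs H
  have hrH : 0 < r ^ H := Real.rpow_pos_of_pos hr H
  -- s^{2H} = (s^H)^2 etc.
  have es : s ^ (2 * H) = s ^ H * s ^ H := by
    rw [← Real.rpow_add hs]; ring_nf
  have er : r ^ (2 * H) = r ^ H * r ^ H := by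
    rw [← Real.rpow_add hr]; ring_nf
  have hAM : 2 * (s ^ H * r ^ H) ≤ s ^ (2 * H) + r ^ (2 * H) := by
    rw [es, er]; nlinarith [sq_nonneg (s ^ H - r ^ H)]
  have hmid : (s ^ (2 * H) + r ^ (2 * H)) ^ (K - 2)
      ≤ (2:ℝ) ^ (K - 2) * (s ^ (H * (K - 2)) * r ^ (H * (K - 2))) := by
    have h1 : (s ^ (2 * H) + r ^ (2 * H)) ^ (K - 2) ≤ (2 * (s ^ H * r ^ H)) ^ (K - 2) :=
      Real.rpow_le_rpow_of_nonpos (by positivity) hAM (by linarith)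
    have h2 : (2 * (s ^ H * r ^ H)) ^ (K - 2)
        = (2:ℝ) ^ (K - 2) * (s ^ (H * (K - 2)) * r ^ (H * (K - 2))) := by
      rw [Real.mul_rpow (by norm_num) (by positivity),
        Real.mul_rpow hsH.le hrH.le, ← Real.rpow_mul hs.le, ← Real.rpow_mul hr.le]
    linarith [h1, h2.le, h2.ge]
  have hsr : (s * r) ^ (2 * H - 1) = s ^ (2 * H - 1) * r ^ (2 * H - 1) :=
    Real.mul_rpow hs.le hr.le
  have hcomb_s : s ^ (2 * H - 1) * s ^ (H * (K - 2)) = s ^ (H * K - 1) := by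
    rw [← Real.rpow_add hs]; ring_nf
  have hcomb_r : r ^ (2 * H - 1) * r ^ (H * (K - 2)) = r ^ (H * K - 1) := by
    rw [← Real.rpow_add hr]; ring_nf
  have hA : 0 < s ^ (2 * H - 1) * r ^ (2 * H - 1) := by positivity
  calc (s * r) ^ (2 * H - 1) * (s ^ (2 * H) + r ^ (2 * H)) ^ (K - 2) *
        Real.exp (θ * r) * Real.exp (θ * s)
      ≤ (s ^ (2 * H - 1) * r ^ (2 * H - 1)) *
          ((2:ℝ) ^ (K - 2) * (s ^ (H * (K - 2)) * r ^ (H * (K - 2)))) *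
          Real.exp (θ * r) * Real.exp (θ * s) := by
        rw [hsr]
        have := mul_le_mul_of_nonneg_left hmid hA.le
        have hE : 0 < Real.exp (θ * r) * Real.exp (θ * s) := by positivity
        nlinarith [Real.exp_pos (θ * r), Real.exp_pos (θ * s)]
    _ = (2:ℝ) ^ (K - 2) * (s ^ (H * K - 1) * Real.exp (θ * s))
          * (r ^ (H * K - 1) * Real.exp (θ * r)) := by
        rw [← hcomb_s, ← hcomb_r]; ring

/-- `b_{H,K}(t) = e^{-2θt} ∫_0^t ∫_0^s (sr)^{2H-1}(s^{2H}+r^{2H})^{K-2} e^{θr}e^{θs} dr ds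
 ≤ C t^{2HK-2}` for `t ≥ 1`. -/
theorem bHK_bound (θ H K : ℝ) (hθ : 0 < θ) (hH0 : 0 < H) (hH1 : H < 1)
    (hK0 : 0 < K) (hK1 : K ≤ 1) :
    ∃ C : ℝ, 0 < C ∧ ∀ t : ℝ, 1 ≤ t →
      Real.exp (-2 * θ * t) *
        (∫ s in Set.Ioc (0 : ℝ) t, ∫ r in Set.Ioc (0 : ℝ) s,
          (s * r) ^ (2 * H - 1) * (s ^ (2 * H) + r ^ (2 * H)) ^ (K - 2) *
            Real.exp (θ * r) * Real.exp (θ * s))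
        ≤ C * t ^ (2 * H * K - 2) := by
  have ha0 : 0 < H * K := mul_pos hH0 hK0
  have ha1 : H * K ≤ 1 := by nlinarith
  set C₁ : ℝ := 2 / (H * K * θ) + 2 / θ with hC₁
  have hC₁pos : 0 < C₁ := by positivity
  refine ⟨(2:ℝ) ^ (K - 2) * C₁ ^ 2, by positivity, ?_⟩
  intro t ht
  have ht0 : (0:ℝ) < t := lt_of_lt_of_le one_pos ht
  set u : ℝ → ℝ := fun r => r ^ (H * K - 1) * Real.exp (θ * r) with hu
  set J : ℝ := ∫ r in Set.Ioc (0:ℝ) t, u r with hJ_def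
  have huint : IntegrableOn u (Set.Ioc 0 t) := aux_integrable (H*K-1) θ t hθ (by linarith)
  have hu_nonneg : ∀ r ∈ Set.Ioc (0:ℝ) t, 0 ≤ u r := by
    intro r hr
    have hr0 : 0 < r := hr.1
    simp only [hu]
    positivity
  have hJ0 : 0 ≤ J := setIntegral_nonneg measurableSet_Ioc hu_nonneg
  have hJle : J ≤ C₁ * (t ^ (H*K-1) * Real.exp (θ * t)) := J_bound θ (H*K) t hθ ha0 ha1 ht0
  -- pointwise bound for the inner integral
  have houter : ∀ s ∈ Set.Ioc (0:ℝ) t,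
      (∫ r in Set.Ioc (0:ℝ) s, (s * r) ^ (2*H-1) * (s ^ (2*H) + r ^ (2*H)) ^ (K-2) *
        Real.exp (θ * r) * Real.exp (θ * s))
      ≤ ((2:ℝ) ^ (K-2) * J) * u s := by
    intro s hs
    have hs0 : 0 < s := hs.1
    have huints : IntegrableOn u (Set.Ioc 0 s) :=
      huint.mono_set (Set.Ioc_subset_Ioc_right hs.2)
    have step1 : (∫ r in Set.Ioc (0:ℝ) s, (s * r) ^ (2*H-1) * (s ^ (2*H) + r ^ (2*H)) ^ (K-2) *
          Real.exp (θ * r) * Real.exp (θ * s))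
        ≤ ∫ r in Set.Ioc (0:ℝ) s,
            ((2:ℝ) ^ (K-2) * (s ^ (H*K-1) * Real.exp (θ*s))) * u r := by
      refine integral_mono_of_nonneg ?_ (huints.const_mul _) ?_
      · filter_upwards [ae_restrict_mem measurableSet_Ioc] with r hr
        have hr0 : 0 < r := hr.1
        have hsr : 0 < s * r := by positivity
        positivity
      · filter_upwards [ae_restrict_mem measurableSet_Ioc] with r hr
        have := pointwise_bound θ H K hH0 hK1 s r hr.1 hr.2
        simpa [hu, mul_assoc] using this
    have step2 : (∫ r in Set.Ioc (0:ℝ) s,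
          ((2:ℝ) ^ (K-2) * (s ^ (H*K-1) * Real.exp (θ*s))) * u r)
        = ((2:ℝ) ^ (K-2) * (s ^ (H*K-1) * Real.exp (θ*s))) * ∫ r in Set.Ioc (0:ℝ) s, u r := by
      rw [integral_const_mul]
    have step3 : (∫ r in Set.Ioc (0:ℝ) s, u r) ≤ J := by
      refine setIntegral_mono_set huint ?_ (HasSubset.Subset.eventuallyLE
        (Set.Ioc_subset_Ioc_right hs.2))
      filter_upwards [ae_restrict_mem measurableSet_Ioc] with r hr using hu_nonneg r hr
    have hconst : 0 ≤ (2:ℝ) ^ (K-2) * (s ^ (H*K-1) * Real.exp (θ*s)) := by positivity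
    calc (∫ r in Set.Ioc (0:ℝ) s, (s * r) ^ (2*H-1) * (s ^ (2*H) + r ^ (2*H)) ^ (K-2) *
          Real.exp (θ * r) * Real.exp (θ * s))
        ≤ ((2:ℝ) ^ (K-2) * (s ^ (H*K-1) * Real.exp (θ*s))) * ∫ r in Set.Ioc (0:ℝ) s, u r := by
          rw [← step2]; exact step1
      _ ≤ ((2:ℝ) ^ (K-2) * (s ^ (H*K-1) * Real.exp (θ*s))) * J :=
          mul_le_mul_of_nonneg_left step3 hconst
      _ = ((2:ℝ) ^ (K-2) * J) * u s := by simp only [hu]; ring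
  -- integrate the outer bound
  have hfinal : (∫ s in Set.Ioc (0 : ℝ) t, ∫ r in Set.Ioc (0 : ℝ) s,
        (s * r) ^ (2 * H - 1) * (s ^ (2 * H) + r ^ (2 * H)) ^ (K - 2) *
          Real.exp (θ * r) * Real.exp (θ * s))
      ≤ ((2:ℝ) ^ (K-2) * J) * J := by
    have h1 : (∫ s in Set.Ioc (0 : ℝ) t, ∫ r in Set.Ioc (0 : ℝ) s,
          (s * r) ^ (2 * H - 1) * (s ^ (2 * H) + r ^ (2 * H)) ^ (K - 2) *
            Real.exp (θ * r) * Real.exp (θ * s))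
        ≤ ∫ s in Set.Ioc (0 : ℝ) t, ((2:ℝ) ^ (K-2) * J) * u s := by
      refine integral_mono_of_nonneg ?_ (huint.const_mul _) ?_
      · filter_upwards [ae_restrict_mem measurableSet_Ioc] with s hs
        refine setIntegral_nonneg measurableSet_Ioc ?_
        intro r hr
        have hr0 : 0 < r := hr.1
        have hs0 : 0 < s := hs.1
        have hsr : 0 < s * r := by positivity
        positivity
      · filter_upwards [ae_restrict_mem measurableSet_Ioc] with s hs using houter s hs
    rw [integral_const_mul] at h1
    exact h1
  -- conclude
  have hsq : J * J ≤ (C₁ * (t ^ (H*K-1) * Real.exp (θ * t))) ^ 2 := by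
    rw [sq]
    exact mul_le_mul hJle hJle hJ0 (by positivity)
  have hX : (C₁ * (t ^ (H*K-1) * Real.exp (θ * t))) ^ 2
      = C₁ ^ 2 * (t ^ (2*H*K-2) * Real.exp (2 * θ * t)) := by
    have h1 : t ^ (H*K-1) * t ^ (H*K-1) = t ^ (2*H*K-2) := by
      rw [← Real.rpow_add ht0]; ring_nf
    have h2 : Real.exp (θ*t) * Real.exp (θ*t) = Real.exp (2*θ*t) := by
      rw [← Real.exp_add]; ring_nf
    rw [mul_pow, mul_pow, sq, sq, sq, h2]
    rw [show t ^ (H*K-1) * t ^ (H*K-1) * (Real.exp (2*θ*t)) = t ^ (2*H*K-2) * Real.exp (2*θ*t)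
      from by rw [h1]]
  calc Real.exp (-2 * θ * t) *
        (∫ s in Set.Ioc (0 : ℝ) t, ∫ r in Set.Ioc (0 : ℝ) s,
          (s * r) ^ (2 * H - 1) * (s ^ (2 * H) + r ^ (2 * H)) ^ (K - 2) *
            Real.exp (θ * r) * Real.exp (θ * s))
      ≤ Real.exp (-2 * θ * t) * (((2:ℝ) ^ (K-2) * J) * J) :=
        mul_le_mul_of_nonneg_left hfinal (Real.exp_pos _).le
    _ ≤ Real.exp (-2 * θ * t) * ((2:ℝ) ^ (K-2) *
          (C₁ ^ 2 * (t ^ (2*H*K-2) * Real.exp (2 * θ * t)))) := by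
        rw [← hX]
        have : ((2:ℝ) ^ (K-2) * J) * J = (2:ℝ) ^ (K-2) * (J * J) := by ring
        rw [this]
        exact mul_le_mul_of_nonneg_left (mul_le_mul_of_nonneg_left hsq (by positivity))
          (Real.exp_pos _).le
    _ = (2:ℝ) ^ (K - 2) * C₁ ^ 2 * t ^ (2 * H * K - 2) := by
        rw [show Real.exp (-2*θ*t) * ((2:ℝ)^(K-2) * (C₁^2 * (t ^ (2*H*K-2) * Real.exp (2*θ*t))))
          = (2:ℝ)^(K-2) * C₁^2 * t ^ (2*H*K-2) * (Real.exp (-2*θ*t) * Real.exp (2*θ*t))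
          from by ring]
        rw [← Real.exp_add]
        norm_num
end

section
/- Let X be the bifractional Ornstein–Uhlenbeck process X_t = e^{-θt}∫_0^t e^{θs} dB_s^{H,K} with θ > 0, H ∈ (0,1), K ∈ (0,1], and set f_{H,K}(θ) = 2^{1-K} H K Γ(2HK)/θ^{2HK}. Then there exists C > 0 such that |E[X_t²] − f_{H,K}(θ)| ≤ C t^{2HK-2} for all t ≥ 1. -/
open MeasureTheory Real Set

lemma contRpow {c : ℝ} (hc : 0 < c) : Continuous fun x : ℝ => x ^ c := by
  rw [continuous_iff_continuousAt]
  intro x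
  exact Real.continuousAt_rpow_const x c (Or.inr hc.le)

lemma pow_mul_exp_neg_le {c : ℝ} (hc : 0 < c) (n : ℕ) {x : ℝ} (hx : 0 ≤ x) :
    x ^ n * Real.exp (-(c * x)) ≤ n.factorial / c ^ n := by
  have hfac : (0:ℝ) < n.factorial := by positivity
  have h1 : (c * x) ^ n / n.factorial ≤ Real.exp (c * x) := by
    refine le_trans ?_ (Real.sum_le_exp_of_nonneg (by positivity : (0:ℝ) ≤ c * x) (n + 1))
    exact Finset.single_le_sum (f := fun i => (c*x)^i / i.factorial)
      (fun i _ => by positivity) (Finset.self_mem_range_succ n)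
  have h2 : (c*x)^n ≤ Real.exp (c*x) * n.factorial := by
    rw [div_le_iff₀ hfac] at h1; exact h1
  have h3 : x^n = (c*x)^n / c^n := by rw [mul_pow]; field_simp
  calc x^n * Real.exp (-(c*x)) = (c*x)^n * Real.exp (-(c*x)) / c^n := by rw [h3]; ring
    _ ≤ (Real.exp (c*x) * n.factorial) * Real.exp (-(c*x)) / c^n := by
        gcongr
    _ = n.factorial / c^n := by
        rw [Real.exp_neg]
        field_simp
lemma rpow_mul_exp_le {c : ℝ} (hc : 0 < c) {q t : ℝ} (hq : q ≤ 3) (ht : 1 ≤ t) :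
    t ^ q * Real.exp (-(c * t)) ≤ 6 / c ^ 3 := by
  have h0 : (0:ℝ) < t := by linarith
  have h1 : t ^ q ≤ t ^ (3:ℝ) := Real.rpow_le_rpow_of_exponent_le ht hq
  have h2 : t ^ (3:ℝ) = t ^ (3:ℕ) := by
    rw [← Real.rpow_natCast]; norm_num
  calc t ^ q * Real.exp (-(c*t)) ≤ t ^ (3:ℕ) * Real.exp (-(c*t)) := by
        rw [← h2]; gcongr
    _ ≤ (3:ℕ).factorial / c ^ 3 := pow_mul_exp_neg_le hc 3 h0.le
    _ = 6 / c ^ 3 := by norm_num [Nat.factorial]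

lemma gammaIntegrable {a c : ℝ} (ha : 0 < a) (hc : 0 < c) :
    IntegrableOn (fun v : ℝ => Real.exp (-(c*v)) * v ^ a) (Ioi (0:ℝ)) := by
  have h := integrableOn_rpow_mul_exp_neg_mul_rpow (s := a) (p := 1) (b := c)
    (by linarith) one_pos hc
  refine h.congr_fun (fun x hx => ?_) measurableSet_Ioi
  simp only [Real.rpow_one]
  ring_nf

lemma gammaIntegral {a c : ℝ} (ha : 0 < a) (hc : 0 < c) :
    ∫ v in Ioi (0:ℝ), Real.exp (-(c*v)) * v ^ a = Real.Gamma (a+1) / c ^ (a+1) := by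
  have h := integral_rpow_mul_exp_neg_mul_rpow (p := 1) (q := a) (b := c)
    one_pos (by linarith) hc
  have h2 : (∫ v in Ioi (0:ℝ), Real.exp (-(c*v)) * v ^ a)
      = ∫ x in Ioi (0:ℝ), x ^ a * Real.exp (-c * x ^ (1:ℝ)) := by
    refine setIntegral_congr_fun measurableSet_Ioi (fun x hx => ?_)
    rw [Real.rpow_one]
    ring_nf
  rw [h2, h]
  simp only [div_one, one_mul, mul_one, Real.rpow_neg hc.le]
  rw [inv_mul_eq_div]

lemma integral_exp_neg_mul_Ioi {c : ℝ} (hc : 0 < c) (t : ℝ) :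
    ∫ v in Ioi t, Real.exp (-(c*v)) = c⁻¹ * Real.exp (-(c*t)) := by
  have h := integral_comp_mul_left_Ioi (fun x => Real.exp (-x)) t hc
  rw [integral_exp_neg_Ioi] at h
  simpa [smul_eq_mul] using h

lemma gamma_trunc_err {a c : ℝ} (ha0 : 0 < a) (ha3 : a ≤ 3) (hc : 0 < c) :
    ∃ C : ℝ, 0 < C ∧ ∀ t : ℝ, 1 ≤ t →
      |Real.Gamma (a+1)/c^(a+1) - ∫ v in Ioc (0:ℝ) t, Real.exp (-(c*v)) * v ^ a|
        ≤ C * Real.exp (-(c/2*t)) := by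
  refine ⟨(6/(c/2)^3) * (c/2)⁻¹, by positivity, fun t ht => ?_⟩
  have ht0 : (0:ℝ) < t := by linarith
  have hint : IntegrableOn (fun v : ℝ => Real.exp (-(c*v)) * v ^ a) (Ioi (0:ℝ)) :=
    gammaIntegrable ha0 hc
  have hu : Ioc (0:ℝ) t ∪ Ioi t = Ioi 0 := Ioc_union_Ioi_eq_Ioi ht0.le
  have hsplit : (∫ v in Ioi (0:ℝ), Real.exp (-(c*v)) * v ^ a)
      = (∫ v in Ioc (0:ℝ) t, Real.exp (-(c*v)) * v ^ a)
        + ∫ v in Ioi t, Real.exp (-(c*v)) * v ^ a := by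
    rw [← setIntegral_union Ioc_disjoint_Ioi_same measurableSet_Ioi
      (hint.mono_set (by rw [← hu]; exact subset_union_left))
      (hint.mono_set (by rw [← hu]; exact subset_union_right)), hu]
  rw [← gammaIntegral ha0 hc, hsplit]
  have htail0 : 0 ≤ ∫ v in Ioi t, Real.exp (-(c*v)) * v ^ a :=
    setIntegral_nonneg measurableSet_Ioi (fun v hv => by have h1 : (0:ℝ) < v := lt_trans ht0 hv; positivity)
  rw [add_sub_cancel_left, abs_of_nonneg htail0]
  have hbd : ∀ v ∈ Ioi t, Real.exp (-(c*v)) * v ^ a ≤ (6/(c/2)^3) * Real.exp (-(c/2*v)) := by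
    intro v hv
    have hv1 : (1:ℝ) ≤ v := le_trans ht (le_of_lt hv)
    have key : v ^ a * Real.exp (-(c/2*v)) ≤ 6/(c/2)^3 :=
      rpow_mul_exp_le (by positivity) ha3 hv1
    have hsplitexp : Real.exp (-(c*v)) = Real.exp (-(c/2*v)) * Real.exp (-(c/2*v)) := by
      rw [← Real.exp_add]; ring_nf
    rw [hsplitexp]
    calc Real.exp (-(c/2*v)) * Real.exp (-(c/2*v)) * v ^ a
        = (v ^ a * Real.exp (-(c/2*v))) * Real.exp (-(c/2*v)) := by ring
      _ ≤ (6/(c/2)^3) * Real.exp (-(c/2*v)) := by gcongr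
  have hintexp : IntegrableOn (fun v : ℝ => (6/(c/2)^3) * Real.exp (-(c/2*v))) (Ioi t) := by
    have h1 := (exp_neg_integrableOn_Ioi t (by positivity : (0:ℝ) < c/2)).const_mul (6/(c/2)^3)
    have h2 : (fun x : ℝ => (6/(c/2)^3) * Real.exp (-(c/2)*x))
        = fun v : ℝ => (6/(c/2)^3) * Real.exp (-(c/2*v)) := by
      funext x; congr 1; ring_nf
    rwa [h2] at h1
  calc (∫ v in Ioi t, Real.exp (-(c*v)) * v ^ a)
      ≤ ∫ v in Ioi t, (6/(c/2)^3) * Real.exp (-(c/2*v)) := by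
        refine setIntegral_mono_on (hint.mono_set (by rw [← hu]; exact subset_union_right))
          hintexp measurableSet_Ioi hbd
    _ = (6/(c/2)^3) * ((c/2)⁻¹ * Real.exp (-(c/2*t))) := by
        rw [integral_const_mul, integral_exp_neg_mul_Ioi (by positivity)]
    _ = (6/(c/2)^3) * (c/2)⁻¹ * Real.exp (-(c/2*t)) := by ring

lemma core_bound {K : ℝ} (hK0 : 0 < K) (hK1 : K ≤ 1) {S V T : ℝ}
    (hS : 0 < S) (hST : S ≤ T) (hV : 0 < V) (hVT : V ≤ T) :
    0 ≤ (S+T)^K + (T+V)^K - (S+V)^K - (T+T)^K ∧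
    (S+T)^K + (T+V)^K - (S+V)^K - (T+T)^K ≤
      4*(1-K)*2^(K-2)/K * ((T^(K/2) - S^(K/2)) * (T^(K/2) - V^(K/2))) := by
  have hT : 0 < T := lt_of_lt_of_le hS hST
  -- derivative of x ↦ (x+V)^K - (x+T)^K
  have hderiv : ∀ x ∈ uIcc S T,
      HasDerivAt (fun x => (x+V)^K - (x+T)^K)
        (K*(x+V)^(K-1) - K*(x+T)^(K-1)) x := by
    intro x hx
    rw [uIcc_of_le hST] at hx
    have hxpos : 0 < x := lt_of_lt_of_le hS hx.1
    have h1 := (hasDerivAt_id x |>.add_const V).rpow_const (p := K) (Or.inl (by positivity))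
    have h2 := (hasDerivAt_id x |>.add_const T).rpow_const (p := K) (Or.inl (by positivity))
    have h3 := h1.sub h2
    refine HasDerivAt.congr_deriv h3 (Eq.symm ?_)
    simp only [id_eq]
    ring
  have hcontm : ContinuousOn (fun x => K*(x+V)^(K-1) - K*(x+T)^(K-1)) (uIcc S T) := by
    rw [uIcc_of_le hST]
    have c1 : ContinuousOn (fun x : ℝ => (x+V)^(K-1)) (Icc S T) := by
      refine (continuousOn_id.add continuousOn_const).rpow_const (fun x hx => Or.inl ?_)
      have : 0 < x := lt_of_lt_of_le hS hx.1
      show x + V ≠ 0; positivity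
    have c2 : ContinuousOn (fun x : ℝ => (x+T)^(K-1)) (Icc S T) := by
      refine (continuousOn_id.add continuousOn_const).rpow_const (fun x hx => Or.inl ?_)
      have : 0 < x := lt_of_lt_of_le hS hx.1
      show x + T ≠ 0; positivity
    exact (c1.const_smul K).sub (c2.const_smul K)
  have hII : IntervalIntegrable (fun x => K*(x+V)^(K-1) - K*(x+T)^(K-1)) volume S T :=
    hcontm.intervalIntegrable
  have hM : (S+T)^K + (T+V)^K - (S+V)^K - (T+T)^K
      = ∫ x in S..T, (K*(x+V)^(K-1) - K*(x+T)^(K-1)) := by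
    rw [intervalIntegral.integral_eq_sub_of_hasDerivAt hderiv hII]
    ring
  constructor
  · rw [hM]
    refine intervalIntegral.integral_nonneg hST (fun x hx => ?_)
    have hxpos : 0 < x := lt_of_lt_of_le hS hx.1
    have : (x+T)^(K-1) ≤ (x+V)^(K-1) :=
      Real.rpow_le_rpow_of_nonpos (by positivity) (by linarith) (by linarith)
    nlinarith
  · rw [hM]
    -- pointwise bound on the derivative
    have hptw : ∀ x ∈ Icc S T,
        K*(x+V)^(K-1) - K*(x+T)^(K-1)
          ≤ K*(1-K)*2^(K-2)*(2/K)*(T^(K/2) - V^(K/2)) * x^((K-2)/2) := by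
      intro x hx
      have hxpos : 0 < x := lt_of_lt_of_le hS hx.1
      -- FTC in y
      have hderiv2 : ∀ y ∈ uIcc V T,
          HasDerivAt (fun y => -(K*(x+y)^(K-1))) (K*(1-K)*(x+y)^(K-2)) y := by
        intro y hy
        rw [uIcc_of_le hVT] at hy
        have hypos : 0 < y := lt_of_lt_of_le hV hy.1
        have h1 := ((hasDerivAt_id y).const_add x).rpow_const (p := K-1) (Or.inl (by positivity))
        have h2 := (h1.const_mul K).neg
        refine HasDerivAt.congr_deriv h2 (Eq.symm ?_)
        simp only [id_eq]
        rw [show K - 1 - 1 = K - 2 by ring]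
        ring
      have hcont2 : ContinuousOn (fun y => K*(1-K)*(x+y)^(K-2)) (uIcc V T) := by
        rw [uIcc_of_le hVT]
        refine ContinuousOn.const_smul ?_ (K*(1-K))
        refine (continuousOn_const.add continuousOn_id).rpow_const (fun y hy => Or.inl ?_)
        have : 0 < y := lt_of_lt_of_le hV hy.1
        show x + y ≠ 0; positivity
      have heq2 : K*(x+V)^(K-1) - K*(x+T)^(K-1)
          = ∫ y in V..T, K*(1-K)*(x+y)^(K-2) := by
        rw [intervalIntegral.integral_eq_sub_of_hasDerivAt hderiv2 hcont2.intervalIntegrable]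
        ring
      rw [heq2]
      have hptw2 : ∀ y ∈ Icc V T,
          K*(1-K)*(x+y)^(K-2) ≤ K*(1-K)*2^(K-2) * (x^((K-2)/2) * y^((K-2)/2)) := by
        intro y hy
        have hypos : 0 < y := lt_of_lt_of_le hV hy.1
        have hK2 : K - 2 ≤ 0 := by linarith
        have hsq : 2 * (Real.sqrt x * Real.sqrt y) ≤ x + y := by
          nlinarith [sq_nonneg (Real.sqrt x - Real.sqrt y), Real.sq_sqrt hxpos.le,
            Real.sq_sqrt hypos.le]
        have hsqpos : 0 < 2 * (Real.sqrt x * Real.sqrt y) := by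
          have := Real.sqrt_pos.mpr hxpos
          have := Real.sqrt_pos.mpr hypos
          positivity
        have h5 : (x+y)^(K-2) ≤ (2 * (Real.sqrt x * Real.sqrt y))^(K-2) :=
          Real.rpow_le_rpow_of_nonpos hsqpos hsq hK2
        have h6 : (2 * (Real.sqrt x * Real.sqrt y))^(K-2)
            = 2^(K-2) * (x^((K-2)/2) * y^((K-2)/2)) := by
          rw [Real.mul_rpow (by norm_num) (by positivity),
            Real.mul_rpow (Real.sqrt_nonneg x) (Real.sqrt_nonneg y),
            Real.sqrt_eq_rpow, Real.sqrt_eq_rpow,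
            ← Real.rpow_mul hxpos.le, ← Real.rpow_mul hypos.le]
          rw [show (1:ℝ)/2 * (K-2) = (K-2)/2 by ring]
        have hKK : 0 ≤ K * (1-K) := by nlinarith
        calc K*(1-K)*(x+y)^(K-2) ≤ K*(1-K)*(2^(K-2) * (x^((K-2)/2) * y^((K-2)/2))) := by
              exact mul_le_mul_of_nonneg_left (h5.trans_eq h6) hKK
          _ = K*(1-K)*2^(K-2) * (x^((K-2)/2) * y^((K-2)/2)) := by ring
      have hrint : ∫ y in V..T, y^((K-2)/2) = (T^(K/2) - V^(K/2))/(K/2) := by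
        rw [integral_rpow (Or.inl (by linarith : (-1:ℝ) < (K-2)/2))]
        rw [show (K-2)/2 + 1 = K/2 by ring]
      have hcy : ContinuousOn (fun y : ℝ => y ^ ((K-2)/2)) (Icc V T) := fun y hy =>
        (Real.continuousAt_rpow_const y _
          (Or.inl (ne_of_gt (lt_of_lt_of_le hV hy.1)))).continuousWithinAt
      set c3 : ℝ := K*(1-K)*2^(K-2) * x^((K-2)/2) with hc3
      have hcont3 : ContinuousOn (fun y : ℝ => c3 * y ^ ((K-2)/2)) (Icc V T) :=
        continuousOn_const.mul hcy
      have hII3 : IntervalIntegrable (fun y : ℝ => c3 * y ^ ((K-2)/2)) volume V T := by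
        rw [intervalIntegrable_iff_integrableOn_Icc_of_le hVT]
        exact hcont3.integrableOn_compact isCompact_Icc
      have hII2 : IntervalIntegrable (fun y => K*(1-K)*(x+y)^(K-2)) volume V T :=
        hcont2.intervalIntegrable
      calc (∫ y in V..T, K*(1-K)*(x+y)^(K-2))
          ≤ ∫ y in V..T, c3 * y ^ ((K-2)/2) := by
            refine intervalIntegral.integral_mono_on hVT hII2 hII3 (fun y hy => ?_)
            calc K*(1-K)*(x+y)^(K-2)
                ≤ K*(1-K)*2^(K-2) * (x^((K-2)/2) * y^((K-2)/2)) := hptw2 y hy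
              _ = c3 * y ^ ((K-2)/2) := by rw [hc3]; ring
        _ = c3 * ((T^(K/2) - V^(K/2))/(K/2)) := by
            rw [intervalIntegral.integral_const_mul, hrint]
        _ = K*(1-K)*2^(K-2)*(2/K)*(T^(K/2) - V^(K/2)) * x^((K-2)/2) := by
            rw [hc3]; field_simp
    -- outer integral bound
    have hcx : ContinuousOn (fun x : ℝ => x ^ ((K-2)/2)) (Icc S T) := fun x hx =>
      (Real.continuousAt_rpow_const x _
        (Or.inl (ne_of_gt (lt_of_lt_of_le hS hx.1)))).continuousWithinAt
    set c4 : ℝ := K*(1-K)*2^(K-2)*(2/K)*(T^(K/2) - V^(K/2)) with hc4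
    have hII4 : IntervalIntegrable (fun x : ℝ => c4 * x ^ ((K-2)/2)) volume S T := by
      rw [intervalIntegrable_iff_integrableOn_Icc_of_le hST]
      exact (continuousOn_const.mul hcx).integrableOn_compact isCompact_Icc
    have hrint2 : ∫ x in S..T, x^((K-2)/2) = (T^(K/2) - S^(K/2))/(K/2) := by
      rw [integral_rpow (Or.inl (by linarith : (-1:ℝ) < (K-2)/2))]
      rw [show (K-2)/2 + 1 = K/2 by ring]
    calc (∫ x in S..T, (K*(x+V)^(K-1) - K*(x+T)^(K-1)))
        ≤ ∫ x in S..T, c4 * x ^ ((K-2)/2) := by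
          refine intervalIntegral.integral_mono_on hST hII hII4 (fun x hx => ?_)
          exact hptw x hx
      _ = c4 * ((T^(K/2) - S^(K/2))/(K/2)) := by
          rw [intervalIntegral.integral_const_mul, hrint2]
      _ = 4*(1-K)*2^(K-2)/K * ((T^(K/2) - S^(K/2)) * (T^(K/2) - V^(K/2))) := by
          rw [hc4]; field_simp; ring

noncomputable def Pbif (H K s u : ℝ) : ℝ := 2^(-K) * (s^(2*H) + u^(2*H))^K

lemma Pbif_symm (H K s u : ℝ) : Pbif H K s u = Pbif H K u s := by
  unfold Pbif; rw [add_comm]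

lemma Pbif_nonneg {H K : ℝ} {s u : ℝ} (hs : 0 ≤ s) (hu : 0 ≤ u) : 0 ≤ Pbif H K s u := by
  unfold Pbif
  have h1 : (0:ℝ) ≤ (2:ℝ)^(-K) := Real.rpow_nonneg (by norm_num) _
  have h2 : (0:ℝ) ≤ (s^(2*H) + u^(2*H))^K :=
    Real.rpow_nonneg (by positivity) _
  positivity

lemma Pbif_diag {H K t : ℝ} (hH : 0 < H) (ht : 0 ≤ t) (hK : 0 < K) :
    Pbif H K t t = t^(2*H*K) := by
  unfold Pbif
  have h1 : t^(2*H) + t^(2*H) = 2 * t^(2*H) := by ring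
  rw [h1, Real.mul_rpow (by norm_num) (Real.rpow_nonneg ht _),
    ← Real.rpow_mul ht, ← mul_assoc, ← Real.rpow_add (by norm_num : (0:ℝ) < 2)]
  norm_num

lemma Pbif_cont {H K : ℝ} (hH : 0 < H) (hK : 0 < K) :
    Continuous fun p : ℝ × ℝ => Pbif H K p.1 p.2 := by
  unfold Pbif
  have h1 : Continuous fun p : ℝ × ℝ => p.1^(2*H) + p.2^(2*H) :=
    ((contRpow (by positivity)).comp continuous_fst).add
      ((contRpow (by positivity)).comp continuous_snd)
  exact continuous_const.mul ((contRpow hK).comp h1)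

lemma Pbif_mono {H K : ℝ} (hH : 0 < H) (hK : 0 < K) {u t : ℝ} (hu : 0 ≤ u) (hut : u ≤ t) :
    Pbif H K u t ≤ Pbif H K t t := by
  unfold Pbif
  have h1 : (0:ℝ) ≤ (2:ℝ)^(-K) := Real.rpow_nonneg (by norm_num) _
  refine mul_le_mul_of_nonneg_left ?_ h1
  have h2 : (0:ℝ) ≤ u ^ (2*H) := Real.rpow_nonneg hu _
  have h3 : (0:ℝ) ≤ t ^ (2*H) := Real.rpow_nonneg (le_trans hu hut) _
  refine Real.rpow_le_rpow (by positivity) ?_ hK.le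
  have : u^(2*H) ≤ t^(2*H) := Real.rpow_le_rpow hu hut (by positivity)
  linarith

-- ∫_0^t e^{θs} ds
lemma exp_integral {θ : ℝ} (hθ : 0 < θ) (t : ℝ) :
    ∫ s in (0:ℝ)..t, Real.exp (θ*s) = (Real.exp (θ*t) - 1)/θ := by
  have h := intervalIntegral.integral_comp_mul_left (a := (0:ℝ)) (b := t)
    (fun x => Real.exp x) hθ.ne'
  rw [integral_exp] at h
  rw [h]
  rw [mul_zero, Real.exp_zero, smul_eq_mul]
  field_simp

lemma exp_integral_Ioc_s15 {θ : ℝ} (hθ : 0 < θ) {t : ℝ} (ht : 0 ≤ t) :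
    ∫ s in Ioc (0:ℝ) t, Real.exp (θ*s) = (Real.exp (θ*t) - 1)/θ := by
  rw [← intervalIntegral.integral_of_le ht, exp_integral hθ]

lemma rpow_diff_le {b s t : ℝ} (hb0 : 0 < b) (hb1 : b ≤ 1) (hs : 0 ≤ s) (hst : s ≤ t)
    (ht : 0 < t) : t^b - s^b ≤ (t - s) * t^(b-1) := by
  have htb : t^b = t * t^(b-1) := by
    rw [← Real.rpow_one_add' ht.le (by intro h; nlinarith)]
    ring_nf
  rcases eq_or_lt_of_le hs with h0 | h0
  · rw [← h0, Real.zero_rpow hb0.ne', htb]; nlinarith [Real.rpow_nonneg ht.le (b-1)]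
  · have h1 : s^(b-1) ≥ t^(b-1) :=
      Real.rpow_le_rpow_of_nonpos h0 hst (by linarith)
    have h2 : s^b = s * s^(b-1) := by
      rw [← Real.rpow_one_add' hs (by intro h; nlinarith)]
      ring_nf
    have h3 : s * t^(b-1) ≤ s * s^(b-1) := by
      exact mul_le_mul_of_nonneg_left h1 h0.le
    rw [htb, h2]
    nlinarith
lemma exp_lin_int {θ : ℝ} (hθ : 0 < θ) {t : ℝ} (ht : 0 ≤ t) :
    ∫ s in (0:ℝ)..t, Real.exp (θ*s) * (t - s) ≤ Real.exp (θ*t)/θ^2 := by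
  have hderiv : ∀ s ∈ uIcc (0:ℝ) t,
      HasDerivAt (fun s => (Real.exp (θ*s)*(θ*(t-s)+1))/θ^2) (Real.exp (θ*s) * (t - s)) s := by
    intro s hs
    have h1 : HasDerivAt (fun s : ℝ => Real.exp (θ*s)) (Real.exp (θ*s) * θ) s := by
      simpa using ((hasDerivAt_id s).const_mul θ).exp
    have h2 : HasDerivAt (fun s : ℝ => θ*(t-s)+1) (-θ) s := by
      have h := ((hasDerivAt_id s).const_mul θ).const_sub (θ*t+1)
      have heq : (fun s : ℝ => θ*(t-s)+1) =ᶠ[nhds s] (fun x : ℝ => θ*t+1 - θ*(id x)) :=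
        Filter.Eventually.of_forall (fun y => by simp [id_eq]; ring)
      have h2' := h.congr_of_eventuallyEq heq
      simpa using h2'
    have h3 := (h1.mul h2).div_const (θ^2)
    refine HasDerivAt.congr_deriv h3 (Eq.symm ?_)
    field_simp
    ring
  have hcont : Continuous fun s : ℝ => Real.exp (θ*s) * (t - s) :=
    ((continuous_const.mul continuous_id).rexp).mul (continuous_const.sub continuous_id)
  rw [intervalIntegral.integral_eq_sub_of_hasDerivAt hderiv (hcont.intervalIntegrable 0 t)]
  have h4 : 0 ≤ θ*t + 1 := by positivity
  simp only [mul_zero, Real.exp_zero, sub_zero, one_mul]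
  rw [div_sub_div_same, div_le_div_iff₀ (by positivity) (by positivity)]
  have h5 : Real.exp (θ*t)*(θ*(t-t)+1) = Real.exp (θ*t) := by ring_nf
  rw [h5]
  nlinarith [Real.exp_pos (θ*t)]

lemma PDelta_bound {H K : ℝ} (hH0 : 0 < H) (hH1 : H < 1) (hK0 : 0 < K) (hK1 : K ≤ 1)
    {s t u : ℝ} (hs : 0 < s) (hst : s ≤ t) (hu : 0 < u) (hut : u ≤ t) :
    |Pbif H K t t - Pbif H K s t - Pbif H K t u + Pbif H K s u|
      ≤ (2^(-K)*(4*(1-K)*2^(K-2)/K)) * ((t^(H*K) - s^(H*K)) * (t^(H*K) - u^(H*K))) := by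
  have ht0 : 0 < t := lt_of_lt_of_le hs hst
  set S := s^(2*H) with hSd
  set V := u^(2*H) with hVd
  set T := t^(2*H) with hTd
  have hS : 0 < S := Real.rpow_pos_of_pos hs _
  have hV : 0 < V := Real.rpow_pos_of_pos hu _
  have hST : S ≤ T := Real.rpow_le_rpow hs.le hst (by positivity)
  have hVT : V ≤ T := Real.rpow_le_rpow hu.le hut (by positivity)
  obtain ⟨hM0, hMle⟩ := core_bound hK0 hK1 hS hST hV hVT
  have h2K : (0:ℝ) ≤ (2:ℝ)^(-K) := Real.rpow_nonneg (by norm_num) _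
  have hexpr : Pbif H K t t - Pbif H K s t - Pbif H K t u + Pbif H K s u
      = -(2^(-K) * ((S+T)^K + (T+V)^K - (S+V)^K - (T+T)^K)) := by
    unfold Pbif
    rw [← hSd, ← hVd, ← hTd]
    ring_nf
  rw [hexpr, abs_neg, abs_mul, abs_of_nonneg h2K,
    abs_of_nonneg hM0]
  have hTb : T^(K/2) = t^(H*K) := by
    rw [hTd, ← Real.rpow_mul ht0.le, show 2*H*(K/2) = H*K by ring]
  have hSb : S^(K/2) = s^(H*K) := by
    rw [hSd, ← Real.rpow_mul hs.le, show 2*H*(K/2) = H*K by ring]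
  have hVb : V^(K/2) = u^(H*K) := by
    rw [hVd, ← Real.rpow_mul hu.le, show 2*H*(K/2) = H*K by ring]
  calc 2^(-K) * ((S+T)^K + (T+V)^K - (S+V)^K - (T+T)^K)
      ≤ 2^(-K) * (4*(1-K)*2^(K-2)/K * ((T^(K/2) - S^(K/2)) * (T^(K/2) - V^(K/2)))) :=
        mul_le_mul_of_nonneg_left hMle h2K
    _ = (2^(-K)*(4*(1-K)*2^(K-2)/K)) * ((t^(H*K) - s^(H*K)) * (t^(H*K) - u^(H*K))) := by
        rw [hTb, hSb, hVb]; ring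

lemma intContIoc {f : ℝ → ℝ} (hf : Continuous f) (t : ℝ) :
    Integrable f (volume.restrict (Ioc (0:ℝ) t)) := hf.integrableOn_Ioc

lemma intContProd {F : ℝ×ℝ → ℝ} (hF : Continuous F) (t : ℝ) :
    Integrable F ((volume.restrict (Ioc (0:ℝ) t)).prod (volume.restrict (Ioc (0:ℝ) t))) := by
  rw [Measure.prod_restrict]
  exact ((hF.continuousOn).integrableOn_compact (isCompact_Icc.prod isCompact_Icc)).mono_set
    (prod_mono Ioc_subset_Icc_self Ioc_subset_Icc_self)

lemma ae_mem_prodIoc {t : ℝ} :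
    ∀ᵐ p : ℝ×ℝ ∂((volume.restrict (Ioc (0:ℝ) t)).prod (volume.restrict (Ioc (0:ℝ) t))),
      p ∈ (Ioc (0:ℝ) t) ×ˢ (Ioc (0:ℝ) t) := by
  rw [Measure.prod_restrict]
  exact ae_restrict_mem (measurableSet_Ioc.prod measurableSet_Ioc)

set_option maxHeartbeats 2000000 in
lemma Ppart_bound {θ H K : ℝ} (hθ : 0 < θ) (hH0 : 0 < H) (hH1 : H < 1)
    (hK0 : 0 < K) (hK1 : K ≤ 1) :
    ∃ C : ℝ, 0 < C ∧ ∀ t : ℝ, 1 ≤ t →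
    |Pbif H K t t
      - 2*θ*Real.exp (-(θ*t)) * (∫ s in Ioc (0:ℝ) t, Real.exp (θ*s) * Pbif H K s t)
      + θ^2*Real.exp (-(2*(θ*t))) * (∫ p : ℝ×ℝ, Real.exp (θ*p.1) * Real.exp (θ*p.2) * Pbif H K p.1 p.2
          ∂((volume.restrict (Ioc (0:ℝ) t)).prod (volume.restrict (Ioc (0:ℝ) t))))|
      ≤ C * t^(2*H*K-2) := by
  set a : ℝ := 2*H*K with ha
  set b : ℝ := H*K with hb
  set c₁ : ℝ := 2^(-K)*(4*(1-K)*2^(K-2)/K) with hc₁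
  have hc₁0 : 0 ≤ c₁ := by
    have h1 : (0:ℝ) ≤ (2:ℝ)^(-K) := Real.rpow_nonneg (by norm_num) _
    have h2 : (0:ℝ) ≤ (2:ℝ)^(K-2) := Real.rpow_nonneg (by norm_num) _
    have h3 : (0:ℝ) ≤ 4*(1-K) := by linarith
    exact mul_nonneg h1 (div_nonneg (mul_nonneg h3 h2) hK0.le)
  refine ⟨6/(2*θ)^3 + 12/θ^3 + c₁/θ^2 + 1, by positivity, fun t ht => ?_⟩
  have ht0 : (0:ℝ) < t := by linarith
  set ν := volume.restrict (Ioc (0:ℝ) t) with hν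
  set ρ := ν.prod ν with hρ
  -- basic integrands
  have hcf1 : Continuous fun s : ℝ => Real.exp (θ*s) :=
    (continuous_const.mul continuous_id).rexp
  have hcfP : Continuous fun s : ℝ => Real.exp (θ*s) * Pbif H K s t := by
    have := (Pbif_cont hH0 hK0 (K := K) (H := H)).comp
      (Continuous.prodMk continuous_id continuous_const : Continuous fun s : ℝ => (s, t))
    exact hcf1.mul this
  have hcf2 : Continuous fun s : ℝ => Real.exp (θ*s) * (t^b - s^b) :=
    hcf1.mul (continuous_const.sub (contRpow (by positivity)))
  set E1 : ℝ := ∫ s, Real.exp (θ*s) ∂ν with hE1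
  set EP : ℝ := ∫ s, Real.exp (θ*s) * Pbif H K s t ∂ν with hEP
  set DP : ℝ := ∫ p : ℝ×ℝ, Real.exp (θ*p.1) * Real.exp (θ*p.2) * Pbif H K p.1 p.2 ∂ρ with hDP
  set F2 : ℝ := ∫ s, Real.exp (θ*s) * (t^b - s^b) ∂ν with hF2
  set DD : ℝ := ∫ p : ℝ×ℝ, Real.exp (θ*p.1) * Real.exp (θ*p.2) *
      (Pbif H K t t - Pbif H K p.1 t - Pbif H K t p.2 + Pbif H K p.1 p.2) ∂ρ with hDD
  have hE1v : E1 = (Real.exp (θ*t) - 1)/θ := exp_integral_Ioc_s15 hθ ht0.le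
  -- integrability on ρ of the four pieces
  have hint1 : Integrable (fun p : ℝ×ℝ => Real.exp (θ*p.1) * Real.exp (θ*p.2) * Pbif H K t t) ρ :=
    intContProd ((hcf1.comp continuous_fst |>.mul (hcf1.comp continuous_snd)).mul
      continuous_const) t
  have hint2 : Integrable (fun p : ℝ×ℝ => Real.exp (θ*p.1) * Real.exp (θ*p.2) * Pbif H K p.1 t) ρ :=
    intContProd ((hcf1.comp continuous_fst |>.mul (hcf1.comp continuous_snd)).mul
      ((Pbif_cont hH0 hK0).comp (Continuous.prodMk continuous_fst continuous_const))) t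
  have hint3 : Integrable (fun p : ℝ×ℝ => Real.exp (θ*p.1) * Real.exp (θ*p.2) * Pbif H K t p.2) ρ :=
    intContProd ((hcf1.comp continuous_fst |>.mul (hcf1.comp continuous_snd)).mul
      ((Pbif_cont hH0 hK0).comp (Continuous.prodMk continuous_const continuous_snd))) t
  have hint4 : Integrable (fun p : ℝ×ℝ => Real.exp (θ*p.1) * Real.exp (θ*p.2) * Pbif H K p.1 p.2) ρ :=
    intContProd ((hcf1.comp continuous_fst |>.mul (hcf1.comp continuous_snd)).mul
      (Pbif_cont hH0 hK0)) t
  -- values of the product integrals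
  have hv1 : ∫ p : ℝ×ℝ, Real.exp (θ*p.1) * Real.exp (θ*p.2) * Pbif H K t t ∂ρ
      = E1 * E1 * Pbif H K t t := by
    have h := integral_prod_mul (μ := ν) (ν := ν) (fun s => Real.exp (θ*s))
      (fun u => Real.exp (θ*u) * Pbif H K t t)
    have h2 : (fun p : ℝ×ℝ => Real.exp (θ*p.1) * Real.exp (θ*p.2) * Pbif H K t t)
        = fun p : ℝ×ℝ => Real.exp (θ*p.1) * (Real.exp (θ*p.2) * Pbif H K t t) := by
      funext p; ring
    rw [h2, h, integral_mul_const]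
    ring
  have hv2 : ∫ p : ℝ×ℝ, Real.exp (θ*p.1) * Real.exp (θ*p.2) * Pbif H K p.1 t ∂ρ
      = EP * E1 := by
    have h := integral_prod_mul (μ := ν) (ν := ν) (fun s => Real.exp (θ*s) * Pbif H K s t)
      (fun u => Real.exp (θ*u))
    have h2 : (fun p : ℝ×ℝ => Real.exp (θ*p.1) * Real.exp (θ*p.2) * Pbif H K p.1 t)
        = fun p : ℝ×ℝ => (Real.exp (θ*p.1) * Pbif H K p.1 t) * Real.exp (θ*p.2) := by
      funext p; ring
    rw [h2, h]
  have hv3 : ∫ p : ℝ×ℝ, Real.exp (θ*p.1) * Real.exp (θ*p.2) * Pbif H K t p.2 ∂ρ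
      = E1 * EP := by
    have h := integral_prod_mul (μ := ν) (ν := ν) (fun s => Real.exp (θ*s))
      (fun u => Real.exp (θ*u) * Pbif H K t u)
    have h2 : (fun p : ℝ×ℝ => Real.exp (θ*p.1) * Real.exp (θ*p.2) * Pbif H K t p.2)
        = fun p : ℝ×ℝ => Real.exp (θ*p.1) * (Real.exp (θ*p.2) * Pbif H K t p.2) := by
      funext p; ring
    have h3 : (fun u : ℝ => Real.exp (θ*u) * Pbif H K t u)
        = fun u : ℝ => Real.exp (θ*u) * Pbif H K u t := by
      funext u; rw [Pbif_symm]
    rw [h2, h, h3]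
  have hDDv : DD = E1 * E1 * Pbif H K t t - EP * E1 - E1 * EP + DP := by
    rw [hDD]
    have step1 : (fun p : ℝ×ℝ => Real.exp (θ*p.1) * Real.exp (θ*p.2) *
        (Pbif H K t t - Pbif H K p.1 t - Pbif H K t p.2 + Pbif H K p.1 p.2))
        = fun p : ℝ×ℝ => ((Real.exp (θ*p.1) * Real.exp (θ*p.2) * Pbif H K t t
            - Real.exp (θ*p.1) * Real.exp (θ*p.2) * Pbif H K p.1 t)
            - Real.exp (θ*p.1) * Real.exp (θ*p.2) * Pbif H K t p.2)
            + Real.exp (θ*p.1) * Real.exp (θ*p.2) * Pbif H K p.1 p.2 := by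
      funext p; ring
    have hA : Integrable (fun p : ℝ×ℝ => Real.exp (θ*p.1) * Real.exp (θ*p.2) * Pbif H K t t
        - Real.exp (θ*p.1) * Real.exp (θ*p.2) * Pbif H K p.1 t) ρ := hint1.sub hint2
    have hB : Integrable (fun p : ℝ×ℝ => (Real.exp (θ*p.1) * Real.exp (θ*p.2) * Pbif H K t t
        - Real.exp (θ*p.1) * Real.exp (θ*p.2) * Pbif H K p.1 t)
        - Real.exp (θ*p.1) * Real.exp (θ*p.2) * Pbif H K t p.2) ρ := hA.sub hint3
    rw [step1, integral_add hB hint4, integral_sub hA hint3, integral_sub hint1 hint2,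
      hv1, hv2, hv3]
  -- the increment identity
  have hident : Pbif H K t t - 2*θ*Real.exp (-(θ*t)) * EP + θ^2*Real.exp (-(2*(θ*t))) * DP
      = Real.exp (-(2*(θ*t))) * Pbif H K t t
        + 2*θ*Real.exp (-(2*(θ*t))) * (Pbif H K t t * E1 - EP)
        + θ^2*Real.exp (-(2*(θ*t))) * DD := by
    have hy : Real.exp (-(θ*t)) = (Real.exp (θ*t))⁻¹ := by rw [← Real.exp_neg]
    have h2y : Real.exp (-(2*(θ*t))) = (Real.exp (θ*t))⁻¹ * (Real.exp (θ*t))⁻¹ := by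
      rw [← Real.exp_neg, ← Real.exp_add]; ring_nf
    rw [hDDv, hy, h2y, hE1v]
    have hexp0 : Real.exp (θ*t) ≠ 0 := (Real.exp_pos _).ne'
    field_simp
    ring
  rw [hident]
  -- now bound the three terms
  have hPtt : Pbif H K t t = t^a := Pbif_diag hH0 ht0.le hK0
  have hE1pos : 0 ≤ E1 := by
    rw [hE1v]
    have h := Real.one_le_exp (by positivity : (0:ℝ) ≤ θ*t)
    exact div_nonneg (by linarith) hθ.le
  have hE1le : E1 ≤ Real.exp (θ*t)/θ := by
    rw [hE1v]
    gcongr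
    linarith [Real.exp_pos (θ*t)]
  have hb0 : (0:ℝ) < b := by rw [hb]; positivity
  have hb1 : b ≤ 1 := by rw [hb]; nlinarith
  have hEPpos : 0 ≤ EP := by
    rw [hEP, hν]
    refine setIntegral_nonneg measurableSet_Ioc (fun s hs => ?_)
    exact mul_nonneg (Real.exp_pos _).le (Pbif_nonneg hs.1.le (le_trans hs.1.le hs.2))
  have hEPle : EP ≤ Pbif H K t t * E1 := by
    rw [hEP, hE1, hν]
    calc (∫ s, Real.exp (θ*s) * Pbif H K s t ∂ν)
        ≤ ∫ s, Pbif H K t t * Real.exp (θ*s) ∂ν := by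
          refine setIntegral_mono_on (intContIoc hcfP t) ((intContIoc hcf1 t).const_mul _)
            measurableSet_Ioc (fun s hs => ?_)
          have h1 : Pbif H K s t ≤ Pbif H K t t :=
            Pbif_mono hH0 hK0 hs.1.le hs.2
          have h2 : 0 ≤ Real.exp (θ*s) := (Real.exp_pos _).le
          nlinarith
      _ = Pbif H K t t * ∫ s, Real.exp (θ*s) ∂ν := integral_const_mul _ _
  have hF2pos : 0 ≤ F2 := by
    rw [hF2, hν]
    refine setIntegral_nonneg measurableSet_Ioc (fun s hs => ?_)
    have : s^b ≤ t^b := Real.rpow_le_rpow hs.1.le hs.2 hb0.le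
    have h2 : 0 ≤ Real.exp (θ*s) := (Real.exp_pos _).le
    nlinarith
  have hF2le : F2 ≤ t^(b-1) * (Real.exp (θ*t)/θ^2) := by
    have hcg : Continuous fun s : ℝ => t^(b-1) * (Real.exp (θ*s) * (t - s)) :=
      continuous_const.mul (((continuous_const.mul continuous_id).rexp).mul
        (continuous_const.sub continuous_id))
    rw [hF2, hν, ← intervalIntegral.integral_of_le ht0.le]
    calc (∫ s in (0:ℝ)..t, Real.exp (θ*s) * (t^b - s^b))
        ≤ ∫ s in (0:ℝ)..t, t^(b-1) * (Real.exp (θ*s) * (t - s)) := by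
          refine intervalIntegral.integral_mono_on ht0.le (hcf2.intervalIntegrable 0 t)
            (hcg.intervalIntegrable 0 t) (fun s hs => ?_)
          have h1 : t^b - s^b ≤ (t-s) * t^(b-1) := rpow_diff_le hb0 hb1 hs.1 hs.2 ht0
          have h2 : 0 ≤ Real.exp (θ*s) := (Real.exp_pos _).le
          nlinarith
      _ = t^(b-1) * ∫ s in (0:ℝ)..t, Real.exp (θ*s) * (t - s) := by
          rw [intervalIntegral.integral_const_mul]
      _ ≤ t^(b-1) * (Real.exp (θ*t)/θ^2) := by
          exact mul_le_mul_of_nonneg_left (exp_lin_int hθ ht0.le)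
            (Real.rpow_nonneg ht0.le _)
  have hDDle : |DD| ≤ c₁ * (F2 * F2) := by
    have hg : Integrable (fun p : ℝ×ℝ =>
        (c₁ * (Real.exp (θ*p.1) * (t^b - p.1^b))) * (Real.exp (θ*p.2) * (t^b - p.2^b))) ρ :=
      Integrable.mul_prod ((intContIoc hcf2 t).const_mul c₁) (intContIoc hcf2 t)
    have hae : ∀ᵐ p : ℝ×ℝ ∂ρ, ‖Real.exp (θ*p.1) * Real.exp (θ*p.2) *
        (Pbif H K t t - Pbif H K p.1 t - Pbif H K t p.2 + Pbif H K p.1 p.2)‖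
        ≤ (c₁ * (Real.exp (θ*p.1) * (t^b - p.1^b))) * (Real.exp (θ*p.2) * (t^b - p.2^b)) := by
      refine ae_mem_prodIoc.mono (fun p hp => ?_)
      obtain ⟨hp1, hp2⟩ := hp
      have hkey := PDelta_bound hH0 hH1 hK0 hK1 hp1.1 hp1.2 hp2.1 hp2.2
      rw [Real.norm_eq_abs, abs_mul, abs_mul, Real.abs_exp, Real.abs_exp]
      calc Real.exp (θ*p.1) * Real.exp (θ*p.2) *
          |Pbif H K t t - Pbif H K p.1 t - Pbif H K t p.2 + Pbif H K p.1 p.2|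
          ≤ Real.exp (θ*p.1) * Real.exp (θ*p.2) *
            (c₁ * ((t^b - p.1^b) * (t^b - p.2^b))) := by
            refine mul_le_mul_of_nonneg_left hkey (by positivity)
        _ = (c₁ * (Real.exp (θ*p.1) * (t^b - p.1^b))) * (Real.exp (θ*p.2) * (t^b - p.2^b)) := by
            ring
    calc |DD| ≤ ∫ p : ℝ×ℝ, (c₁ * (Real.exp (θ*p.1) * (t^b - p.1^b)))
          * (Real.exp (θ*p.2) * (t^b - p.2^b)) ∂ρ := by
          rw [hDD, ← Real.norm_eq_abs]
          exact norm_integral_le_of_norm_le hg hae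
      _ = (c₁ * F2) * F2 := by
          rw [hρ, integral_prod_mul (μ := ν) (ν := ν)
            (fun s => c₁ * (Real.exp (θ*s) * (t^b - s^b)))
            (fun u => Real.exp (θ*u) * (t^b - u^b))]
          rw [integral_const_mul]
      _ = c₁ * (F2 * F2) := by ring
  -- final numeric bounds
  set e2 : ℝ := Real.exp (-(2*(θ*t))) with he2
  have he2eq : e2 = Real.exp (-((2*θ)*t)) := by rw [he2]; ring_nf
  have he2pos : 0 < e2 := Real.exp_pos _
  have hsq : t^(a-2) * t^(2:ℝ) = t^a := by
    rw [← Real.rpow_add ht0]; norm_num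
  have haux1 : e2 * t^a ≤ (6/(2*θ)^3) * t^(a-2) := by
    rw [← hsq]
    have h1 : t^(2:ℝ) * Real.exp (-((2*θ)*t)) ≤ 6/(2*θ)^3 :=
      rpow_mul_exp_le (by positivity) (by norm_num) ht
    calc e2 * (t^(a-2) * t^(2:ℝ)) = t^(a-2) * (t^(2:ℝ) * Real.exp (-((2*θ)*t))) := by
          rw [← he2eq]; ring
      _ ≤ t^(a-2) * (6/(2*θ)^3) := by
          exact mul_le_mul_of_nonneg_left h1 (Real.rpow_nonneg ht0.le _)
      _ = (6/(2*θ)^3) * t^(a-2) := by ring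
  have haux2 : 2*θ*e2*(Pbif H K t t * E1) ≤ (12/θ^3) * t^(a-2) := by
    have hPtt' : Pbif H K t t = t^a := hPtt
    have h0 : 2*θ*e2*(Pbif H K t t * E1) ≤ 2*θ*e2*(t^a * (Real.exp (θ*t)/θ)) := by
      rw [hPtt']
      refine mul_le_mul_of_nonneg_left ?_ (by positivity)
      exact mul_le_mul_of_nonneg_left hE1le (Real.rpow_nonneg ht0.le _)
    refine h0.trans ?_
    have hee : e2 * Real.exp (θ*t) = Real.exp (-(θ*t)) := by
      rw [he2, ← Real.exp_add]; ring_nf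
    have h1 : 2*θ*e2*(t^a * (Real.exp (θ*t)/θ)) = 2 * (t^a * Real.exp (-(θ*t))) := by
      field_simp [hθ.ne']
      rw [← hee]
    rw [h1, ← hsq]
    have h2 : t^(2:ℝ) * Real.exp (-(θ*t)) ≤ 6/θ^3 :=
      rpow_mul_exp_le hθ (by norm_num) ht
    calc 2 * (t^(a-2) * t^(2:ℝ) * Real.exp (-(θ*t)))
        = 2 * (t^(a-2) * (t^(2:ℝ) * Real.exp (-(θ*t)))) := by ring
      _ ≤ 2 * (t^(a-2) * (6/θ^3)) := by
          refine mul_le_mul_of_nonneg_left ?_ (by norm_num)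
          exact mul_le_mul_of_nonneg_left h2 (Real.rpow_nonneg ht0.le _)
      _ = (12/θ^3) * t^(a-2) := by ring
  have haux3 : θ^2*e2*|DD| ≤ (c₁/θ^2) * t^(a-2) := by
    have h1 : θ^2*e2*|DD| ≤ θ^2*e2*(c₁ * (F2*F2)) :=
      mul_le_mul_of_nonneg_left hDDle (by positivity)
    refine h1.trans ?_
    have hF2' : F2 ≤ t^(b-1) * Real.exp (θ*t) / θ^2 := by
      refine hF2le.trans_eq ?_
      ring
    have h2 : F2 * F2 ≤ (t^(b-1) * Real.exp (θ*t) / θ^2) * (t^(b-1) * Real.exp (θ*t) / θ^2) := by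
      exact mul_le_mul hF2' hF2' hF2pos (le_trans hF2pos hF2')
    have h3 : θ^2*e2*(c₁ * (F2*F2)) ≤ θ^2*e2*(c₁ * ((t^(b-1) * Real.exp (θ*t) / θ^2)
        * (t^(b-1) * Real.exp (θ*t) / θ^2))) := by
      refine mul_le_mul_of_nonneg_left ?_ (by positivity)
      exact mul_le_mul_of_nonneg_left h2 hc₁0
    refine h3.trans ?_
    have hee2 : e2 * (Real.exp (θ*t) * Real.exp (θ*t)) = 1 := by
      rw [he2, ← Real.exp_add, ← Real.exp_add,
        show -(2*(θ*t)) + (θ*t + θ*t) = 0 by ring, Real.exp_zero]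
    have hbb : t^(b-1) * t^(b-1) = t^(a-2) := by
      rw [← Real.rpow_add ht0]
      congr 1
      rw [hb, ha]; ring
    have : θ^2*e2*(c₁ * ((t^(b-1) * Real.exp (θ*t) / θ^2) * (t^(b-1) * Real.exp (θ*t) / θ^2)))
        = (c₁/θ^2) * (t^(b-1) * t^(b-1)) * (e2 * (Real.exp (θ*t) * Real.exp (θ*t))) := by
      field_simp
    rw [this, hee2, hbb, mul_one]
  -- assemble
  have hT2pos : 0 ≤ Pbif H K t t * E1 - EP := by linarith
  have habs : |e2 * Pbif H K t t + 2*θ*e2 * (Pbif H K t t * E1 - EP) + θ^2*e2 * DD|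
      ≤ e2 * t^a + 2*θ*e2*(Pbif H K t t * E1) + θ^2*e2*|DD| := by
    have h1 : |θ^2*e2*DD| = θ^2*e2*|DD| := by
      rw [abs_mul, abs_of_nonneg (by positivity : (0:ℝ) ≤ θ^2*e2)]
    have h2 : 0 ≤ e2 * Pbif H K t t := by
      rw [hPtt]; positivity
    have h3 : 2*θ*e2 * (Pbif H K t t * E1 - EP) ≤ 2*θ*e2*(Pbif H K t t * E1) := by
      have : Pbif H K t t * E1 - EP ≤ Pbif H K t t * E1 := by linarith
      exact mul_le_mul_of_nonneg_left this (by positivity)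
    have h4 : 0 ≤ 2*θ*e2 * (Pbif H K t t * E1 - EP) :=
      mul_nonneg (by positivity) hT2pos
    calc |e2 * Pbif H K t t + 2*θ*e2 * (Pbif H K t t * E1 - EP) + θ^2*e2 * DD|
        ≤ |e2 * Pbif H K t t + 2*θ*e2 * (Pbif H K t t * E1 - EP)| + |θ^2*e2 * DD| :=
          abs_add_le _ _
      _ ≤ (e2 * Pbif H K t t + 2*θ*e2*(Pbif H K t t * E1)) + θ^2*e2*|DD| := by
          rw [h1]
          gcongr
          rw [abs_of_nonneg (by linarith)]
          linarith
      _ = e2 * t^a + 2*θ*e2*(Pbif H K t t * E1) + θ^2*e2*|DD| := by rw [hPtt]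
  refine habs.trans ?_
  have hfin : e2 * t^a + 2*θ*e2*(Pbif H K t t * E1) + θ^2*e2*|DD|
      ≤ (6/(2*θ)^3) * t^(a-2) + (12/θ^3) * t^(a-2) + (c₁/θ^2) * t^(a-2) := by
    linarith
  refine hfin.trans ?_
  have hta : 0 ≤ t^(a-2) := Real.rpow_nonneg ht0.le _
  nlinarith

lemma primitive_hasDerivAt {f : ℝ → ℝ} (hf : Continuous f) (x : ℝ) :
    HasDerivAt (fun y => ∫ v in (0:ℝ)..y, f v) (f x) x :=
  intervalIntegral.integral_hasDerivAt_right (hf.intervalIntegrable _ _)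
    (hf.stronglyMeasurableAtFilter _ _) hf.continuousAt

lemma primitive_continuous {f : ℝ → ℝ} (hf : Continuous f) :
    Continuous (fun y => ∫ v in (0:ℝ)..y, f v) := by
  rw [continuous_iff_continuousAt]
  exact fun x => (primitive_hasDerivAt hf x).continuousAt

lemma conv_int {θ a : ℝ} {s : ℝ} :
    ∫ u in (0:ℝ)..s, Real.exp (θ*u) * (s-u)^a
      = Real.exp (θ*s) * ∫ v in (0:ℝ)..s, Real.exp (-(θ*v)) * v^a := by
  have h := intervalIntegral.integral_comp_sub_left (a := (0:ℝ)) (b := s)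
    (fun v => Real.exp (θ*(s-v)) * v^a) s
  have h1 : (fun u : ℝ => Real.exp (θ*u) * (s-u)^a)
      = fun u : ℝ => Real.exp (θ*(s-(s-u))) * (s-u)^a := by
    funext u; rw [show s-(s-u) = u by ring]
  have h2 : (fun v : ℝ => Real.exp (θ*(s-v)) * v^a)
      = fun v : ℝ => Real.exp (θ*s) * (Real.exp (-(θ*v)) * v^a) := by
    funext v
    rw [← mul_assoc, ← Real.exp_add, show θ*s + -(θ*v) = θ*(s-v) by ring]
  calc ∫ u in (0:ℝ)..s, Real.exp (θ*u) * (s-u)^a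
      = ∫ u in (0:ℝ)..s, Real.exp (θ*(s-(s-u))) * (s-u)^a := by rw [← h1]
    _ = ∫ v in s-s..s-0, Real.exp (θ*(s-v)) * v^a := h
    _ = ∫ v in (0:ℝ)..s, Real.exp (θ*(s-v)) * v^a := by rw [sub_self, sub_zero]
    _ = Real.exp (θ*s) * ∫ v in (0:ℝ)..s, Real.exp (-(θ*v)) * v^a := by
        rw [h2, intervalIntegral.integral_const_mul]

lemma shift_int {θ a : ℝ} {s t : ℝ} :
    ∫ u in s..t, Real.exp (θ*u) * (u-s)^a
      = Real.exp (θ*s) * ∫ v in (0:ℝ)..(t-s), Real.exp (θ*v) * v^a := by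
  have h := intervalIntegral.integral_comp_add_right (a := (0:ℝ)) (b := t-s)
    (fun u => Real.exp (θ*u) * (u-s)^a) s
  rw [zero_add, sub_add_cancel] at h
  rw [← h]
  have h2 : (fun v : ℝ => Real.exp (θ*(v+s)) * ((v+s)-s)^a)
      = fun v : ℝ => Real.exp (θ*s) * (Real.exp (θ*v) * v^a) := by
    funext v
    rw [show (v+s)-s = v by ring, ← mul_assoc, ← Real.exp_add, show θ*s + θ*v = θ*(v+s) by ring]
  calc ∫ v in (0:ℝ)..(t-s), Real.exp (θ*(v+s)) * ((v+s)-s)^a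
      = ∫ v in (0:ℝ)..(t-s), Real.exp (θ*s) * (Real.exp (θ*v) * v^a) := by rw [h2]
    _ = Real.exp (θ*s) * ∫ v in (0:ℝ)..(t-s), Real.exp (θ*v) * v^a := by
        rw [intervalIntegral.integral_const_mul]

noncomputable def Qbif (H K s u : ℝ) : ℝ := 2^(-K) * |s-u|^(2*H*K)

set_option maxHeartbeats 2000000 in
lemma Qpart_eval {θ H K : ℝ} (hθ : 0 < θ) (hH0 : 0 < H) (hH1 : H < 1)
    (hK0 : 0 < K) (hK1 : K ≤ 1) :
    ∃ C : ℝ, 0 < C ∧ ∀ t : ℝ, 1 ≤ t →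
    |(2*θ*Real.exp (-(θ*t)) * (∫ s in Ioc (0:ℝ) t, Real.exp (θ*s) * Qbif H K s t)
      - θ^2*Real.exp (-(2*(θ*t))) * (∫ p : ℝ×ℝ, Real.exp (θ*p.1) * Real.exp (θ*p.2) * Qbif H K p.1 p.2
          ∂((volume.restrict (Ioc (0:ℝ) t)).prod (volume.restrict (Ioc (0:ℝ) t)))))
      - 2^(1-K)*H*K*Real.Gamma (2*H*K) / θ^(2*H*K)| ≤ C * t^(2*H*K-2) := by
  set a : ℝ := 2*H*K with ha
  have ha0 : 0 < a := by rw [ha]; positivity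
  have ha2 : a < 2 := by rw [ha]; nlinarith
  have h2K : (0:ℝ) < (2:ℝ)^(-K) := Real.rpow_pos_of_pos (by norm_num) _
  obtain ⟨C₀, hC₀, hC₀b⟩ := gamma_trunc_err ha0 (by linarith) hθ
  refine ⟨2^(-K)*θ*C₀*(6/(θ/2)^3) + 2^(-K)*θ*(6/θ^3) + 1, by positivity, fun t ht => ?_⟩
  have ht0 : (0:ℝ) < t := by linarith
  set gJ : ℝ → ℝ := fun v => Real.exp (-(θ*v)) * v^a with hgJ
  set gE : ℝ → ℝ := fun v => Real.exp (θ*v) * v^a with hgE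
  have hgJc : Continuous gJ :=
    ((continuous_const.mul continuous_id).neg.rexp).mul (contRpow ha0)
  have hgEc : Continuous gE :=
    ((continuous_const.mul continuous_id).rexp).mul (contRpow ha0)
  set Jp : ℝ → ℝ := fun x => ∫ v in (0:ℝ)..x, gJ v with hJp
  set Ep : ℝ → ℝ := fun x => ∫ v in (0:ℝ)..x, gE v with hEp
  have hJc : Continuous Jp := primitive_continuous hgJc
  have hEc : Continuous Ep := primitive_continuous hgEc
  have hJ0 : Jp 0 = 0 := intervalIntegral.integral_same
  have hEp0 : Ep 0 = 0 := intervalIntegral.integral_same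
  -- step 1 : single integral
  have step1 : (∫ s in Ioc (0:ℝ) t, Real.exp (θ*s) * Qbif H K s t)
      = 2^(-K) * (Real.exp (θ*t) * Jp t) := by
    rw [← intervalIntegral.integral_of_le ht0.le]
    have hcg : EqOn (fun s => Real.exp (θ*s) * Qbif H K s t)
        (fun s => 2^(-K) * (Real.exp (θ*s) * (t-s)^a)) (uIcc 0 t) := by
      intro s hs
      rw [uIcc_of_le ht0.le] at hs
      simp only [Qbif]
      rw [abs_of_nonpos (by linarith [hs.2] : s - t ≤ 0), show -(s-t) = t-s by ring, ← ha]
      ring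
    rw [intervalIntegral.integral_congr hcg, intervalIntegral.integral_const_mul, conv_int]
  -- step 2 : inner integral splitting
  have step2 : ∀ s ∈ Ioc (0:ℝ) t,
      (∫ u in Ioc (0:ℝ) t, Real.exp (θ*s) * Real.exp (θ*u) * Qbif H K s u)
      = 2^(-K) * (Real.exp (θ*s) * Real.exp (θ*s) * (Jp s + Ep (t-s))) := by
    intro s hs
    have hI1 : IntervalIntegrable (fun u => Real.exp (θ*s) * Real.exp (θ*u) * Qbif H K s u)
        volume 0 s := by
      apply Continuous.intervalIntegrable
      exact (continuous_const.mul ((continuous_const.mul continuous_id).rexp)).mul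
        (continuous_const.mul ((contRpow ha0).comp ((continuous_const.sub continuous_id).abs)))
    have hI2 : IntervalIntegrable (fun u => Real.exp (θ*s) * Real.exp (θ*u) * Qbif H K s u)
        volume s t := by
      apply Continuous.intervalIntegrable
      exact (continuous_const.mul ((continuous_const.mul continuous_id).rexp)).mul
        (continuous_const.mul ((contRpow ha0).comp ((continuous_const.sub continuous_id).abs)))
    rw [← intervalIntegral.integral_of_le ht0.le,
      ← intervalIntegral.integral_add_adjacent_intervals hI1 hI2]
    have hp1 : (∫ u in (0:ℝ)..s, Real.exp (θ*s) * Real.exp (θ*u) * Qbif H K s u)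
        = (2^(-K) * Real.exp (θ*s)) * (Real.exp (θ*s) * Jp s) := by
      have hcg : EqOn (fun u => Real.exp (θ*s) * Real.exp (θ*u) * Qbif H K s u)
          (fun u => (2^(-K) * Real.exp (θ*s)) * (Real.exp (θ*u) * (s-u)^a)) (uIcc 0 s) := by
        intro u hu
        rw [uIcc_of_le hs.1.le] at hu
        simp only [Qbif]
        rw [abs_of_nonneg (by linarith [hu.2] : (0:ℝ) ≤ s - u), ← ha]
        ring
      rw [intervalIntegral.integral_congr hcg, intervalIntegral.integral_const_mul, conv_int]
    have hp2 : (∫ u in s..t, Real.exp (θ*s) * Real.exp (θ*u) * Qbif H K s u)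
        = (2^(-K) * Real.exp (θ*s)) * (Real.exp (θ*s) * Ep (t-s)) := by
      have hcg : EqOn (fun u => Real.exp (θ*s) * Real.exp (θ*u) * Qbif H K s u)
          (fun u => (2^(-K) * Real.exp (θ*s)) * (Real.exp (θ*u) * (u-s)^a)) (uIcc s t) := by
        intro u hu
        rw [uIcc_of_le hs.2] at hu
        simp only [Qbif]
        rw [abs_of_nonpos (by linarith [hu.1] : s - u ≤ 0), show -(s-u) = u-s by ring, ← ha]
        ring
      rw [intervalIntegral.integral_congr hcg, intervalIntegral.integral_const_mul, shift_int]
    rw [hp1, hp2]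
    ring
  -- step 3 : double integral as iterated integral
  have hQc : Continuous fun p : ℝ×ℝ => Real.exp (θ*p.1) * Real.exp (θ*p.2) * Qbif H K p.1 p.2 := by
    have : Continuous fun p : ℝ×ℝ => |p.1 - p.2|^a :=
      (contRpow ha0).comp ((continuous_fst.sub continuous_snd).abs)
    exact ((((continuous_const.mul continuous_fst).rexp)).mul
      (((continuous_const.mul continuous_snd).rexp))).mul (continuous_const.mul this)
  have step3 : (∫ p : ℝ×ℝ, Real.exp (θ*p.1) * Real.exp (θ*p.2) * Qbif H K p.1 p.2
        ∂((volume.restrict (Ioc (0:ℝ) t)).prod (volume.restrict (Ioc (0:ℝ) t))))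
      = 2^(-K) * ((∫ s in (0:ℝ)..t, Real.exp (θ*s) * Real.exp (θ*s) * Jp s)
          + (∫ s in (0:ℝ)..t, Real.exp (θ*s) * Real.exp (θ*s) * Ep (t-s))) := by
    rw [integral_prod _ (intContProd hQc t)]
    have hcongr : (∫ s in Ioc (0:ℝ) t, ∫ u in Ioc (0:ℝ) t,
        Real.exp (θ*s) * Real.exp (θ*u) * Qbif H K s u)
        = ∫ s in Ioc (0:ℝ) t,
            2^(-K) * (Real.exp (θ*s) * Real.exp (θ*s) * (Jp s + Ep (t-s))) :=
      setIntegral_congr_fun measurableSet_Ioc step2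
    rw [hcongr, integral_const_mul, ← intervalIntegral.integral_of_le ht0.le]
    have hIa : IntervalIntegrable (fun s => Real.exp (θ*s) * Real.exp (θ*s) * Jp s) volume 0 t :=
      ((((continuous_const.mul continuous_id).rexp).mul
        ((continuous_const.mul continuous_id).rexp)).mul hJc).intervalIntegrable 0 t
    have hIb : IntervalIntegrable (fun s => Real.exp (θ*s) * Real.exp (θ*s) * Ep (t-s))
        volume 0 t :=
      ((((continuous_const.mul continuous_id).rexp).mul
        ((continuous_const.mul continuous_id).rexp)).mul
        (hEc.comp (continuous_const.sub continuous_id))).intervalIntegrable 0 t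
    rw [show (fun s => Real.exp (θ*s) * Real.exp (θ*s) * (Jp s + Ep (t-s)))
        = fun s => Real.exp (θ*s) * Real.exp (θ*s) * Jp s
            + Real.exp (θ*s) * Real.exp (θ*s) * Ep (t-s) from funext (fun s => by ring),
      intervalIntegral.integral_add hIa hIb]
  -- step 4 : FTC for P1
  have hexpd : ∀ s : ℝ, HasDerivAt (fun s => Real.exp (θ*s)) (θ * Real.exp (θ*s)) s := by
    intro s
    simpa [mul_comm] using ((hasDerivAt_id s).const_mul θ).exp
  have hP1 : 2*θ*(∫ s in (0:ℝ)..t, Real.exp (θ*s) * Real.exp (θ*s) * Jp s) + Ep t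
      = Real.exp (θ*t) * Real.exp (θ*t) * Jp t := by
    have hd : ∀ s ∈ uIcc (0:ℝ) t, HasDerivAt (fun s => Real.exp (θ*s) * Real.exp (θ*s) * Jp s)
        (2*θ*(Real.exp (θ*s) * Real.exp (θ*s) * Jp s) + Real.exp (θ*s) * s^a) s := by
      intro s _
      have h1 := ((hexpd s).mul (hexpd s)).mul (primitive_hasDerivAt hgJc s)
      refine HasDerivAt.congr_deriv h1 (Eq.symm ?_)
      have h9 : Real.exp (θ*s) * Real.exp (-(θ*s)) = 1 := by
        rw [← Real.exp_add, show θ*s + -(θ*s) = 0 by ring, Real.exp_zero]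
      simp only [hgJ, Pi.mul_apply]
      linear_combination (-(Real.exp (θ*s) * s^a)) * h9
    have hcont : Continuous fun s =>
        2*θ*(Real.exp (θ*s) * Real.exp (θ*s) * Jp s) + Real.exp (θ*s) * s^a :=
      (continuous_const.mul ((((continuous_const.mul continuous_id).rexp).mul
        ((continuous_const.mul continuous_id).rexp)).mul hJc)).add
        (((continuous_const.mul continuous_id).rexp).mul (contRpow ha0))
    have hval := intervalIntegral.integral_eq_sub_of_hasDerivAt hd
      (hcont.intervalIntegrable 0 t)
    rw [hJ0] at hval
    have hca : Continuous fun s : ℝ => 2*θ*(Real.exp (θ*s) * Real.exp (θ*s) * Jp s) :=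
      continuous_const.mul ((((continuous_const.mul continuous_id).rexp).mul
        ((continuous_const.mul continuous_id).rexp)).mul hJc)
    have hcb : Continuous fun s : ℝ => Real.exp (θ*s) * s^a :=
      ((continuous_const.mul continuous_id).rexp).mul (contRpow ha0)
    have hsplit : (∫ s in (0:ℝ)..t,
        (2*θ*(Real.exp (θ*s) * Real.exp (θ*s) * Jp s) + Real.exp (θ*s) * s^a))
        = 2*θ*(∫ s in (0:ℝ)..t, Real.exp (θ*s) * Real.exp (θ*s) * Jp s) + Ep t := by
      rw [intervalIntegral.integral_add (hca.intervalIntegrable 0 t)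
        (hcb.intervalIntegrable 0 t), intervalIntegral.integral_const_mul]
    rw [hsplit] at hval
    rw [hval]
    ring
  -- step 5 : FTC for P2
  have hP2 : 2*θ*(∫ s in (0:ℝ)..t, Real.exp (θ*s) * Real.exp (θ*s) * Ep (t-s))
      - Real.exp (θ*t) * (Real.exp (θ*t) * Jp t) = - Ep t := by
    have hd : ∀ s ∈ uIcc (0:ℝ) t,
        HasDerivAt (fun s => Real.exp (θ*s) * Real.exp (θ*s) * Ep (t-s))
        (2*θ*(Real.exp (θ*s) * Real.exp (θ*s) * Ep (t-s))
          - Real.exp (θ*t) * (Real.exp (θ*s) * (t-s)^a)) s := by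
      intro s _
      have hE2 : HasDerivAt (fun s : ℝ => Ep (t-s)) (-(gE (t-s))) s := by
        have hinner : HasDerivAt (fun s : ℝ => t - s) (-1) s := by
          simpa using ((hasDerivAt_id s).const_sub t)
        have := (primitive_hasDerivAt hgEc (t-s)).comp s hinner
        exact this.congr_deriv (by ring)
      have h1 := ((hexpd s).mul (hexpd s)).mul hE2
      refine HasDerivAt.congr_deriv h1 (Eq.symm ?_)
      simp only [hgE, Pi.mul_apply]
      have h9 : Real.exp (θ*s) * Real.exp (θ*(t-s)) = Real.exp (θ*t) := by
        rw [← Real.exp_add, show θ*s + θ*(t-s) = θ*t by ring]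
      linear_combination (Real.exp (θ*s) * (t-s)^a) * h9
    have hcont : Continuous fun s =>
        2*θ*(Real.exp (θ*s) * Real.exp (θ*s) * Ep (t-s))
          - Real.exp (θ*t) * (Real.exp (θ*s) * (t-s)^a) :=
      (continuous_const.mul ((((continuous_const.mul continuous_id).rexp).mul
        ((continuous_const.mul continuous_id).rexp)).mul
        (hEc.comp (continuous_const.sub continuous_id)))).sub
        (continuous_const.mul (((continuous_const.mul continuous_id).rexp).mul
          ((contRpow ha0).comp (continuous_const.sub continuous_id))))
    have hval := intervalIntegral.integral_eq_sub_of_hasDerivAt hd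
      (hcont.intervalIntegrable 0 t)
    rw [show t - t = (0:ℝ) by ring] at hval
    rw [hEp0] at hval
    have hcc : Continuous fun s : ℝ => 2*θ*(Real.exp (θ*s) * Real.exp (θ*s) * Ep (t-s)) :=
      continuous_const.mul ((((continuous_const.mul continuous_id).rexp).mul
        ((continuous_const.mul continuous_id).rexp)).mul
        (hEc.comp (continuous_const.sub continuous_id)))
    have hcd : Continuous fun s : ℝ => Real.exp (θ*t) * (Real.exp (θ*s) * (t-s)^a) :=
      continuous_const.mul (((continuous_const.mul continuous_id).rexp).mul
        ((contRpow ha0).comp (continuous_const.sub continuous_id)))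
    have hsplit : (∫ s in (0:ℝ)..t,
        (2*θ*(Real.exp (θ*s) * Real.exp (θ*s) * Ep (t-s))
          - Real.exp (θ*t) * (Real.exp (θ*s) * (t-s)^a)))
        = 2*θ*(∫ s in (0:ℝ)..t, Real.exp (θ*s) * Real.exp (θ*s) * Ep (t-s))
          - Real.exp (θ*t) * (Real.exp (θ*t) * Jp t) := by
      rw [intervalIntegral.integral_sub (hcc.intervalIntegrable 0 t)
        (hcd.intervalIntegrable 0 t),
        intervalIntegral.integral_const_mul, intervalIntegral.integral_const_mul, conv_int]
    rw [hsplit] at hval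
    rw [hval]
    simp
  -- assemble
  rw [step1, step3]
  set I1 : ℝ := ∫ s in (0:ℝ)..t, Real.exp (θ*s) * Real.exp (θ*s) * Jp s with hI1
  set I2 : ℝ := ∫ s in (0:ℝ)..t, Real.exp (θ*s) * Real.exp (θ*s) * Ep (t-s) with hI2
  have hassoc : Real.exp (θ*t) * (Real.exp (θ*t) * Jp t)
      = Real.exp (θ*t) * Real.exp (θ*t) * Jp t := by ring
  have hI12' : θ*(I1+I2) = Real.exp (θ*t) * Real.exp (θ*t) * Jp t - Ep t := by
    rw [hassoc] at hP2
    linarith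
  have hAB : Real.exp (-(θ*t)) * Real.exp (θ*t) = 1 := by
    rw [← Real.exp_add, show -(θ*t) + θ*t = 0 by ring, Real.exp_zero]
  have hA2 : Real.exp (-(2*(θ*t))) * (Real.exp (θ*t) * Real.exp (θ*t)) = 1 := by
    rw [← Real.exp_add, ← Real.exp_add, show -(2*(θ*t)) + (θ*t + θ*t) = 0 by ring, Real.exp_zero]
  have hG : 2*θ*Real.exp (-(θ*t)) * (2^(-K) * (Real.exp (θ*t) * Jp t))
      - θ^2*Real.exp (-(2*(θ*t))) * (2^(-K) * (I1 + I2))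
      = 2^(-K)*θ*Jp t + 2^(-K)*θ*Real.exp (-(2*(θ*t)))*Ep t := by
    linear_combination (2*(2:ℝ)^(-K)*θ*Jp t) * hAB
      - ((2:ℝ)^(-K)*θ*Jp t) * hA2 - (θ*Real.exp (-(2*(θ*t)))*(2:ℝ)^(-K)) * hI12'
  rw [hG]
  have hGamma : 2^(1-K)*H*K*Real.Gamma a / θ^a = 2^(-K)*θ*(Real.Gamma (a+1)/θ^(a+1)) := by
    rw [Real.Gamma_add_one ha0.ne', Real.rpow_add hθ, Real.rpow_one,
      show (1:ℝ)-K = 1 + -K by ring, Real.rpow_add (by norm_num : (0:ℝ)<2), Real.rpow_one]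
    have hpa : (0:ℝ) < θ^a := Real.rpow_pos_of_pos hθ a
    field_simp
    rw [ha]
    ring
  rw [hGamma]
  -- error bounds
  have hJIoc : Jp t = ∫ v in Ioc (0:ℝ) t, Real.exp (-(θ*v)) * v^a := by
    rw [hJp, ← intervalIntegral.integral_of_le ht0.le]
  have htail : |Jp t - Real.Gamma (a+1)/θ^(a+1)| ≤ C₀ * Real.exp (-(θ/2*t)) := by
    rw [abs_sub_comm, hJIoc]
    exact hC₀b t ht
  have hEppos : 0 ≤ Ep t := by
    rw [hEp]
    refine intervalIntegral.integral_nonneg ht0.le (fun v hv => ?_)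
    have hv0 : 0 ≤ v := hv.1
    simp only [hgE]
    positivity
  have hEpb : Ep t ≤ Real.exp (θ*t)*t^a*t := by
    have hptw : ∀ v ∈ Icc (0:ℝ) t, gE v ≤ Real.exp (θ*t)*t^a := by
      intro v hv
      simp only [hgE]
      have h1 : Real.exp (θ*v) ≤ Real.exp (θ*t) :=
        Real.exp_le_exp.2 (mul_le_mul_of_nonneg_left hv.2 hθ.le)
      have h2 : v^a ≤ t^a := Real.rpow_le_rpow hv.1 hv.2 ha0.le
      have h3 : (0:ℝ) ≤ v^a := Real.rpow_nonneg hv.1 _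
      nlinarith [Real.exp_pos (θ*v)]
    calc Ep t ≤ ∫ _v in (0:ℝ)..t, Real.exp (θ*t)*t^a := by
          rw [hEp]
          exact intervalIntegral.integral_mono_on ht0.le (hgEc.intervalIntegrable 0 t)
            (intervalIntegrable_const) hptw
      _ = Real.exp (θ*t)*t^a*t := by
          rw [intervalIntegral.integral_const, smul_eq_mul]
          ring
  have hta2 : 0 ≤ t^(a-2) := Real.rpow_nonneg ht0.le _
  have hb1 : Real.exp (-(θ/2*t)) ≤ (6/(θ/2)^3) * t^(a-2) := by
    have h1 : t^(2-a) * Real.exp (-((θ/2)*t)) ≤ 6/(θ/2)^3 :=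
      rpow_mul_exp_le (by positivity) (by linarith) ht
    have h2 : t^(a-2)*t^(2-a) = 1 := by
      rw [← Real.rpow_add ht0]; norm_num
    calc Real.exp (-(θ/2*t)) = (t^(a-2)*t^(2-a)) * Real.exp (-((θ/2)*t)) := by
          rw [h2]; ring
      _ = t^(a-2) * (t^(2-a) * Real.exp (-((θ/2)*t))) := by ring
      _ ≤ t^(a-2) * (6/(θ/2)^3) := mul_le_mul_of_nonneg_left h1 hta2
      _ = (6/(θ/2)^3) * t^(a-2) := by ring
  have hb2 : Real.exp (-(2*(θ*t))) * Ep t ≤ (6/θ^3) * t^(a-2) := by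
    have h0 : Real.exp (-(2*(θ*t))) * Ep t ≤ Real.exp (-(2*(θ*t))) * (Real.exp (θ*t)*t^a*t) :=
      mul_le_mul_of_nonneg_left hEpb (Real.exp_pos _).le
    refine h0.trans ?_
    have hee : Real.exp (-(2*(θ*t))) * Real.exp (θ*t) = Real.exp (-(θ*t)) := by
      rw [← Real.exp_add]; congr 1; ring
    have hpow : t^a * t = t^(a-2) * t^(3:ℝ) := by
      rw [show t^a * t = t^a * t^(1:ℝ) by rw [Real.rpow_one],
        ← Real.rpow_add ht0, ← Real.rpow_add ht0]
      congr 1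
      ring
    have h3 : t^(3:ℝ) * Real.exp (-(θ*t)) ≤ 6/θ^3 :=
      rpow_mul_exp_le hθ (by norm_num) ht
    calc Real.exp (-(2*(θ*t))) * (Real.exp (θ*t)*t^a*t)
        = (t^a * t) * (Real.exp (-(2*(θ*t))) * Real.exp (θ*t)) := by ring
      _ = (t^(a-2) * t^(3:ℝ)) * Real.exp (-(θ*t)) := by rw [hee, hpow]
      _ = t^(a-2) * (t^(3:ℝ) * Real.exp (-(θ*t))) := by ring
      _ ≤ t^(a-2) * (6/θ^3) := mul_le_mul_of_nonneg_left h3 hta2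
      _ = (6/θ^3) * t^(a-2) := by ring
  have hsplit2 : 2^(-K)*θ*Jp t + 2^(-K)*θ*Real.exp (-(2*(θ*t)))*Ep t
      - 2^(-K)*θ*(Real.Gamma (a+1)/θ^(a+1))
      = 2^(-K)*θ*(Jp t - Real.Gamma (a+1)/θ^(a+1))
        + 2^(-K)*θ*(Real.exp (-(2*(θ*t)))*Ep t) := by ring
  rw [hsplit2]
  calc |2^(-K)*θ*(Jp t - Real.Gamma (a+1)/θ^(a+1)) + 2^(-K)*θ*(Real.exp (-(2*(θ*t)))*Ep t)|
      ≤ |2^(-K)*θ*(Jp t - Real.Gamma (a+1)/θ^(a+1))| + |2^(-K)*θ*(Real.exp (-(2*(θ*t)))*Ep t)| :=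
        abs_add_le _ _
    _ ≤ 2^(-K)*θ*(C₀ * Real.exp (-(θ/2*t))) + 2^(-K)*θ*(Real.exp (-(2*(θ*t)))*Ep t) := by
        rw [abs_mul, abs_of_nonneg (by positivity : (0:ℝ) ≤ 2^(-K)*θ),
          abs_mul, abs_of_nonneg (by positivity : (0:ℝ) ≤ 2^(-K)*θ),
          abs_of_nonneg (mul_nonneg (Real.exp_pos _).le hEppos)]
        have := mul_le_mul_of_nonneg_left htail (by positivity : (0:ℝ) ≤ 2^(-K)*θ)
        linarith
    _ ≤ 2^(-K)*θ*(C₀ * ((6/(θ/2)^3) * t^(a-2))) + 2^(-K)*θ*((6/θ^3) * t^(a-2)) := by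
        have h1 := mul_le_mul_of_nonneg_left hb1 hC₀.le
        have h2 := mul_le_mul_of_nonneg_left h1 (by positivity : (0:ℝ) ≤ 2^(-K)*θ)
        have h3 := mul_le_mul_of_nonneg_left hb2 (by positivity : (0:ℝ) ≤ 2^(-K)*θ)
        linarith
    _ ≤ (2^(-K)*θ*C₀*(6/(θ/2)^3) + 2^(-K)*θ*(6/θ^3) + 1) * t^(a-2) := by
        nlinarith [hta2]

set_option maxHeartbeats 2000000 in
lemma BB_int {H K a : ℝ} (hH0 : 0 < H) (hK0 : 0 < K)
    {Ω : Type*} [MeasurableSpace Ω] (μ : Measure Ω) [IsProbabilityMeasure μ]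
    (B : ℝ → Ω → ℝ) (hmeas : Measurable (Function.uncurry B))
    (ha : a = 2*H*K)
    (hRa : ∀ s : ℝ, 0 < s → ∫ ω, B s ω * B s ω ∂μ = s^a)
    {s u : ℝ} (hs : 0 < s) (hu : 0 < u) :
    Integrable (fun ω => B s ω * B u ω) μ ∧
      (∫ ω, |B s ω * B u ω| ∂μ) ≤ s^(a/2) * u^(a/2) := by
  have ha0 : 0 < a := by rw [ha]; positivity
  have hBm : ∀ r : ℝ, Measurable (B r) := fun r =>
    hmeas.comp (measurable_const.prodMk measurable_id)
  have hIsq : ∀ r : ℝ, 0 < r → Integrable (fun ω => B r ω * B r ω) μ := by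
    intro r hr
    by_contra hni
    have h0 := integral_undef hni
    rw [hRa r hr] at h0
    exact absurd h0 (Real.rpow_pos_of_pos hr a).ne'
  set c : ℝ := u^(a/2) * s^(-(a/2)) with hc
  have hcpos : 0 < c := by
    have p1 := Real.rpow_pos_of_pos hu (a/2)
    have p2 := Real.rpow_pos_of_pos hs (-(a/2))
    rw [hc]
    exact mul_pos p1 p2
  have key : ∀ x y : ℝ, |x*y| ≤ (c^2*(x*x) + y*y)/(2*c) := by
    intro x y
    rw [le_div_iff₀ (by positivity)]
    have h1 := sq_nonneg (c*|x| - |y|)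
    have h2 : |x| * |x| = x*x := by rw [← abs_mul, abs_mul_self]
    have h3 : |y| * |y| = y*y := by rw [← abs_mul, abs_mul_self]
    rw [abs_mul]
    nlinarith [abs_nonneg x, abs_nonneg y]
  have hgint : Integrable (fun ω => (c^2*(B s ω * B s ω) + B u ω * B u ω)/(2*c)) μ :=
    (((hIsq s hs).const_mul (c^2)).add (hIsq u hu)).div_const (2*c)
  have hint : Integrable (fun ω => B s ω * B u ω) μ := by
    refine Integrable.mono' hgint (((hBm s).mul (hBm u)).aestronglyMeasurable) ?_
    exact Filter.Eventually.of_forall (fun ω => by rw [Real.norm_eq_abs]; exact key _ _)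
  refine ⟨hint, ?_⟩
  have hval : (∫ ω, (c^2*(B s ω * B s ω) + B u ω * B u ω)/(2*c) ∂μ)
      = (c^2*s^a + u^a)/(2*c) := by
    rw [integral_div, integral_add ((hIsq s hs).const_mul (c^2)) (hIsq u hu),
      integral_const_mul, hRa s hs, hRa u hu]
  have hmono : (∫ ω, |B s ω * B u ω| ∂μ)
      ≤ ∫ ω, (c^2*(B s ω * B s ω) + B u ω * B u ω)/(2*c) ∂μ :=
    integral_mono hint.abs hgint (fun ω => key _ _)
  have hc2 : c^2*s^a = u^a := by
    rw [pow_two, hc]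
    have e1 : u^(a/2)*u^(a/2) = u^a := by
      rw [← Real.rpow_add hu]; congr 1; ring
    have e2 : s^(-(a/2))*s^(-(a/2))*s^a = 1 := by
      rw [← Real.rpow_add hs, ← Real.rpow_add hs]
      rw [show -(a/2) + -(a/2) + a = 0 by ring, Real.rpow_zero]
    calc u^(a/2) * s^(-(a/2)) * (u^(a/2) * s^(-(a/2))) * s^a
        = (u^(a/2)*u^(a/2)) * (s^(-(a/2))*s^(-(a/2))*s^a) := by ring
      _ = u^a := by rw [e1, e2, mul_one]
  have hfin : (c^2*s^a + u^a)/(2*c) = s^(a/2) * u^(a/2) := by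
    rw [hc2, div_eq_iff (by positivity : (2:ℝ)*c ≠ 0), hc]
    have e1 : u^(a/2)*u^(a/2) = u^a := by
      rw [← Real.rpow_add hu]; congr 1; ring
    have e2 : s^(a/2)*s^(-(a/2)) = 1 := by
      rw [← Real.rpow_add hs, show a/2 + -(a/2) = 0 by ring, Real.rpow_zero]
    calc u^a + u^a = 2*(u^(a/2)*u^(a/2)) * 1 := by rw [e1]; ring
      _ = s^(a/2)*u^(a/2)*(2*(u^(a/2)*s^(-(a/2)))) := by rw [← e2]; ring
  rw [hval, hfin] at hmono
  exact hmono

set_option maxHeartbeats 4000000 in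
lemma secondMoment {θ H K : ℝ} (hθ : 0 < θ) (hH0 : 0 < H) (hH1 : H < 1)
    (hK0 : 0 < K) (hK1 : K ≤ 1)
    {Ω : Type*} [MeasurableSpace Ω] (μ : Measure Ω) [IsProbabilityMeasure μ]
    (B : ℝ → Ω → ℝ) (hmeas : Measurable (Function.uncurry B))
    (hcov : ∀ s t : ℝ, 0 ≤ s → 0 ≤ t → ∫ ω, B s ω * B t ω ∂μ
        = 2 ^ (-K) * ((t ^ (2 * H) + s ^ (2 * H)) ^ K - |t - s| ^ (2 * H * K)))
    (X : ℝ → Ω → ℝ)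
    (hX : ∀ t ω, X t ω = B t ω - θ * Real.exp (-θ * t) *
        ∫ s in Set.Ioc (0 : ℝ) t, Real.exp (θ * s) * B s ω)
    {t : ℝ} (ht : 1 ≤ t) :
    ∫ ω, (X t ω)^2 ∂μ
      = (Pbif H K t t
          - 2*θ*Real.exp (-(θ*t)) * (∫ s in Ioc (0:ℝ) t, Real.exp (θ*s) * Pbif H K s t)
          + θ^2*Real.exp (-(2*(θ*t))) * (∫ p : ℝ×ℝ,
              Real.exp (θ*p.1)*Real.exp (θ*p.2)*Pbif H K p.1 p.2
              ∂((volume.restrict (Ioc (0:ℝ) t)).prod (volume.restrict (Ioc (0:ℝ) t)))))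
        + (2*θ*Real.exp (-(θ*t)) * (∫ s in Ioc (0:ℝ) t, Real.exp (θ*s) * Qbif H K s t)
          - θ^2*Real.exp (-(2*(θ*t))) * (∫ p : ℝ×ℝ,
              Real.exp (θ*p.1)*Real.exp (θ*p.2)*Qbif H K p.1 p.2
              ∂((volume.restrict (Ioc (0:ℝ) t)).prod (volume.restrict (Ioc (0:ℝ) t))))) := by
  have ht0 : (0:ℝ) < t := by linarith
  have ha0 : (0:ℝ) < 2*H*K := by positivity
  have hcov' : ∀ s u : ℝ, 0 ≤ s → 0 ≤ u →
      ∫ ω, B s ω * B u ω ∂μ = Pbif H K s u - Qbif H K s u := by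
    intro s u hs hu
    rw [hcov s u hs hu]
    unfold Pbif Qbif
    rw [abs_sub_comm u s, add_comm (u^(2*H)) (s^(2*H))]
    ring
  have hQdiag : ∀ r : ℝ, Qbif H K r r = 0 := by
    intro r
    unfold Qbif
    rw [sub_self, abs_zero, Real.zero_rpow ha0.ne', mul_zero]
  have hRa : ∀ s : ℝ, 0 < s → ∫ ω, B s ω * B s ω ∂μ = s^(2*H*K) := by
    intro s hs
    rw [hcov' s s hs.le hs.le, hQdiag, Pbif_diag hH0 hs.le hK0, sub_zero]
  have hCS := fun (s u : ℝ) (hs : 0 < s) (hu : 0 < u) =>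
    BB_int hH0 hK0 μ B hmeas rfl hRa hs hu
  set ν : Measure ℝ := volume.restrict (Ioc (0:ℝ) t) with hν
  -- product integrability 1
  have hprod1 : Integrable
      (Function.uncurry fun (s:ℝ) (ω:Ω) => Real.exp (θ*s) * B s ω * B t ω) (ν.prod μ) := by
    have m1 : Measurable fun q : ℝ×Ω => B q.1 q.2 := hmeas
    have m2 : Measurable fun q : ℝ×Ω => B t q.2 :=
      m1.comp (measurable_const.prodMk measurable_snd)
    have m3 : Measurable fun q : ℝ×Ω => Real.exp (θ*q.1) :=
      (measurable_fst.const_mul θ).exp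
    have hFm : AEStronglyMeasurable
        (Function.uncurry fun (s:ℝ) (ω:Ω) => Real.exp (θ*s) * B s ω * B t ω) (ν.prod μ) :=
      ((m3.mul m1).mul m2).aestronglyMeasurable
    rw [integrable_prod_iff hFm]
    constructor
    · refine (ae_restrict_mem measurableSet_Ioc).mono (fun s hs => ?_)
      simp only [Function.uncurry_apply_pair]
      have h1 := (hCS s t hs.1 ht0).1
      have h2 : (fun ω => Real.exp (θ*s) * (B s ω * B t ω))
          = fun ω => Real.exp (θ*s) * B s ω * B t ω := funext fun ω => by ring
      have := h1.const_mul (Real.exp (θ*s))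
      rwa [h2] at this
    · have hg : Integrable (fun s => Real.exp (θ*s) * (s^((2*H*K)/2) * t^((2*H*K)/2))) ν :=
        intContIoc (((continuous_const.mul continuous_id).rexp).mul
          ((contRpow (by positivity)).mul continuous_const)) t
      refine Integrable.mono' hg (hFm.norm.integral_prod_right') ?_
      refine (ae_restrict_mem measurableSet_Ioc).mono (fun s hs => ?_)
      simp only [Function.uncurry_apply_pair]
      have hb := (hCS s t hs.1 ht0).2
      have hnn : 0 ≤ ∫ ω, ‖Real.exp (θ*s) * B s ω * B t ω‖ ∂μ :=
        integral_nonneg (fun ω => norm_nonneg _)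
      rw [Real.norm_eq_abs, abs_of_nonneg hnn]
      have heq : (fun ω => ‖Real.exp (θ*s) * B s ω * B t ω‖)
          = fun ω => Real.exp (θ*s) * |B s ω * B t ω| := by
        funext ω
        rw [Real.norm_eq_abs, mul_assoc, abs_mul, Real.abs_exp]
      rw [heq, integral_const_mul]
      exact mul_le_mul_of_nonneg_left hb (Real.exp_pos _).le
  -- product integrability 2
  have hprod2 : Integrable
      (Function.uncurry fun (p:ℝ×ℝ) (ω:Ω) =>
        Real.exp (θ*p.1) * Real.exp (θ*p.2) * (B p.1 ω * B p.2 ω)) ((ν.prod ν).prod μ) := by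
    have m1 : Measurable fun q : (ℝ×ℝ)×Ω => B q.1.1 q.2 :=
      hmeas.comp ((measurable_fst.fst).prodMk measurable_snd)
    have m1b : Measurable fun q : (ℝ×ℝ)×Ω => B q.1.2 q.2 :=
      hmeas.comp ((measurable_fst.snd).prodMk measurable_snd)
    have m3 : Measurable fun q : (ℝ×ℝ)×Ω => Real.exp (θ*q.1.1) :=
      (measurable_fst.fst.const_mul θ).exp
    have m4 : Measurable fun q : (ℝ×ℝ)×Ω => Real.exp (θ*q.1.2) :=
      (measurable_fst.snd.const_mul θ).exp
    have hFm : AEStronglyMeasurable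
        (Function.uncurry fun (p:ℝ×ℝ) (ω:Ω) =>
          Real.exp (θ*p.1) * Real.exp (θ*p.2) * (B p.1 ω * B p.2 ω)) ((ν.prod ν).prod μ) :=
      ((m3.mul m4).mul (m1.mul m1b)).aestronglyMeasurable
    rw [integrable_prod_iff hFm]
    constructor
    · refine (ae_mem_prodIoc (t := t)).mono (fun p hp => ?_)
      simp only [Function.uncurry_apply_pair]
      exact ((hCS p.1 p.2 hp.1.1 hp.2.1).1).const_mul _
    · have hg : Integrable (fun p : ℝ×ℝ =>
          (Real.exp (θ*p.1) * p.1^((2*H*K)/2)) * (Real.exp (θ*p.2) * p.2^((2*H*K)/2)))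
          (ν.prod ν) :=
        Integrable.mul_prod
          (intContIoc (((continuous_const.mul continuous_id).rexp).mul
            (contRpow (by positivity))) t)
          (intContIoc (((continuous_const.mul continuous_id).rexp).mul
            (contRpow (by positivity))) t)
      refine Integrable.mono' hg (hFm.norm.integral_prod_right') ?_
      refine (ae_mem_prodIoc (t := t)).mono (fun p hp => ?_)
      simp only [Function.uncurry_apply_pair]
      have hb := (hCS p.1 p.2 hp.1.1 hp.2.1).2
      have hnn : 0 ≤ ∫ ω, ‖Real.exp (θ*p.1) * Real.exp (θ*p.2) * (B p.1 ω * B p.2 ω)‖ ∂μ :=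
        integral_nonneg (fun ω => norm_nonneg _)
      rw [Real.norm_eq_abs, abs_of_nonneg hnn]
      have heq : (fun ω => ‖Real.exp (θ*p.1) * Real.exp (θ*p.2) * (B p.1 ω * B p.2 ω)‖)
          = fun ω => (Real.exp (θ*p.1) * Real.exp (θ*p.2)) * |B p.1 ω * B p.2 ω| := by
        funext ω
        rw [Real.norm_eq_abs, abs_mul, abs_mul, Real.abs_exp, Real.abs_exp]
      rw [heq, integral_const_mul]
      have h5 := mul_le_mul_of_nonneg_left hb
        (by positivity : (0:ℝ) ≤ Real.exp (θ*p.1) * Real.exp (θ*p.2))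
      calc Real.exp (θ*p.1) * Real.exp (θ*p.2) * ∫ ω, |B p.1 ω * B p.2 ω| ∂μ
          ≤ Real.exp (θ*p.1) * Real.exp (θ*p.2) * (p.1^((2*H*K)/2) * p.2^((2*H*K)/2)) := h5
        _ = (Real.exp (θ*p.1) * p.1^((2*H*K)/2)) * (Real.exp (θ*p.2) * p.2^((2*H*K)/2)) := by
            ring
  -- cross term
  have iBtY : Integrable (fun ω => ∫ s, Real.exp (θ*s) * B s ω * B t ω ∂ν) μ :=
    hprod1.swap.integral_prod_left
  have hBtY : (fun ω => B t ω * (∫ s, Real.exp (θ*s) * B s ω ∂ν))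
      = fun ω => ∫ s, Real.exp (θ*s) * B s ω * B t ω ∂ν := by
    funext ω
    rw [integral_mul_const]
    ring
  have swap1 : ∫ ω, (∫ s, Real.exp (θ*s) * B s ω * B t ω ∂ν) ∂μ
      = ∫ s, (∫ ω, Real.exp (θ*s) * B s ω * B t ω ∂μ) ∂ν :=
    (integral_integral_swap hprod1).symm
  have eval1 : (∫ s, (∫ ω, Real.exp (θ*s) * B s ω * B t ω ∂μ) ∂ν)
      = ∫ s in Ioc (0:ℝ) t, Real.exp (θ*s) * (Pbif H K s t - Qbif H K s t) := by
    rw [hν]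
    refine setIntegral_congr_fun measurableSet_Ioc (fun s hs => ?_)
    have h2 : (fun ω => Real.exp (θ*s) * B s ω * B t ω)
        = fun ω => Real.exp (θ*s) * (B s ω * B t ω) := funext fun ω => by ring
    rw [h2, integral_const_mul, hcov' s t hs.1.le ht0.le]
  -- square term
  have iYY : Integrable (fun ω => ∫ p : ℝ×ℝ,
      Real.exp (θ*p.1) * Real.exp (θ*p.2) * (B p.1 ω * B p.2 ω) ∂(ν.prod ν)) μ :=
    hprod2.swap.integral_prod_left
  have hYY : (fun ω => (∫ s, Real.exp (θ*s) * B s ω ∂ν) * (∫ s, Real.exp (θ*s) * B s ω ∂ν))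
      = fun ω => ∫ p : ℝ×ℝ,
          Real.exp (θ*p.1) * Real.exp (θ*p.2) * (B p.1 ω * B p.2 ω) ∂(ν.prod ν) := by
    funext ω
    rw [← integral_prod_mul (μ := ν) (ν := ν)
      (fun s => Real.exp (θ*s) * B s ω) (fun u => Real.exp (θ*u) * B u ω)]
    refine integral_congr_ae (Filter.Eventually.of_forall (fun p => ?_))
    dsimp only
    ring
  have swap2 : ∫ ω, (∫ p : ℝ×ℝ,
      Real.exp (θ*p.1) * Real.exp (θ*p.2) * (B p.1 ω * B p.2 ω) ∂(ν.prod ν)) ∂μ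
      = ∫ p : ℝ×ℝ, (∫ ω, Real.exp (θ*p.1) * Real.exp (θ*p.2) * (B p.1 ω * B p.2 ω) ∂μ)
          ∂(ν.prod ν) :=
    (integral_integral_swap hprod2).symm
  have eval2 : (∫ p : ℝ×ℝ, (∫ ω, Real.exp (θ*p.1) * Real.exp (θ*p.2) * (B p.1 ω * B p.2 ω) ∂μ)
        ∂(ν.prod ν))
      = ∫ p : ℝ×ℝ, Real.exp (θ*p.1) * Real.exp (θ*p.2) * (Pbif H K p.1 p.2 - Qbif H K p.1 p.2)
          ∂(ν.prod ν) := by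
    rw [hν, Measure.prod_restrict]
    refine setIntegral_congr_fun (measurableSet_Ioc.prod measurableSet_Ioc) (fun p hp => ?_)
    rw [integral_const_mul, hcov' p.1 p.2 hp.1.1.le hp.2.1.le]
  -- expansion
  set c : ℝ := θ * Real.exp (-θ * t) with hc
  have iBB := (hCS t t ht0 ht0).1
  have iBtY' : Integrable (fun ω => B t ω * (∫ s, Real.exp (θ*s) * B s ω ∂ν)) μ := by
    rw [hBtY]; exact iBtY
  have iYY' : Integrable (fun ω =>
      (∫ s, Real.exp (θ*s) * B s ω ∂ν) * (∫ s, Real.exp (θ*s) * B s ω ∂ν)) μ := by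
    rw [hYY]; exact iYY
  have hXsq : (fun ω => (X t ω)^2)
      = fun ω => (B t ω * B t ω - 2*c*(B t ω * (∫ s, Real.exp (θ*s) * B s ω ∂ν)))
          + c^2*((∫ s, Real.exp (θ*s) * B s ω ∂ν) * (∫ s, Real.exp (θ*s) * B s ω ∂ν)) := by
    funext ω
    rw [hX t ω, hc]
    have : (∫ s in Set.Ioc (0:ℝ) t, Real.exp (θ * s) * B s ω)
        = ∫ s, Real.exp (θ*s) * B s ω ∂ν := by rw [hν]
    rw [this]
    ring
  have hsub : Integrable (fun ω =>
      B t ω * B t ω - 2*c*(B t ω * (∫ s, Real.exp (θ*s) * B s ω ∂ν))) μ :=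
    iBB.sub (iBtY'.const_mul _)
  have hexpand : ∫ ω, (X t ω)^2 ∂μ
      = (∫ ω, B t ω * B t ω ∂μ)
        - 2*c*(∫ ω, B t ω * (∫ s, Real.exp (θ*s) * B s ω ∂ν) ∂μ)
        + c^2*(∫ ω, (∫ s, Real.exp (θ*s) * B s ω ∂ν) * (∫ s, Real.exp (θ*s) * B s ω ∂ν) ∂μ) := by
    rw [hXsq, integral_add hsub (iYY'.const_mul _),
      integral_sub iBB (iBtY'.const_mul _), integral_const_mul, integral_const_mul]
  rw [hexpand]
  -- evaluate the three integrals
  have v1 : ∫ ω, B t ω * B t ω ∂μ = Pbif H K t t := by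
    rw [hcov' t t ht0.le ht0.le, hQdiag, sub_zero]
  have v2 : (∫ ω, B t ω * (∫ s, Real.exp (θ*s) * B s ω ∂ν) ∂μ)
      = (∫ s in Ioc (0:ℝ) t, Real.exp (θ*s) * Pbif H K s t)
        - (∫ s in Ioc (0:ℝ) t, Real.exp (θ*s) * Qbif H K s t) := by
    rw [hBtY, swap1, eval1]
    have hfe : (fun s => Real.exp (θ*s) * (Pbif H K s t - Qbif H K s t))
        = fun s => Real.exp (θ*s) * Pbif H K s t - Real.exp (θ*s) * Qbif H K s t :=
      funext fun s => by ring
    rw [hfe]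
    have hcfP : Continuous fun s : ℝ => Real.exp (θ*s) * Pbif H K s t :=
      ((continuous_const.mul continuous_id).rexp).mul
        ((Pbif_cont hH0 hK0).comp (Continuous.prodMk continuous_id continuous_const))
    have hcfQ : Continuous fun s : ℝ => Real.exp (θ*s) * Qbif H K s t :=
      ((continuous_const.mul continuous_id).rexp).mul
        (continuous_const.mul ((contRpow ha0).comp
          ((continuous_id.sub continuous_const).abs)))
    exact integral_sub (intContIoc hcfP t) (intContIoc hcfQ t)
  have v3 : (∫ ω, (∫ s, Real.exp (θ*s) * B s ω ∂ν) * (∫ s, Real.exp (θ*s) * B s ω ∂ν) ∂μ)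
      = (∫ p : ℝ×ℝ, Real.exp (θ*p.1)*Real.exp (θ*p.2)*Pbif H K p.1 p.2 ∂(ν.prod ν))
        - (∫ p : ℝ×ℝ, Real.exp (θ*p.1)*Real.exp (θ*p.2)*Qbif H K p.1 p.2 ∂(ν.prod ν)) := by
    rw [hYY, swap2, eval2]
    have hfe : (fun p : ℝ×ℝ =>
        Real.exp (θ*p.1)*Real.exp (θ*p.2)*(Pbif H K p.1 p.2 - Qbif H K p.1 p.2))
        = fun p : ℝ×ℝ => Real.exp (θ*p.1)*Real.exp (θ*p.2)*Pbif H K p.1 p.2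
            - Real.exp (θ*p.1)*Real.exp (θ*p.2)*Qbif H K p.1 p.2 :=
      funext fun p => by ring
    rw [hfe]
    have hcP : Continuous fun p : ℝ×ℝ =>
        Real.exp (θ*p.1)*Real.exp (θ*p.2)*Pbif H K p.1 p.2 :=
      (((continuous_const.mul continuous_fst).rexp).mul
        ((continuous_const.mul continuous_snd).rexp)).mul (Pbif_cont hH0 hK0)
    have hcQ : Continuous fun p : ℝ×ℝ =>
        Real.exp (θ*p.1)*Real.exp (θ*p.2)*Qbif H K p.1 p.2 :=
      (((continuous_const.mul continuous_fst).rexp).mul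
        ((continuous_const.mul continuous_snd).rexp)).mul
        (continuous_const.mul ((contRpow ha0).comp
          ((continuous_fst.sub continuous_snd).abs)))
    exact integral_sub (intContProd hcP t) (intContProd hcQ t)
  rw [v1, v2, v3]
  have hc1 : c = θ * Real.exp (-(θ*t)) := by rw [hc, neg_mul]
  have hc2 : c^2 = θ^2 * Real.exp (-(2*(θ*t))) := by
    have he : Real.exp (-θ*t) * Real.exp (-θ*t) = Real.exp (-(2*(θ*t))) := by
      rw [← Real.exp_add]; congr 1; ring
    rw [hc, mul_pow, pow_two (Real.exp (-θ*t)), he]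
  rw [hc2, hc1]
  ring

/-- For the bifractional Ornstein–Uhlenbeck process `X_t = e^{-θt} ∫_0^t e^{θs} dB^{H,K}_s`,
where `B^{H,K}` is bifractional Brownian motion with `H ∈ (0,1)`, `K ∈ (0,1]`, one has
`|E[X_t²] − 2^{1-K} H K Γ(2HK)/θ^{2HK}| ≤ C t^{2HK-2}` for `t ≥ 1`. -/
theorem bifOU_second_moment (θ H K : ℝ) (hθ : 0 < θ) (hH0 : 0 < H) (hH1 : H < 1)
    (hK0 : 0 < K) (hK1 : K ≤ 1)
    {Ω : Type*} [MeasurableSpace Ω] (μ : Measure Ω) [IsProbabilityMeasure μ]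
    (B : ℝ → Ω → ℝ)
    (hmeas : Measurable (Function.uncurry B))
    (hcont : ∀ ω, Continuous fun t => B t ω)
    (hcentered : ∀ t : ℝ, ∫ ω, B t ω ∂μ = 0)
    (hcov : ∀ s t : ℝ, 0 ≤ s → 0 ≤ t →
      ∫ ω, B s ω * B t ω ∂μ
        = 2 ^ (-K) * ((t ^ (2 * H) + s ^ (2 * H)) ^ K - |t - s| ^ (2 * H * K)))
    (X : ℝ → Ω → ℝ)
    (hX : ∀ t ω, X t ω
      = B t ω - θ * Real.exp (-θ * t) * ∫ s in Set.Ioc (0 : ℝ) t, Real.exp (θ * s) * B s ω) :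
    ∃ C : ℝ, 0 < C ∧ ∀ t : ℝ, 1 ≤ t →
      |(∫ ω, (X t ω) ^ 2 ∂μ) - 2 ^ (1 - K) * H * K * Real.Gamma (2 * H * K) / θ ^ (2 * H * K)|
        ≤ C * t ^ (2 * H * K - 2) := by
  obtain ⟨C1, hC1, hC1b⟩ := Ppart_bound hθ hH0 hH1 hK0 hK1
  obtain ⟨C2, hC2, hC2b⟩ := Qpart_eval hθ hH0 hH1 hK0 hK1
  refine ⟨C1 + C2, by linarith, fun t ht => ?_⟩
  rw [secondMoment hθ hH0 hH1 hK0 hK1 μ B hmeas hcov X hX ht]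
  have h1 := hC1b t ht
  have h2 := hC2b t ht
  calc |(Pbif H K t t
      - 2*θ*Real.exp (-(θ*t)) * (∫ s in Set.Ioc (0:ℝ) t, Real.exp (θ*s) * Pbif H K s t)
      + θ^2*Real.exp (-(2*(θ*t))) * (∫ p : ℝ×ℝ,
          Real.exp (θ*p.1)*Real.exp (θ*p.2)*Pbif H K p.1 p.2
          ∂((volume.restrict (Set.Ioc (0:ℝ) t)).prod (volume.restrict (Set.Ioc (0:ℝ) t)))))
      + (2*θ*Real.exp (-(θ*t)) * (∫ s in Set.Ioc (0:ℝ) t, Real.exp (θ*s) * Qbif H K s t)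
      - θ^2*Real.exp (-(2*(θ*t))) * (∫ p : ℝ×ℝ,
          Real.exp (θ*p.1)*Real.exp (θ*p.2)*Qbif H K p.1 p.2
          ∂((volume.restrict (Set.Ioc (0:ℝ) t)).prod (volume.restrict (Set.Ioc (0:ℝ) t)))))
      - 2 ^ (1 - K) * H * K * Real.Gamma (2 * H * K) / θ ^ (2 * H * K)|
      ≤ |Pbif H K t t
      - 2*θ*Real.exp (-(θ*t)) * (∫ s in Set.Ioc (0:ℝ) t, Real.exp (θ*s) * Pbif H K s t)
      + θ^2*Real.exp (-(2*(θ*t))) * (∫ p : ℝ×ℝ,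
          Real.exp (θ*p.1)*Real.exp (θ*p.2)*Pbif H K p.1 p.2
          ∂((volume.restrict (Set.Ioc (0:ℝ) t)).prod (volume.restrict (Set.Ioc (0:ℝ) t))))|
      + |(2*θ*Real.exp (-(θ*t)) * (∫ s in Set.Ioc (0:ℝ) t, Real.exp (θ*s) * Qbif H K s t)
      - θ^2*Real.exp (-(2*(θ*t))) * (∫ p : ℝ×ℝ,
          Real.exp (θ*p.1)*Real.exp (θ*p.2)*Qbif H K p.1 p.2
          ∂((volume.restrict (Set.Ioc (0:ℝ) t)).prod (volume.restrict (Set.Ioc (0:ℝ) t)))))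
      - 2 ^ (1 - K) * H * K * Real.Gamma (2 * H * K) / θ ^ (2 * H * K)| := by
        rw [show ∀ x y f' : ℝ, x + y - f' = x + (y - f') from fun x y f' => by ring]
        exact abs_add_le _ _
    _ ≤ C1 * t ^ (2*H*K-2) + C2 * t ^ (2*H*K-2) := add_le_add h1 h2
    _ = (C1 + C2) * t ^ (2 * H * K - 2) := by ring
end
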